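/- arXiv:2504.15795 — 10 statements merged into one kernel-verified Lean document; each statement's English description precedes it below -/
import Mathlib

section
/- Let d ≥ 1, let γ : [0,∞) → ℝ^d be bounded and continuous, let F : ℝ^d → ℝ be bounded and continuous, and suppose that (1/T) ∫₁^T F(γ(τ)) dτ → F̄ as T → ∞ for some real number F̄. Then ∫₁^∞ F(γ(τ·T)) τ^{−2} dτ → F̄ as T → ∞. -/
open Filter Topology MeasureTheory

lemma invsq_int {T : ℝ} (hT : 0 < T) : IntegrableOn (fun σ : ℝ => (σ^2)⁻¹) (Set.Ioi T) := by
  have hderiv : ∀ x ∈ Set.Ioi T, HasDerivAt (fun x : ℝ => -x⁻¹) ((x^2)⁻¹) x := by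
    intro x hx
    have hx0 : x ≠ 0 := (hT.trans hx).ne'
    simpa [Pi.neg_def] using (hasDerivAt_inv hx0).neg
  have htend : Tendsto (fun x : ℝ => -x⁻¹) atTop (𝓝 0) := by
    simpa using (tendsto_inv_atTop_zero (𝕜 := ℝ)).neg
  exact integrableOn_Ioi_deriv_of_nonneg
    ((continuousAt_inv₀ hT.ne').neg.continuousWithinAt) hderiv
    (fun x hx => by positivity) htend

lemma invsq_val {T : ℝ} (hT : 0 < T) : ∫ σ in Set.Ioi T, (σ^2)⁻¹ = T⁻¹ := by
  have hderiv : ∀ x ∈ Set.Ioi T, HasDerivAt (fun x : ℝ => -x⁻¹) ((x^2)⁻¹) x := by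
    intro x hx
    have hx0 : x ≠ 0 := (hT.trans hx).ne'
    simpa [Pi.neg_def] using (hasDerivAt_inv hx0).neg
  have htend : Tendsto (fun x : ℝ => -x⁻¹) atTop (𝓝 0) := by
    simpa using (tendsto_inv_atTop_zero (𝕜 := ℝ)).neg
  have := integral_Ioi_of_hasDerivAt_of_tendsto
    ((continuousAt_inv₀ hT.ne').neg.continuousWithinAt) hderiv (invsq_int hT) htend
  simpa using this

lemma int_of_bound {T C : ℝ} (hT : 0 < T) {f : ℝ → ℝ}
    (hf : AEStronglyMeasurable f (volume.restrict (Set.Ioi T)))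
    (hb : ∀ σ ∈ Set.Ioi T, |f σ| ≤ C * (σ^2)⁻¹) : IntegrableOn f (Set.Ioi T) := by
  refine Integrable.mono ((invsq_int hT).const_mul C) hf ?_
  filter_upwards [ae_restrict_mem measurableSet_Ioi] with σ hσ
  calc ‖f σ‖ = |f σ| := rfl
    _ ≤ C * (σ^2)⁻¹ := hb σ hσ
    _ ≤ ‖C * (σ^2)⁻¹‖ := le_abs_self _

lemma aux_avg (A : ℝ → ℝ) (L : ℝ)
    (hint : ∀ T, 1 ≤ T → IntegrableOn (fun σ => A σ * (σ^2)⁻¹) (Set.Ioi T))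
    (hA : Tendsto A atTop (𝓝 L)) :
    Tendsto (fun T => T * ∫ σ in Set.Ioi T, A σ * (σ^2)⁻¹) atTop (𝓝 L) := by
  rw [Metric.tendsto_atTop]
  intro ε εpos
  obtain ⟨N, hN⟩ := (Metric.tendsto_atTop.1 hA) (ε/2) (by positivity)
  refine ⟨max N 1, fun T hT => ?_⟩
  have hT1 : (1:ℝ) ≤ T := le_trans (le_max_right _ _) hT
  have hT0 : (0:ℝ) < T := lt_of_lt_of_le one_pos hT1
  have hconstint : IntegrableOn (fun σ : ℝ => L * (σ^2)⁻¹) (Set.Ioi T) :=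
    (invsq_int hT0).const_mul L
  have hsub : IntegrableOn (fun σ => (A σ - L) * (σ^2)⁻¹) (Set.Ioi T) := by
    have := (hint T hT1).sub hconstint
    refine this.congr ?_
    filter_upwards with σ
    simp [Pi.sub_apply]; ring
  have hval : ∫ σ in Set.Ioi T, L * (σ^2)⁻¹ = L * T⁻¹ := by
    rw [integral_const_mul, invsq_val hT0]
  have key : T * (∫ σ in Set.Ioi T, A σ * (σ^2)⁻¹) - L
      = T * ∫ σ in Set.Ioi T, (A σ - L) * (σ^2)⁻¹ := by
    have : ∫ σ in Set.Ioi T, (A σ - L) * (σ^2)⁻¹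
        = (∫ σ in Set.Ioi T, A σ * (σ^2)⁻¹) - ∫ σ in Set.Ioi T, L * (σ^2)⁻¹ := by
      rw [← MeasureTheory.integral_sub (hint T hT1) hconstint]
      congr 1; ext σ; ring
    rw [this, hval, mul_sub]
    field_simp
  have hbound : |∫ σ in Set.Ioi T, (A σ - L) * (σ^2)⁻¹| ≤ (ε/2) * T⁻¹ := by
    have h1 : ‖∫ σ in Set.Ioi T, (A σ - L) * (σ^2)⁻¹‖
        ≤ ∫ σ in Set.Ioi T, (ε/2) * (σ^2)⁻¹ := by
      refine MeasureTheory.norm_integral_le_of_norm_le ((invsq_int hT0).const_mul (ε/2)) ?_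
      filter_upwards [ae_restrict_mem measurableSet_Ioi] with σ hσ
      have hσN : N ≤ σ := le_trans (le_trans (le_max_left N 1) hT) (le_of_lt hσ)
      have h2 : |A σ - L| ≤ ε/2 := le_of_lt (by simpa [Real.dist_eq] using hN σ hσN)
      calc ‖(A σ - L) * (σ^2)⁻¹‖ = |A σ - L| * |(σ^2)⁻¹| := abs_mul _ _
        _ ≤ (ε/2) * (σ^2)⁻¹ := by
            apply mul_le_mul h2 (le_of_eq (abs_of_nonneg (by positivity))) (abs_nonneg _)
            positivity
    rw [integral_const_mul, invsq_val hT0] at h1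
    exact h1
  rw [Real.dist_eq, key, abs_mul, abs_of_pos hT0]
  calc T * |∫ σ in Set.Ioi T, (A σ - L) * (σ^2)⁻¹| ≤ T * ((ε/2) * T⁻¹) := by
        exact mul_le_mul_of_nonneg_left hbound (le_of_lt hT0)
    _ = ε/2 := by field_simp
    _ < ε := by linarith

/-- If `γ : [0,∞) → ℝ^d` is bounded and continuous, `F : ℝ^d → ℝ` is bounded and
continuous, and the Cesàro averages `(1/T) ∫₁^T F(γ(τ))dτ` converge to `F̄` as
`T → ∞`, then `∫₁^∞ F(γ(τ·T)) τ⁻² dτ → F̄` as `T → ∞`. -/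
theorem stmt_0 (d : ℕ) (hd : 1 ≤ d) (γ : ℝ → EuclideanSpace ℝ (Fin d))
    (hγc : ContinuousOn γ (Set.Ici 0))
    (hγb : ∃ C, ∀ s ∈ Set.Ici (0 : ℝ), ‖γ s‖ ≤ C)
    (F : EuclideanSpace ℝ (Fin d) → ℝ) (hFc : Continuous F)
    (hFb : ∃ C, ∀ x, |F x| ≤ C) (Fbar : ℝ)
    (hCesaro : Tendsto (fun T : ℝ => (1 / T) * ∫ τ in (1:ℝ)..T, F (γ τ)) atTop (𝓝 Fbar)) :
    Tendsto (fun T : ℝ => ∫ τ in Set.Ici (1 : ℝ), F (γ (τ * T)) / τ ^ 2) atTop (𝓝 Fbar) := by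
  classical
  obtain ⟨C, hC⟩ := hFb
  have hC0 : (0:ℝ) ≤ C := le_trans (abs_nonneg _) (hC (γ 0))
  -- globally continuous bounded replacement for F ∘ γ
  set g : ℝ → ℝ := fun s => F (γ (max s 0)) with hg_def
  have hmaxc : Continuous (fun s : ℝ => γ (max s 0)) :=
    hγc.comp_continuous (continuous_id.max continuous_const) (fun x => Set.mem_Ici.mpr (le_max_right _ _))
  have hgc : Continuous g := hFc.comp hmaxc
  have hgb : ∀ s, |g s| ≤ C := fun s => hC _
  -- antiderivative
  set G : ℝ → ℝ := fun s => ∫ τ in (1:ℝ)..s, g τ with hG_def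
  have hGderiv : ∀ x, HasDerivAt G (g x) x := by
    intro x
    exact intervalIntegral.integral_hasDerivAt_right (hgc.intervalIntegrable _ _)
      hgc.stronglyMeasurable.stronglyMeasurableAtFilter hgc.continuousAt
  have hGcont : Continuous G := by
    rw [continuous_iff_continuousAt]; exact fun x => (hGderiv x).continuousAt
  have hGbound : ∀ s, 1 ≤ s → |G s| ≤ C * s := by
    intro s hs
    have h1 : ‖∫ τ in (1:ℝ)..s, g τ‖ ≤ C * |s - 1| :=
      intervalIntegral.norm_integral_le_of_norm_le_const (fun x _ => hgb x)
    calc |G s| ≤ C * |s - 1| := h1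
      _ = C * (s - 1) := by rw [abs_of_nonneg (by linarith)]
      _ ≤ C * s := by nlinarith
  -- Cesàro averages of g
  have hA : Tendsto (fun s : ℝ => G s / s) atTop (𝓝 Fbar) := by
    refine hCesaro.congr' ?_
    filter_upwards [eventually_ge_atTop (1:ℝ)] with s hs
    have heq : ∫ τ in (1:ℝ)..s, F (γ τ) = G s := by
      refine intervalIntegral.integral_congr (fun τ hτ => ?_)
      rw [Set.uIcc_of_le hs] at hτ
      have : max τ 0 = τ := max_eq_left (le_trans zero_le_one hτ.1)
      simp only [hg_def, this]
    rw [heq, one_div, inv_mul_eq_div]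
  -- integrability of the two integrands
  have int1 : ∀ T, 1 ≤ T → IntegrableOn (fun σ => g σ * (σ^2)⁻¹) (Set.Ioi T) := by
    intro T hT1
    have hT0 : (0:ℝ) < T := lt_of_lt_of_le one_pos hT1
    refine int_of_bound (C := C) hT0 ?_ ?_
    · exact ((hgc.continuousOn.mul ((continuousOn_pow 2).inv₀
        (fun σ hσ => pow_ne_zero 2 (ne_of_gt (lt_trans hT0 hσ))))).aestronglyMeasurable
        measurableSet_Ioi)
    · intro σ hσ
      have hσ0 : (0:ℝ) < σ := lt_trans hT0 hσ
      calc |g σ * (σ^2)⁻¹| = |g σ| * |(σ^2)⁻¹| := abs_mul _ _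
        _ = |g σ| * (σ^2)⁻¹ := by
            rw [abs_of_nonneg (le_of_lt (by positivity : (0:ℝ) < (σ^2)⁻¹))]
        _ ≤ C * (σ^2)⁻¹ := mul_le_mul_of_nonneg_right (hgb σ) (by positivity)
  have int2 : ∀ T, 1 ≤ T → IntegrableOn (fun σ => (G σ / σ) * (σ^2)⁻¹) (Set.Ioi T) := by
    intro T hT1
    have hT0 : (0:ℝ) < T := lt_of_lt_of_le one_pos hT1
    refine int_of_bound (C := C) hT0 ?_ ?_
    · refine (((hGcont.continuousOn.div continuousOn_id
        (fun σ hσ => (lt_trans hT0 hσ).ne')).mul ((continuousOn_pow 2).inv₀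
        (fun σ hσ => pow_ne_zero 2 (ne_of_gt (lt_trans hT0 hσ))))).aestronglyMeasurable measurableSet_Ioi)
    · intro σ hσ
      have hσ1 : (1:ℝ) ≤ σ := le_trans hT1 (le_of_lt hσ)
      have hσ0 : (0:ℝ) < σ := lt_of_lt_of_le one_pos hσ1
      have hq : |G σ / σ| ≤ C := by
        rw [abs_div, abs_of_pos hσ0, div_le_iff₀ hσ0]
        exact hGbound σ hσ1
      calc |G σ / σ * (σ^2)⁻¹| = |G σ / σ| * |(σ^2)⁻¹| := abs_mul _ _
        _ = |G σ / σ| * (σ^2)⁻¹ := by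
            rw [abs_of_nonneg (le_of_lt (by positivity : (0:ℝ) < (σ^2)⁻¹))]
        _ ≤ C * (σ^2)⁻¹ := mul_le_mul_of_nonneg_right hq (by positivity)
  have int2' : ∀ T, 1 ≤ T → IntegrableOn (fun σ => G σ * (σ^3)⁻¹) (Set.Ioi T) := by
    intro T hT1
    refine (int2 T hT1).congr_fun (fun σ hσ => ?_) measurableSet_Ioi
    have hσ0 : (0:ℝ) < σ := lt_of_le_of_lt (le_trans zero_le_one hT1) hσ
    field_simp
  -- integration by parts identity
  have hIBP : ∀ T, 1 ≤ T → ∫ σ in Set.Ioi T, g σ * (σ^2)⁻¹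
      = 2 * (∫ σ in Set.Ioi T, G σ * (σ^3)⁻¹) - G T * (T^2)⁻¹ := by
    intro T hT1
    have hT0 : (0:ℝ) < T := lt_of_lt_of_le one_pos hT1
    set u : ℝ → ℝ := fun σ => G σ * (σ^2)⁻¹ with hu_def
    have hderiv : ∀ σ ∈ Set.Ioi T, HasDerivAt u
        (g σ * (σ^2)⁻¹ - 2 * (G σ * (σ^3)⁻¹)) σ := by
      intro σ hσ
      have hσ0 : (0:ℝ) < σ := lt_trans hT0 hσ
      have h1 := (hGderiv σ).mul (((hasDerivAt_pow 2 σ)).inv (by positivity))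
      convert h1 using 1
      · rfl
      · rfl
      · rfl
      simp only [Pi.inv_apply]
      field_simp
      ring
    have hcont : ContinuousWithinAt u (Set.Ici T) T := by
      refine ((hGcont.continuousAt).mul ?_).continuousWithinAt
      exact ((continuousAt_pow T 2).inv₀ (by positivity))
    have hintdiff : IntegrableOn (fun σ => g σ * (σ^2)⁻¹ - 2 * (G σ * (σ^3)⁻¹)) (Set.Ioi T) :=
      (int1 T hT1).sub ((int2' T hT1).const_mul 2)
    have htend : Tendsto u atTop (𝓝 0) := by
      have hCi : Tendsto (fun σ : ℝ => C * σ⁻¹) atTop (𝓝 0) := by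
        simpa using (tendsto_inv_atTop_zero (𝕜 := ℝ)).const_mul C
      refine squeeze_zero_norm' ?_ hCi
      · filter_upwards [eventually_ge_atTop (1:ℝ)] with σ hσ1
        have hσ0 : (0:ℝ) < σ := lt_of_lt_of_le one_pos hσ1
        calc ‖u σ‖ = |G σ| * |(σ^2)⁻¹| := abs_mul _ _
          _ ≤ (C * σ) * (σ^2)⁻¹ := by
              rw [abs_of_nonneg (le_of_lt (by positivity : (0:ℝ) < (σ^2)⁻¹))]
              exact mul_le_mul_of_nonneg_right (hGbound σ hσ1) (by positivity)
          _ = C * σ⁻¹ := by field_simp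
    have hval := integral_Ioi_of_hasDerivAt_of_tendsto hcont hderiv hintdiff htend
    have hsplit : ∫ σ in Set.Ioi T, (g σ * (σ^2)⁻¹ - 2 * (G σ * (σ^3)⁻¹))
        = (∫ σ in Set.Ioi T, g σ * (σ^2)⁻¹) - 2 * ∫ σ in Set.Ioi T, G σ * (σ^3)⁻¹ := by
      rw [MeasureTheory.integral_sub (int1 T hT1) ((int2' T hT1).const_mul 2),
        integral_const_mul]
    rw [hsplit] at hval
    simp only [hu_def, zero_sub] at hval
    linarith
  -- main convergence
  have hBtend : Tendsto (fun T => T * ∫ σ in Set.Ioi T, (G σ / σ) * (σ^2)⁻¹) atTop (𝓝 Fbar) :=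
    aux_avg _ Fbar int2 hA
  have hmain : Tendsto (fun T => 2 * (T * ∫ σ in Set.Ioi T, (G σ / σ) * (σ^2)⁻¹) - G T / T)
      atTop (𝓝 Fbar) := by
    have := (hBtend.const_mul 2).sub hA
    have heq : 2 * Fbar - Fbar = Fbar := by ring
    rwa [heq] at this
  refine hmain.congr' ?_
  filter_upwards [eventually_ge_atTop (1:ℝ)] with T hT1
  have hT0 : (0:ℝ) < T := lt_of_lt_of_le one_pos hT1
  -- change of variables
  have hsubst : ∫ τ in Set.Ici (1:ℝ), F (γ (τ * T)) / τ ^ 2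
      = T * ∫ σ in Set.Ioi T, g σ * (σ^2)⁻¹ := by
    rw [MeasureTheory.integral_Ici_eq_integral_Ioi]
    have hcongr : ∫ τ in Set.Ioi (1:ℝ), F (γ (τ * T)) / τ ^ 2
        = ∫ τ in Set.Ioi (1:ℝ), (fun σ => g σ * (T^2 * (σ^2)⁻¹)) (τ * T) := by
      refine setIntegral_congr_fun measurableSet_Ioi (fun τ hτ => ?_)
      have hτ0 : (0:ℝ) < τ := lt_trans one_pos hτ
      have hτT : (0:ℝ) ≤ τ * T := le_of_lt (by positivity)
      simp only [hg_def, max_eq_left hτT]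
      field_simp
    have hcv := MeasureTheory.integral_comp_mul_right_Ioi
      (fun σ => g σ * (T^2 * (σ^2)⁻¹)) 1 hT0
    rw [hcongr, hcv]
    have hpull : ∫ σ in Set.Ioi ((1:ℝ) * T), g σ * (T^2 * (σ^2)⁻¹)
        = T^2 * ∫ σ in Set.Ioi T, g σ * (σ^2)⁻¹ := by
      rw [one_mul, ← integral_const_mul]
      congr 1; ext σ; ring
    rw [hpull, smul_eq_mul]
    field_simp
  rw [hsubst, hIBP T hT1]
  have hcongr2 : ∫ σ in Set.Ioi T, G σ * (σ^3)⁻¹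
      = ∫ σ in Set.Ioi T, (G σ / σ) * (σ^2)⁻¹ := by
    refine setIntegral_congr_fun measurableSet_Ioi (fun σ hσ => ?_)
    have hσ0 : (0:ℝ) < σ := lt_trans hT0 hσ
    field_simp
  rw [hcongr2]
  field_simp
end

section
/- Let α > 0 and let F : ℂ → ℝ be continuous. Then lim_{κ→0⁺} (1/κ) ∫₀^κ F(exp(i·x^{−α})) dx = (1/(2π)) ∫₀^{2π} F(e^{iθ}) dθ. In other words, the pushforward under x ↦ exp(i x^{−α}) of the normalized Lebesgue measure on [0,κ] converges weakly, as κ → 0⁺, to the uniform (Haar) probability measure on the unit circle, independently of α. -/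
open Filter Topology MeasureTheory

/-- For `α > 0` and continuous `F : ℂ → ℝ`,
`(1/κ) ∫₀^κ F(exp(i x^{-α})) dx → (1/(2π)) ∫₀^{2π} F(e^{iθ}) dθ` as `κ → 0⁺`:
the pushforward of the normalized Lebesgue measure on `[0,κ]` under
`x ↦ exp(i x^{-α})` converges weakly to the Haar measure on the circle. -/
theorem stmt_1 (α : ℝ) (hα : 0 < α) (F : ℂ → ℝ) (hF : Continuous F) :
    Tendsto
      (fun κ : ℝ => (1 / κ) * ∫ x in (0:ℝ)..κ,
        F (Complex.exp (Complex.I * ((x ^ (-α) : ℝ) : ℂ))))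
      (𝓝[>] 0)
      (𝓝 ((1 / (2 * Real.pi)) * ∫ θ in (0:ℝ)..(2 * Real.pi),
        F (Complex.exp (Complex.I * (θ : ℂ))))) := by
  have hπ : (0:ℝ) < 2 * Real.pi := by positivity
  set g : ℝ → ℝ := fun t => F (Complex.exp (Complex.I * (t : ℂ))) with hg_def
  have hg : Continuous g :=
    hF.comp (Complex.continuous_exp.comp (continuous_const.mul Complex.continuous_ofReal))
  have hper : Function.Periodic g (2 * Real.pi) := by
    intro t
    have h1 : Complex.I * ((t + 2 * Real.pi : ℝ) : ℂ)
        = Complex.I * (t : ℂ) + 2 * Real.pi * Complex.I := by push_cast; ring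
    simp only [g, h1, Complex.exp_add, Complex.exp_two_pi_mul_I, mul_one]
  set m : ℝ := (1 / (2 * Real.pi)) * ∫ θ in (0:ℝ)..(2 * Real.pi), g θ with hm_def
  set G : ℝ → ℝ := fun t => ∫ s in (0:ℝ)..t, g s with hG_def
  have hG : ∀ t, HasDerivAt G (g t) t := fun t =>
    intervalIntegral.integral_hasDerivAt_right (hg.intervalIntegrable 0 t)
      hg.aestronglyMeasurable.stronglyMeasurableAtFilter hg.continuousAt
  set B : ℝ → ℝ := fun t => G t - m * t with hB_def
  have hB' : ∀ t, HasDerivAt B (g t - m) t := by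
    intro t
    have := (hG t).sub ((hasDerivAt_id t).const_mul m)
    rw [mul_one] at this; exact this
  have hBper : Function.Periodic B (2 * Real.pi) := by
    intro t
    have hsplit : ∫ s in (0:ℝ)..(t + 2 * Real.pi), g s
        = (∫ s in (0:ℝ)..t, g s) + ∫ s in t..(t + 2 * Real.pi), g s :=
      (intervalIntegral.integral_add_adjacent_intervals (hg.intervalIntegrable 0 t)
        (hg.intervalIntegrable t (t + 2 * Real.pi))).symm
    have hpershift : ∫ s in t..(t + 2 * Real.pi), g s
        = ∫ s in (0:ℝ)..(0 + 2 * Real.pi), g s := hper.intervalIntegral_add_eq t 0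
    have h2πm : (∫ s in (0:ℝ)..(2 * Real.pi), g s) = m * (2 * Real.pi) := by
      rw [hm_def]; field_simp
    simp only [B, G, hsplit, hpershift, zero_add, h2πm]
    ring
  have hBcont : Continuous B :=
    continuous_iff_continuousAt.2 fun t => ((hB' t).continuousAt)
  obtain ⟨M, hM⟩ : ∃ M, ∀ t, |B t| ≤ M := by
    have hb := (hBper.isBounded_of_continuous hπ.ne' hBcont)
    rw [isBounded_iff_forall_norm_le] at hb
    obtain ⟨C, hC⟩ := hb
    exact ⟨C, fun t => by simpa [Real.norm_eq_abs] using hC (B t) (Set.mem_range_self t)⟩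
  have hM0 : 0 ≤ M := le_trans (abs_nonneg _) (hM 0)
  obtain ⟨Mg, hMg⟩ : ∃ Mg, ∀ t, |g t| ≤ Mg := by
    have hb := (hper.isBounded_of_continuous hπ.ne' hg)
    rw [isBounded_iff_forall_norm_le] at hb
    obtain ⟨C, hC⟩ := hb
    exact ⟨C, fun t => by simpa [Real.norm_eq_abs] using hC (g t) (Set.mem_range_self t)⟩
  have hMg0 : 0 ≤ Mg := le_trans (abs_nonneg _) (hMg 0)
  -- the key antiderivative
  set c : ℝ := (α + 1) / α with hc_def
  set ψ : ℝ → ℝ := fun x => m * x - (1 / α) * (B (x ^ (-α)) * x ^ (α + 1)) with hψ_def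
  have hψ' : ∀ x : ℝ, 0 < x →
      HasDerivAt ψ (g (x ^ (-α)) - c * (B (x ^ (-α)) * x ^ α)) x := by
    intro x hx
    have h1 : HasDerivAt (fun x : ℝ => x ^ (-α)) (-α * x ^ (-α - 1)) x :=
      Real.hasDerivAt_rpow_const (Or.inl hx.ne')
    have h2 : HasDerivAt (fun x : ℝ => B (x ^ (-α)))
        ((g (x ^ (-α)) - m) * (-α * x ^ (-α - 1))) x := by
      have := (hB' (x ^ (-α))).comp x h1
      exact this
    have h3 : HasDerivAt (fun x : ℝ => x ^ (α + 1)) ((α + 1) * x ^ (α + 1 - 1)) x :=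
      Real.hasDerivAt_rpow_const (Or.inl hx.ne')
    have h4 := h2.mul h3
    have h5 := ((hasDerivAt_id x).const_mul m).sub (h4.const_mul (1 / α))
    have hxpow : x ^ (-α - 1) * x ^ (α + 1) = 1 := by
      rw [← Real.rpow_add hx]
      norm_num
    have hsimp : m * 1 - 1 / α * ((g (x ^ (-α)) - m) * (-α * x ^ (-α - 1)) * x ^ (α + 1)
          + B (x ^ (-α)) * ((α + 1) * x ^ (α + 1 - 1)))
        = g (x ^ (-α)) - c * (B (x ^ (-α)) * x ^ α) := by
      have he : α + 1 - 1 = α := by ring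
      have h6 : (g (x ^ (-α)) - m) * (-α * x ^ (-α - 1)) * x ^ (α + 1)
          = -α * (g (x ^ (-α)) - m) := by
        calc (g (x ^ (-α)) - m) * (-α * x ^ (-α - 1)) * x ^ (α + 1)
            = (g (x ^ (-α)) - m) * (-α) * (x ^ (-α - 1) * x ^ (α + 1)) := by ring
          _ = -α * (g (x ^ (-α)) - m) := by rw [hxpow]; ring
      rw [he, h6, hc_def]
      field_simp
      ring
    rw [hsimp] at h5
    exact h5
  -- main estimate for fixed κ
  have key : ∀ κ : ℝ, 0 < κ →
      |(∫ x in (0:ℝ)..κ, g (x ^ (-α))) - m * κ|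
        ≤ (2 * M / α + c * M) * (κ ^ α * κ) := by
    intro κ hκ
    -- suffices to prove with an extra ε-term
    have main : ∀ ε : ℝ, 0 < ε → ε ≤ κ →
        |(∫ x in (0:ℝ)..κ, g (x ^ (-α))) - m * κ|
          ≤ (2 * M / α + c * M) * (κ ^ α * κ) + (Mg + |m|) * ε := by
      intro ε hε hεκ
      have hIoi : Set.uIcc ε κ ⊆ Set.Ioi 0 := by
        rw [Set.uIcc_of_le hεκ]
        intro x hx
        exact lt_of_lt_of_le hε hx.1
      have hrpow_cont : ContinuousOn (fun x : ℝ => x ^ (-α)) (Set.uIcc ε κ) := by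
        apply ContinuousOn.rpow_const continuousOn_id
        intro x hx
        exact Or.inl (ne_of_gt (hIoi hx))
      have hcont1 : ContinuousOn (fun x : ℝ => g (x ^ (-α))) (Set.uIcc ε κ) :=
        hg.comp_continuousOn hrpow_cont
      have hcont2 : ContinuousOn (fun x : ℝ => B (x ^ (-α)) * x ^ α) (Set.uIcc ε κ) := by
        apply ContinuousOn.mul (hBcont.comp_continuousOn hrpow_cont)
        apply ContinuousOn.rpow_const continuousOn_id
        intro x hx
        exact Or.inl (ne_of_gt (hIoi hx))
      have i1 : IntervalIntegrable (fun x : ℝ => g (x ^ (-α))) volume ε κ :=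
        hcont1.intervalIntegrable
      have i2 : IntervalIntegrable (fun x : ℝ => B (x ^ (-α)) * x ^ α) volume ε κ :=
        hcont2.intervalIntegrable
      have ftc : ∫ x in ε..κ, (g (x ^ (-α)) - c * (B (x ^ (-α)) * x ^ α))
          = ψ κ - ψ ε := by
        apply intervalIntegral.integral_eq_sub_of_hasDerivAt
        · intro x hx
          exact hψ' x (hIoi hx)
        · exact i1.sub (i2.const_mul c)
      have hsplit2 : ∫ x in ε..κ, (g (x ^ (-α)) - c * (B (x ^ (-α)) * x ^ α))
          = (∫ x in ε..κ, g (x ^ (-α))) - c * ∫ x in ε..κ, B (x ^ (-α)) * x ^ α := by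
        rw [intervalIntegral.integral_sub i1 (i2.const_mul c),
          intervalIntegral.integral_const_mul]
      have heq : (∫ x in ε..κ, g (x ^ (-α)))
          = ψ κ - ψ ε + c * ∫ x in ε..κ, B (x ^ (-α)) * x ^ α := by
        rw [← ftc, hsplit2]; ring
      -- bound the pieces
      have hκpow_pos : (0:ℝ) ≤ κ ^ α := Real.rpow_nonneg hκ.le α
      have hbound2 : |∫ x in ε..κ, B (x ^ (-α)) * x ^ α| ≤ M * κ ^ α * |κ - ε| := by
        have := intervalIntegral.norm_integral_le_of_norm_le_const
          (C := M * κ ^ α) (f := fun x : ℝ => B (x ^ (-α)) * x ^ α) (a := ε) (b := κ) ?_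
        · simpa [Real.norm_eq_abs] using this
        · intro x hx
          rw [Set.uIoc_of_le hεκ] at hx
          have hx0 : 0 < x := lt_of_lt_of_le hε hx.1.le
          have hxκ : x ^ α ≤ κ ^ α := Real.rpow_le_rpow hx0.le hx.2 hα.le
          have hxpos : (0:ℝ) ≤ x ^ α := Real.rpow_nonneg hx0.le α
          calc ‖B (x ^ (-α)) * x ^ α‖ = |B (x ^ (-α))| * |x ^ α| := abs_mul _ _
            _ ≤ M * κ ^ α := by
                apply mul_le_mul (hM _) _ (abs_nonneg _) hM0
                rw [abs_of_nonneg hxpos]; exact hxκ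
      have hεκpow : ε ^ (α + 1) ≤ κ ^ (α + 1) :=
        Real.rpow_le_rpow hε.le hεκ (by linarith)
      have hκpow1 : κ ^ (α + 1) = κ ^ α * κ := by
        rw [Real.rpow_add hκ, Real.rpow_one]
      have hbound1 : |ψ κ - ψ ε - m * (κ - ε)| ≤ 2 * M / α * (κ ^ α * κ) := by
        have h1 : ψ κ - ψ ε - m * (κ - ε)
            = (1 / α) * (B (ε ^ (-α)) * ε ^ (α + 1)) - (1 / α) * (B (κ ^ (-α)) * κ ^ (α + 1)) := by
          simp only [ψ]; ring
        rw [h1]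
        have hterm : ∀ y : ℝ, 0 < y → y ≤ κ →
            |(1 / α) * (B (y ^ (-α)) * y ^ (α + 1))| ≤ M / α * (κ ^ α * κ) := by
          intro y hy hyκ
          have hy1 : y ^ (α + 1) ≤ κ ^ (α + 1) := Real.rpow_le_rpow hy.le hyκ (by linarith)
          have hy0 : (0:ℝ) ≤ y ^ (α + 1) := Real.rpow_nonneg hy.le _
          rw [abs_mul, abs_mul, abs_of_nonneg hy0,
            abs_of_nonneg (by positivity : (0:ℝ) ≤ 1 / α), ← hκpow1]
          calc 1 / α * (|B (y ^ (-α))| * y ^ (α + 1))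
              ≤ 1 / α * (M * κ ^ (α + 1)) := by
                apply mul_le_mul_of_nonneg_left _ (by positivity)
                exact mul_le_mul (hM _) hy1 hy0 hM0
            _ = M / α * κ ^ (α + 1) := by ring
        calc |(1 / α) * (B (ε ^ (-α)) * ε ^ (α + 1))
              - (1 / α) * (B (κ ^ (-α)) * κ ^ (α + 1))|
            ≤ |(1 / α) * (B (ε ^ (-α)) * ε ^ (α + 1))|
              + |(1 / α) * (B (κ ^ (-α)) * κ ^ (α + 1))| := abs_sub _ _
          _ ≤ M / α * (κ ^ α * κ) + M / α * (κ ^ α * κ) :=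
              add_le_add (hterm ε hε hεκ) (hterm κ hκ le_rfl)
          _ = 2 * M / α * (κ ^ α * κ) := by ring
      -- the small piece near 0
      have i0 : IntervalIntegrable (fun x : ℝ => g (x ^ (-α))) volume 0 ε := by
        rw [intervalIntegrable_iff_integrableOn_Ioc_of_le hε.le]
        apply MeasureTheory.Integrable.mono'
          (integrableOn_const measure_Ioc_lt_top.ne : IntegrableOn (fun _ : ℝ => Mg) _ _)
        · apply ContinuousOn.aestronglyMeasurable _ measurableSet_Ioc
          apply hg.comp_continuousOn
          apply ContinuousOn.rpow_const continuousOn_id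
          intro x hx
          exact Or.inl (ne_of_gt hx.1)
        · exact Filter.Eventually.of_forall fun x => by
            simpa [Real.norm_eq_abs] using hMg (x ^ (-α))
      have hbound0 : |∫ x in (0:ℝ)..ε, g (x ^ (-α))| ≤ Mg * ε := by
        have := intervalIntegral.norm_integral_le_of_norm_le_const
          (C := Mg) (f := fun x : ℝ => g (x ^ (-α))) (a := (0:ℝ)) (b := ε)
          (fun x _ => by simpa [Real.norm_eq_abs] using hMg (x ^ (-α)))
        rw [Real.norm_eq_abs] at this
        calc |∫ x in (0:ℝ)..ε, g (x ^ (-α))| ≤ Mg * |ε - 0| := this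
          _ = Mg * ε := by rw [sub_zero, abs_of_pos hε]
      have hadd : (∫ x in (0:ℝ)..κ, g (x ^ (-α)))
          = (∫ x in (0:ℝ)..ε, g (x ^ (-α))) + ∫ x in ε..κ, g (x ^ (-α)) :=
        (intervalIntegral.integral_add_adjacent_intervals i0 i1).symm
      -- combine
      have hdecomp : (∫ x in (0:ℝ)..κ, g (x ^ (-α))) - m * κ
          = (∫ x in (0:ℝ)..ε, g (x ^ (-α)))
            + (ψ κ - ψ ε - m * (κ - ε))
            + c * (∫ x in ε..κ, B (x ^ (-α)) * x ^ α)
            - m * ε := by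
        rw [hadd, heq]; ring
      have hcpos : 0 ≤ c := by positivity
      have habs : |κ - ε| ≤ κ := by
        rw [abs_of_nonneg (by linarith)]; linarith
      calc |(∫ x in (0:ℝ)..κ, g (x ^ (-α))) - m * κ|
          ≤ |∫ x in (0:ℝ)..ε, g (x ^ (-α))| + |ψ κ - ψ ε - m * (κ - ε)|
            + |c * (∫ x in ε..κ, B (x ^ (-α)) * x ^ α)| + |m * ε| := by
            rw [hdecomp]
            exact (abs_sub _ _).trans (add_le_add_left
              ((abs_add_le _ _).trans (add_le_add_left (abs_add_le _ _) _)) _)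
        _ ≤ Mg * ε + 2 * M / α * (κ ^ α * κ) + c * (M * κ ^ α * κ) + |m| * ε := by
            apply add_le_add (add_le_add (add_le_add hbound0 hbound1) _)
            · rw [abs_mul]; exact le_of_eq (by rw [abs_of_pos hε])
            · rw [abs_mul, abs_of_nonneg hcpos]
              apply mul_le_mul_of_nonneg_left _ hcpos
              exact hbound2.trans (by
                apply mul_le_mul_of_nonneg_left habs (by positivity))
        _ = (2 * M / α + c * M) * (κ ^ α * κ) + (Mg + |m|) * ε := by ring
    -- let ε → 0
    apply le_of_forall_pos_le_add
    intro δ hδ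
    have hden : (0:ℝ) < Mg + |m| + 1 := by positivity
    set ε : ℝ := min (δ / (Mg + |m| + 1)) κ with hε_def
    have hε : 0 < ε := lt_min (by positivity) hκ
    have hεκ : ε ≤ κ := min_le_right _ _
    have h := main ε hε hεκ
    apply h.trans
    apply add_le_add_right
    calc (Mg + |m|) * ε ≤ (Mg + |m|) * (δ / (Mg + |m| + 1)) := by
          apply mul_le_mul_of_nonneg_left (min_le_left _ _) (by positivity)
      _ ≤ (Mg + |m| + 1) * (δ / (Mg + |m| + 1)) := by
          apply mul_le_mul_of_nonneg_right (by linarith) (by positivity)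
      _ = δ := by field_simp
  -- conclude via squeeze
  set C : ℝ := 2 * M / α + c * M with hC_def
  have hC0 : 0 ≤ C := by positivity
  rw [tendsto_iff_norm_sub_tendsto_zero]
  apply squeeze_zero' (Filter.Eventually.of_forall fun κ => norm_nonneg _)
  · show ∀ᶠ κ in 𝓝[>] (0:ℝ), ‖(1 / κ) * (∫ x in (0:ℝ)..κ, g (x ^ (-α))) - m‖ ≤ C * κ ^ α
    filter_upwards [self_mem_nhdsWithin] with κ (hκ : 0 < κ)
    have hkey := key κ hκ
    have h1 : (1 / κ) * (∫ x in (0:ℝ)..κ, g (x ^ (-α))) - m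
        = (1 / κ) * ((∫ x in (0:ℝ)..κ, g (x ^ (-α))) - m * κ) := by
      field_simp
    rw [Real.norm_eq_abs, h1, abs_mul, abs_of_pos (by positivity : (0:ℝ) < 1 / κ)]
    calc (1 / κ) * |(∫ x in (0:ℝ)..κ, g (x ^ (-α))) - m * κ|
        ≤ (1 / κ) * (C * (κ ^ α * κ)) := by
          apply mul_le_mul_of_nonneg_left hkey (by positivity)
      _ = C * κ ^ α := by field_simp
  · have h0 : Tendsto (fun κ : ℝ => κ ^ α) (𝓝[>] (0:ℝ)) (𝓝 0) := by
      have := (Real.continuousAt_rpow_const 0 α (Or.inr hα.le)).tendsto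
      rw [Real.zero_rpow hα.ne'] at this
      exact this.mono_left nhdsWithin_le_nhds
    have := h0.const_mul C
    simpa using this
end

section
/- For every bounded continuous F : ℂ → ℝ and every T > 0, one has the exact identity (1/T) ∫₀^T F(exp(i·log s)) ds = ∫₀^1 F(exp(i·log T)·exp(i·log u)) du. Consequently, for every a ∈ [0,2π] and every n ∈ ℕ, taking T_n = exp(2πn + a) gives (1/T_n) ∫₀^{T_n} F(exp(i·log s)) ds = ∫₀^1 F(e^{ia}·exp(i·log u)) du, so that along the subsequence T_n → ∞ the Cesàro averages converge to the measure μ_a defined by ⟨μ_a, F⟩ = ∫₀^1 F(e^{ia} u^{i}) du. -/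
open Filter Topology MeasureTheory

/-- For every bounded continuous `F : ℂ → ℝ` and `T > 0` one has the exact identity
`(1/T) ∫₀^T F(exp(i log s)) ds = ∫₀^1 F(exp(i log T)·exp(i log u)) du`.
Consequently, for every `a ∈ [0,2π]`, taking `T_n = exp(2πn + a)` gives, for each `n`,
`(1/T_n) ∫₀^{T_n} F(exp(i log s)) ds = ∫₀^1 F(e^{ia} u^{i}) du`, so along the
subsequence `T_n → ∞` the Cesàro averages converge to `⟨μ_a, F⟩ = ∫₀^1 F(e^{ia} u^{i}) du`. -/
theorem stmt_2 (F : ℂ → ℝ) (hFc : Continuous F) (hFb : ∃ C, ∀ z, |F z| ≤ C) :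
    (∀ T : ℝ, 0 < T →
      (1 / T) * (∫ s in (0:ℝ)..T, F (Complex.exp (Complex.I * ((Real.log s : ℝ) : ℂ))))
        = ∫ u in (0:ℝ)..1, F (Complex.exp (Complex.I * ((Real.log T : ℝ) : ℂ)) *
            Complex.exp (Complex.I * ((Real.log u : ℝ) : ℂ)))) ∧
    (∀ a : ℝ, a ∈ Set.Icc 0 (2 * Real.pi) →
      (∀ n : ℕ,
        (1 / Real.exp (2 * Real.pi * n + a)) *
          (∫ s in (0:ℝ)..Real.exp (2 * Real.pi * n + a),
            F (Complex.exp (Complex.I * ((Real.log s : ℝ) : ℂ))))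
          = ∫ u in (0:ℝ)..1, F (Complex.exp (Complex.I * (a : ℂ)) *
              Complex.exp (Complex.I * ((Real.log u : ℝ) : ℂ)))) ∧
      Tendsto
        (fun n : ℕ => (1 / Real.exp (2 * Real.pi * n + a)) *
          ∫ s in (0:ℝ)..Real.exp (2 * Real.pi * n + a),
            F (Complex.exp (Complex.I * ((Real.log s : ℝ) : ℂ))))
        atTop
        (𝓝 (∫ u in (0:ℝ)..1, F (Complex.exp (Complex.I * (a : ℂ)) *
            Complex.exp (Complex.I * ((Real.log u : ℝ) : ℂ)))))) := by
  have key : ∀ T : ℝ, 0 < T →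
      (1 / T) * (∫ s in (0:ℝ)..T, F (Complex.exp (Complex.I * ((Real.log s : ℝ) : ℂ))))
        = ∫ u in (0:ℝ)..1, F (Complex.exp (Complex.I * ((Real.log T : ℝ) : ℂ)) *
            Complex.exp (Complex.I * ((Real.log u : ℝ) : ℂ))) := by
    intro T hT
    have hT0 : T ≠ 0 := ne_of_gt hT
    have hsub := intervalIntegral.integral_comp_mul_left
        (a := (0:ℝ)) (b := 1)
        (fun s => F (Complex.exp (Complex.I * ((Real.log s : ℝ) : ℂ)))) hT0
    simp only [mul_zero, mul_one] at hsub
    rw [one_div, ← smul_eq_mul, ← hsub]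
    rw [intervalIntegral.integral_of_le zero_le_one,
      intervalIntegral.integral_of_le zero_le_one]
    apply MeasureTheory.integral_congr_ae
    filter_upwards [MeasureTheory.ae_restrict_mem measurableSet_Ioc] with u hu
    have hu0 : u ≠ 0 := ne_of_gt hu.1
    rw [Real.log_mul hT0 hu0]
    push_cast
    rw [mul_add, Complex.exp_add]
  refine ⟨key, ?_⟩
  intro a _
  have hrot : ∀ n : ℕ, Complex.exp (Complex.I * ((Real.log (Real.exp (2 * Real.pi * n + a)) : ℝ) : ℂ))
      = Complex.exp (Complex.I * (a : ℂ)) := by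
    intro n
    rw [Real.log_exp]
    push_cast
    rw [mul_add, Complex.exp_add]
    have h1 : Complex.I * (2 * (Real.pi : ℂ) * (n : ℂ)) = (n : ℂ) * (2 * (Real.pi : ℂ) * Complex.I) := by
      ring
    have h2 := Complex.exp_int_mul_two_pi_mul_I (n : ℤ)
    push_cast at h2
    rw [h1, h2, one_mul]
  have heq : ∀ n : ℕ,
      (1 / Real.exp (2 * Real.pi * n + a)) *
        (∫ s in (0:ℝ)..Real.exp (2 * Real.pi * n + a),
          F (Complex.exp (Complex.I * ((Real.log s : ℝ) : ℂ))))
        = ∫ u in (0:ℝ)..1, F (Complex.exp (Complex.I * (a : ℂ)) *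
            Complex.exp (Complex.I * ((Real.log u : ℝ) : ℂ))) := by
    intro n
    rw [key _ (Real.exp_pos _), hrot n]
  refine ⟨heq, ?_⟩
  have : (fun n : ℕ => (1 / Real.exp (2 * Real.pi * n + a)) *
      ∫ s in (0:ℝ)..Real.exp (2 * Real.pi * n + a),
        F (Complex.exp (Complex.I * ((Real.log s : ℝ) : ℂ))))
      = fun _ : ℕ => ∫ u in (0:ℝ)..1, F (Complex.exp (Complex.I * (a : ℂ)) *
          Complex.exp (Complex.I * ((Real.log u : ℝ) : ℂ))) := funext heq
  rw [this]
  exact tendsto_const_nhds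
end

section
/- Define Γ : (0,∞) → ℝ by Γ(R) = (−1)^{⌊R/π⌋} · ( 1 − (2e^π/(1+e^π)) · exp(−(R − π⌊R/π⌋)) ). Then e^{−R} ∫₀^R sign(sin s)·e^{s} ds − Γ(R) → 0 as R → ∞, where sign(x) equals 1 for x > 0, −1 for x < 0, and 0 for x = 0. -/
open Filter Topology MeasureTheory Real

set_option maxRecDepth 4000

noncomputable def g (s : ℝ) : ℝ := Real.sign (Real.sin s) * Real.exp s

lemma meas_g : Measurable g := by
  have h1 : Measurable fun s : ℝ => Real.sign (Real.sin s) := by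
    have : (fun s : ℝ => Real.sign (Real.sin s)) =
        fun s => if Real.sin s < 0 then (-1:ℝ) else if 0 < Real.sin s then 1 else 0 := rfl
    rw [this]
    exact Measurable.ite (measurableSet_lt Real.continuous_sin.measurable measurable_const)
      measurable_const
      (Measurable.ite (measurableSet_lt measurable_const Real.continuous_sin.measurable)
        measurable_const measurable_const)
  exact h1.mul Real.continuous_exp.measurable

lemma integ_g (a b : ℝ) : IntervalIntegrable g volume a b := by
  apply IntervalIntegrable.mono_fun' (g := Real.exp)
    (Real.continuous_exp.intervalIntegrable a b)
    meas_g.aestronglyMeasurable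
  filter_upwards with x
  have : |Real.sign (Real.sin x)| ≤ 1 := by
    rcases Real.sign_apply_eq (Real.sin x) with h | h | h <;> rw [h] <;> norm_num
  calc ‖g x‖ = |Real.sign (Real.sin x)| * |Real.exp x| := abs_mul _ _
    _ ≤ 1 * |Real.exp x| := by gcongr
    _ = Real.exp x := by rw [one_mul, abs_of_pos (Real.exp_pos x)]

lemma sign_sin_eq (k : ℕ) {s : ℝ} (h1 : k * Real.pi < s) (h2 : s < (k + 1) * Real.pi) :
    Real.sign (Real.sin s) = (-1 : ℝ) ^ k := by
  have hsin : Real.sin s = (-1 : ℝ) ^ k * Real.sin (s - k * Real.pi) := by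
    have := Real.sin_add_nat_mul_pi (s - k * Real.pi) k
    simpa using this
  have hpos : 0 < Real.sin (s - k * Real.pi) := by
    apply Real.sin_pos_of_pos_of_lt_pi
    · linarith
    · nlinarith [Real.pi_pos]
  rcases Nat.even_or_odd k with hk | hk
  · rw [hk.neg_one_pow] at hsin ⊢
    rw [hsin, one_mul]
    exact Real.sign_of_pos hpos
  · rw [hk.neg_one_pow] at hsin ⊢
    rw [hsin]
    exact Real.sign_of_neg (by linarith)

lemma piece (k : ℕ) {a b : ℝ} (ha : k * Real.pi ≤ a) (hb : b ≤ (k + 1) * Real.pi)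
    (hab : a ≤ b) :
    ∫ s in a..b, g s = (-1 : ℝ) ^ k * (Real.exp b - Real.exp a) := by
  have key : ∫ s in a..b, g s = ∫ s in a..b, (-1 : ℝ) ^ k * Real.exp s := by
    apply intervalIntegral.integral_congr_ae
    have hae : ∀ᵐ x : ℝ, x ≠ k * Real.pi ∧ x ≠ (k + 1) * Real.pi := by
      have h1 : ∀ᵐ x : ℝ, x ≠ k * Real.pi := by
        refine ae_iff.mpr ?_
        simpa using measure_singleton (μ := (volume : Measure ℝ)) (k * Real.pi)
      have h2 : ∀ᵐ x : ℝ, x ≠ (k + 1) * Real.pi := by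
        refine ae_iff.mpr ?_
        simpa using measure_singleton (μ := (volume : Measure ℝ)) ((k + 1) * Real.pi)
      exact h1.and h2
    filter_upwards [hae] with x hx hmem
    rw [Set.uIoc_of_le hab] at hmem
    have hx1 : k * Real.pi < x := lt_of_le_of_ne (le_trans ha hmem.1.le) (Ne.symm hx.1)
    have hx2 : x < (k + 1) * Real.pi := lt_of_le_of_ne (le_trans hmem.2 hb) hx.2
    unfold g
    rw [sign_sin_eq k hx1 hx2]
  rw [key, intervalIntegral.integral_const_mul, integral_exp]

noncomputable def F (n : ℕ) : ℝ :=
  (Real.exp Real.pi - 1) * (1 - (-Real.exp Real.pi) ^ n) / (1 + Real.exp Real.pi)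

lemma main_formula (n : ℕ) : ∀ R : ℝ, n * Real.pi ≤ R → R ≤ (n + 1) * Real.pi →
    ∫ s in (0:ℝ)..R, g s = F n + (-1 : ℝ) ^ n * (Real.exp R - Real.exp (n * Real.pi)) := by
  induction n with
  | zero =>
    intro R h1 h2
    simp only [Nat.cast_zero, zero_mul] at h1 h2 ⊢
    rw [piece 0 (by simp) (by simpa using h2) h1]
    simp [F]
  | succ n ih =>
    intro R h1 h2
    have hpi := Real.pi_pos
    have hn1 : (n : ℝ) * Real.pi ≤ (n + 1) * Real.pi := by nlinarith
    have hstep : ((n:ℝ) + 1) * Real.pi ≤ R := by push_cast at h1 ⊢; linarith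
    have hsplit := intervalIntegral.integral_add_adjacent_intervals
      (integ_g 0 ((n + 1) * Real.pi)) (integ_g ((n + 1) * Real.pi) R)
    rw [← hsplit]
    have hIH := ih ((n + 1) * Real.pi) hn1 (le_refl _)
    have hP : ∫ s in ((n:ℝ) + 1) * Real.pi..R, g s
        = (-1 : ℝ) ^ (n + 1) * (Real.exp R - Real.exp (((n:ℝ) + 1) * Real.pi)) := by
      apply piece (n + 1) (by push_cast; linarith) _ hstep
      push_cast at h2 ⊢; linarith
    push_cast at hIH ⊢
    rw [hIH, hP]
    have hexp1 : Real.exp (((n:ℝ) + 1) * Real.pi) = Real.exp Real.pi ^ (n + 1) := by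
      rw [← Real.exp_nat_mul]; push_cast; ring_nf
    have hexp2 : Real.exp ((n:ℝ) * Real.pi) = Real.exp Real.pi ^ n := by
      rw [← Real.exp_nat_mul]
    have hne : (1 : ℝ) + Real.exp Real.pi ≠ 0 := by positivity
    have hneg : (-Real.exp Real.pi) ^ n = (-1 : ℝ) ^ n * Real.exp Real.pi ^ n :=
      neg_pow _ _
    simp only [F, hexp1, hexp2, hneg]
    field_simp
    ring

/-- With `Γ(R) = (−1)^{⌊R/π⌋}·(1 − (2e^π/(1+e^π))·exp(−(R − π⌊R/π⌋)))`, one has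
`e^{−R} ∫₀^R sign(sin s)·e^s ds − Γ(R) → 0` as `R → ∞`. -/
theorem stmt_6 :
    Tendsto
      (fun R : ℝ =>
        Real.exp (-R) * (∫ s in (0:ℝ)..R, Real.sign (Real.sin s) * Real.exp s)
          - (-1 : ℝ) ^ (⌊R / Real.pi⌋) *
              (1 - (2 * Real.exp Real.pi / (1 + Real.exp Real.pi)) *
                Real.exp (-(R - Real.pi * (⌊R / Real.pi⌋ : ℝ)))))
      atTop (𝓝 0) := by
  have hpi := Real.pi_pos
  set C : ℝ := (Real.exp Real.pi - 1) / (1 + Real.exp Real.pi) with hC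
  have hlim : Tendsto (fun R : ℝ => C * Real.exp (-R)) atTop (𝓝 0) := by
    have := (Real.tendsto_exp_neg_atTop_nhds_zero).const_mul C
    simpa using this
  apply hlim.congr'
  filter_upwards [eventually_gt_atTop (0 : ℝ)] with R hR
  have hfl : (0 : ℤ) ≤ ⌊R / Real.pi⌋ := Int.floor_nonneg.mpr (by positivity)
  obtain ⟨n, hn⟩ := Int.eq_ofNat_of_zero_le hfl
  have h1 : (n : ℝ) * Real.pi ≤ R := by
    have := Int.floor_le (R / Real.pi)
    rw [hn] at this
    push_cast at this
    calc (n : ℝ) * Real.pi ≤ (R / Real.pi) * Real.pi := by nlinarith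
      _ = R := by field_simp
  have h2 : R ≤ ((n : ℝ) + 1) * Real.pi := by
    have := (Int.lt_floor_add_one (R / Real.pi)).le
    rw [hn] at this
    push_cast at this
    calc R = (R / Real.pi) * Real.pi := by field_simp
      _ ≤ ((n : ℝ) + 1) * Real.pi := by nlinarith
  have hmain := main_formula n R h1 (by push_cast; exact h2)
  have hgdef : (∫ s in (0:ℝ)..R, Real.sign (Real.sin s) * Real.exp s) = ∫ s in (0:ℝ)..R, g s :=
    rfl
  rw [hgdef, hmain, hn]
  push_cast
  rw [zpow_natCast]
  have hexp2 : Real.exp ((n:ℝ) * Real.pi) = Real.exp Real.pi ^ n := by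
    rw [← Real.exp_nat_mul]
  have hexpR : Real.exp (-(R - Real.pi * (n:ℝ))) = Real.exp Real.pi ^ n / Real.exp R := by
    rw [show -(R - Real.pi * (n:ℝ)) = (n:ℝ) * Real.pi - R by ring, Real.exp_sub, hexp2]
  have hne : (1 : ℝ) + Real.exp Real.pi ≠ 0 := by positivity
  have heR : Real.exp R ≠ 0 := Real.exp_ne_zero R
  rw [hexpR, Real.exp_neg, hC]
  have hneg : (-Real.exp Real.pi) ^ n = (-1 : ℝ) ^ n * Real.exp Real.pi ^ n :=
    neg_pow _ _
  simp only [F, hexp2, hneg]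
  field_simp
  ring
end

section
/- Let d ≥ 1 and let K ⊆ ℝ^d be a nonempty compact connected set. Then for a Borel probability measure μ on ℝ^d the following are equivalent: (i) μ(K) = 1; (ii) there exists a bounded continuous curve γ : [0,∞) → ℝ^d with dist(γ(s), K) → 0 as s → ∞ such that μ ∈ M(γ). In other words, every probability measure supported in K — and no other — arises as a subsequential Cesàro limit of the occupation measures of some curve accumulating on K. -/
open Filter Topology MeasureTheory

/-- The set `M(γ)` of subsequential Cesàro limit measures of a curve
`γ : [0,∞) → ℝ^d`. -/
def cesaroLimits {d : ℕ} (γ : ℝ → EuclideanSpace ℝ (Fin d)) :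
    Set (ProbabilityMeasure (EuclideanSpace ℝ (Fin d))) :=
  {μ | ∃ T : ℕ → ℝ, Tendsto T atTop atTop ∧
    ∀ F : EuclideanSpace ℝ (Fin d) → ℝ, Continuous F → (∃ C, ∀ x, |F x| ≤ C) →
      Tendsto (fun n => (1 / T n) * ∫ s in (0:ℝ)..(T n), F (γ s)) atTop
        (𝓝 (∫ x, F x ∂(μ : Measure (EuclideanSpace ℝ (Fin d)))))}

section Helpers

open Metric Set

variable {d : ℕ}

local notation "Esp" => EuclideanSpace ℝ (Fin d)

/-- Cesàro averages of a bounded function converging at infinity converge to the limit. -/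
lemma cesaro_tendsto {f : ℝ → ℝ} {L C : ℝ} (hf : ContinuousOn f (Set.Ici 0))
    (hC : ∀ s, |f s| ≤ C) (hL : Tendsto f atTop (𝓝 L))
    {T : ℕ → ℝ} (hT : Tendsto T atTop atTop) :
    Tendsto (fun n => (1 / T n) * ∫ s in (0:ℝ)..(T n), f s) atTop (𝓝 L) := by
  have hint : ∀ a b : ℝ, 0 ≤ a → a ≤ b → IntervalIntegrable f MeasureTheory.volume a b := by
    intro a b ha hab
    apply ContinuousOn.intervalIntegrable
    apply hf.mono
    rw [Set.uIcc_of_le hab]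
    intro x hx
    exact le_trans ha hx.1
  rw [Metric.tendsto_atTop]
  intro ε hε
  obtain ⟨S₀, hS₀⟩ := (Metric.tendsto_atTop.1 hL) (ε/4) (by linarith)
  set S := max S₀ 0 with hSdef
  have hS : ∀ s ≥ S, |f s - L| ≤ ε/4 := by
    intro s hs
    have := hS₀ s (le_trans (le_max_left _ _) hs)
    rw [Real.dist_eq] at this; linarith
  have hSnn : 0 ≤ S := le_max_right _ _
  have hCL : 0 ≤ C + |L| := le_trans (abs_nonneg (f 0)) (le_trans (hC 0) (le_add_of_nonneg_right (abs_nonneg _)))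
  obtain ⟨n₀, hn₀⟩ := eventually_atTop.1 <| (tendsto_atTop.1 hT) (max (S + 1) (4 * ((C + |L|) * S + 1) / ε))
  refine ⟨n₀, fun n hn => ?_⟩
  have hTn := hn₀ n hn
  have hTS : S + 1 ≤ T n := le_trans (le_max_left _ _) hTn
  have hTd : 4 * ((C + |L|) * S + 1) / ε ≤ T n := le_trans (le_max_right _ _) hTn
  have hTpos : 0 < T n := by linarith
  have h1 : IntervalIntegrable f MeasureTheory.volume 0 S := hint 0 S le_rfl hSnn
  have h2 : IntervalIntegrable f MeasureTheory.volume S (T n) := hint S (T n) hSnn (by linarith)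
  have key : |(∫ s in (0:ℝ)..(T n), f s) - T n * L| ≤ (C + |L|) * S + ε/4 * T n := by
    have hsplit : (∫ s in (0:ℝ)..(T n), f s) - T n * L
        = (∫ s in (0:ℝ)..S, (f s - L)) + ∫ s in S..(T n), (f s - L) := by
      rw [intervalIntegral.integral_sub h1 (intervalIntegrable_const),
        intervalIntegral.integral_sub h2 (intervalIntegrable_const),
        intervalIntegral.integral_const, intervalIntegral.integral_const]
      have : (∫ s in (0:ℝ)..S, f s) + ∫ s in S..(T n), f s = ∫ s in (0:ℝ)..(T n), f s :=
        intervalIntegral.integral_add_adjacent_intervals h1 h2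
      simp only [smul_eq_mul, sub_zero]
      ring_nf
      linarith [this]
    rw [hsplit]
    have b1 : |∫ s in (0:ℝ)..S, (f s - L)| ≤ (C + |L|) * S := by
      have := intervalIntegral.norm_integral_le_of_norm_le_const
        (C := C + |L|) (a := (0:ℝ)) (b := S) (f := fun s => f s - L) ?_
      · rw [Real.norm_eq_abs] at this
        calc |∫ s in (0:ℝ)..S, (f s - L)| ≤ (C + |L|) * |S - 0| := this
        _ = (C + |L|) * S := by rw [sub_zero, abs_of_nonneg hSnn]
      · intro x _
        rw [Real.norm_eq_abs]
        calc |f x - L| ≤ |f x| + |L| := abs_sub _ _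
        _ ≤ C + |L| := by linarith [hC x]
    have b2 : |∫ s in S..(T n), (f s - L)| ≤ ε/4 * T n := by
      have := intervalIntegral.norm_integral_le_of_norm_le_const
        (C := ε/4) (a := S) (b := T n) (f := fun s => f s - L) ?_
      · rw [Real.norm_eq_abs] at this
        calc |∫ s in S..(T n), (f s - L)| ≤ ε/4 * |T n - S| := this
        _ ≤ ε/4 * T n := by
            rw [abs_of_nonneg (by linarith)]
            nlinarith
      · intro x hx
        rw [Set.uIoc_of_le (by linarith)] at hx
        rw [Real.norm_eq_abs]
        exact hS x (le_of_lt hx.1)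
    calc |(∫ s in (0:ℝ)..S, (f s - L)) + ∫ s in S..(T n), (f s - L)|
        ≤ |∫ s in (0:ℝ)..S, (f s - L)| + |∫ s in S..(T n), (f s - L)| := abs_add_le _ _
      _ ≤ (C + |L|) * S + ε/4 * T n := by linarith
  rw [Real.dist_eq]
  have : (1 / T n) * (∫ s in (0:ℝ)..(T n), f s) - L
      = (1 / T n) * ((∫ s in (0:ℝ)..(T n), f s) - T n * L) := by
    field_simp
  rw [this, abs_mul, abs_of_nonneg (by positivity : (0:ℝ) ≤ 1 / T n)]
  have hfrac : (1 / T n) * ((C + |L|) * S + ε/4 * T n) ≤ ε/4 + ε/4 := by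
    have e1 : (1 / T n) * (ε/4 * T n) = ε/4 := by field_simp
    have e2 : (1 / T n) * ((C + |L|) * S) ≤ ε/4 := by
      have h4 : 4 * ((C + |L|) * S + 1) ≤ ε * T n := by
        have := (div_le_iff₀ hε).1 hTd
        linarith
      rw [one_div, inv_mul_le_iff₀ hTpos]
      nlinarith
    calc (1 / T n) * ((C + |L|) * S + ε/4 * T n)
        = (1 / T n) * ((C + |L|) * S) + (1 / T n) * (ε/4 * T n) := by ring
      _ ≤ ε/4 + ε/4 := by rw [e1]; linarith
  calc (1 / T n) * |(∫ s in (0:ℝ)..(T n), f s) - T n * L|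
      ≤ (1 / T n) * ((C + |L|) * S + ε/4 * T n) := by
        apply mul_le_mul_of_nonneg_left key (by positivity)
    _ ≤ ε/4 + ε/4 := hfrac
    _ < ε := by linarith

variable {E : Type*} [NormedAddCommGroup E] [NormedSpace ℝ E]

lemma joinedIn_thickening {K : Set E} (hKconn : IsConnected K) {δ : ℝ} (hδ : 0 < δ)
    {x y : E} (hx : x ∈ K) (hy : y ∈ K) : JoinedIn (Metric.thickening δ K) x y := by
  have hUeq : Metric.thickening δ K = ⋃₀ ((fun z => K ∪ Metric.ball z δ) '' K) := by
    apply Set.Subset.antisymm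
    · rw [Metric.thickening_eq_biUnion_ball]
      refine Set.iUnion₂_subset fun z hz => ?_
      exact fun w hw => ⟨K ∪ Metric.ball z δ, ⟨z, hz, rfl⟩, Or.inr hw⟩
    · rintro w ⟨s, ⟨z, hz, rfl⟩, hw⟩
      rcases hw with hw | hw
      · exact Metric.self_subset_thickening hδ K hw
      · exact Metric.ball_subset_thickening hz δ hw
  have hpre : IsPreconnected (Metric.thickening δ K) := by
    rw [hUeq]
    apply isPreconnected_sUnion x
    · rintro s ⟨z, hz, rfl⟩; exact Or.inl hx
    · rintro s ⟨z, hz, rfl⟩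
      exact IsPreconnected.union z hz (Metric.mem_ball_self hδ)
        hKconn.isPreconnected (convex_ball z δ).isPreconnected
  have hconn : IsConnected (Metric.thickening δ K) :=
    ⟨⟨x, Metric.self_subset_thickening hδ K hx⟩, hpre⟩
  have hpath : IsPathConnected (Metric.thickening δ K) :=
    (Metric.isOpen_thickening.isConnected_iff_isPathConnected).1 hconn
  exact hpath.joinedIn x (Metric.self_subset_thickening hδ K hx)
    y (Metric.self_subset_thickening hδ K hy)

lemma continuousOn_union_closed {α : Type*} [TopologicalSpace α] {f : ℝ → α} {s t : Set ℝ}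
    (hs : IsClosed s) (ht : IsClosed t)
    (hcs : ContinuousOn f s) (hct : ContinuousOn f t) : ContinuousOn f (s ∪ t) := by
  intro x hx
  have A : ContinuousWithinAt f s x := by
    by_cases h : x ∈ s
    · exact hcs x h
    · exact continuousWithinAt_of_notMem_closure (by rwa [hs.closure_eq])
  have B : ContinuousWithinAt f t x := by
    by_cases h : x ∈ t
    · exact hct x h
    · exact continuousWithinAt_of_notMem_closure (by rwa [ht.closure_eq])
  exact A.union B

lemma continuousOn_of_pieces {α : Type*} [TopologicalSpace α] {γ : ℝ → α} {t : ℕ → ℝ}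
    (ht0 : t 0 = 0) (hstep : ∀ j, t j + 1 ≤ t (j + 1))
    (hc : ∀ j, ContinuousOn γ (Set.Icc (t j) (t (j + 1)))) :
    ContinuousOn γ (Set.Ici 0) := by
  have hmono : Monotone t := monotone_nat_of_le_succ fun j => by linarith [hstep j]
  have htnn : ∀ j, 0 ≤ t j := by
    intro j
    have := hmono (Nat.zero_le j)
    rwa [ht0] at this
  have hge : ∀ j : ℕ, (j : ℝ) ≤ t j := by
    intro j
    induction j with
    | zero => simp [ht0]
    | succ m ih => push_cast; linarith [hstep m]
  have hIcc : ∀ m, ContinuousOn γ (Set.Icc 0 (t m)) := by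
    intro m
    induction m with
    | zero => rw [ht0, Set.Icc_self]; exact continuousOn_singleton _ _
    | succ m ih =>
      rw [← Set.Icc_union_Icc_eq_Icc (htnn m) (by linarith [hstep m])]
      exact continuousOn_union_closed isClosed_Icc isClosed_Icc ih (hc m)
  intro s hs
  obtain ⟨m, hm⟩ := exists_nat_gt (s + 1)
  have hsm : s ∈ Set.Icc 0 (t m) := ⟨hs, by linarith [hge m]⟩
  refine (hIcc m s hsm).mono_of_mem_nhdsWithin ?_
  have : Set.Ici (0:ℝ) ∩ Set.Iio (s + 1) ⊆ Set.Icc 0 (t m) := by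
    rintro u ⟨hu0, hu1⟩
    have hu1' : u < s + 1 := hu1
    exact ⟨hu0, by linarith [hge m]⟩
  exact Filter.mem_of_superset (inter_mem_nhdsWithin _ (Iio_mem_nhds (by linarith))) this


lemma reverse_dir {K : Set (EuclideanSpace ℝ (Fin d))} (hKne : K.Nonempty)
    (hKcl : IsClosed K) (μ : ProbabilityMeasure (EuclideanSpace ℝ (Fin d)))
    {γ : ℝ → EuclideanSpace ℝ (Fin d)} (hγ : ContinuousOn γ (Set.Ici 0))
    (hdist : Tendsto (fun s => Metric.infDist (γ s) K) atTop (𝓝 0))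
    (hμ : μ ∈ cesaroLimits γ) :
    (μ : Measure (EuclideanSpace ℝ (Fin d))) K = 1 := by
  set F : EuclideanSpace ℝ (Fin d) → ℝ := fun x => max 0 (1 - Metric.infDist x K) with hF
  have hFc : Continuous F :=
    continuous_const.max (continuous_const.sub (Metric.continuous_infDist_pt K))
  have hFb : ∀ x, |F x| ≤ 1 := by
    intro x
    rw [abs_of_nonneg (le_max_left _ _)]
    exact max_le zero_le_one (by linarith [Metric.infDist_nonneg (x := x) (s := K)])
  obtain ⟨T, hT, hconv⟩ := hμ
  have h1 := hconv F hFc ⟨1, hFb⟩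
  have h2 : Tendsto (fun n => (1 / T n) * ∫ s in (0:ℝ)..(T n), F (γ s)) atTop (𝓝 1) := by
    apply cesaro_tendsto (C := 1) (hFc.comp_continuousOn hγ) (fun s => hFb _) _ hT
    have hg : Continuous (fun r : ℝ => max 0 (1 - r)) :=
      continuous_const.max (continuous_const.sub continuous_id)
    have := (hg.tendsto 0).comp hdist
    exact (by simpa using this : Tendsto ((fun r : ℝ => max 0 (1 - r)) ∘ fun s => Metric.infDist (γ s) K) atTop (𝓝 1))
  have hint : ∫ x, F x ∂(μ : Measure (EuclideanSpace ℝ (Fin d))) = 1 :=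
    tendsto_nhds_unique h1 h2
  -- conclude
  have hFi : Integrable F (μ : Measure (EuclideanSpace ℝ (Fin d))) := by
    apply Integrable.mono' (integrable_const 1) hFc.aestronglyMeasurable
    exact ae_of_all _ fun x => by rw [Real.norm_eq_abs]; exact hFb x
  have hzero : ∫ x, (1 - F x) ∂(μ : Measure (EuclideanSpace ℝ (Fin d))) = 0 := by
    rw [integral_sub (integrable_const 1) hFi, hint]
    simp
  have hFle : ∀ x, F x ≤ 1 := fun x =>
    max_le zero_le_one (by linarith [Metric.infDist_nonneg (x := x) (s := K)])
  have hae := (integral_eq_zero_iff_of_nonneg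
      (fun x => sub_nonneg.2 (hFle x)) ((integrable_const 1).sub hFi)).1 hzero
  have haeK : ∀ᵐ x ∂(μ : Measure (EuclideanSpace ℝ (Fin d))), x ∈ K := by
    filter_upwards [hae] with x hx
    simp only [Pi.zero_apply] at hx
    have hFx : F x = 1 := by linarith [sub_eq_zero.1 hx]
    have hd0 : Metric.infDist x K ≤ 0 := by
      by_contra hpos
      push_neg at hpos
      have : F x < 1 := max_lt one_pos (by linarith)
      linarith
    have : Metric.infDist x K = 0 := le_antisymm hd0 Metric.infDist_nonneg
    exact (hKcl.mem_iff_infDist_zero hKne).2 this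
  have hcompl : (μ : Measure (EuclideanSpace ℝ (Fin d))) Kᶜ = 0 := ae_iff.1 haeK
  exact (prob_compl_eq_zero_iff hKcl.measurableSet).1 hcompl

lemma partition_weights {K : Set Esp} (hKne : K.Nonempty) (hKc : IsCompact K)
    (μ : ProbabilityMeasure Esp) (hμK : (μ : Measure Esp) K = 1) :
    ∃ (N : ℕ → ℕ) (y : ℕ → ℕ → Esp) (w : ℕ → ℕ → ℝ),
      (∀ k, 1 ≤ N k) ∧ (∀ k i, y k i ∈ K) ∧ (∀ k i, 0 ≤ w k i) ∧
      (∀ k, ∑ i ∈ Finset.range (N k), w k i = 1) ∧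
      (∀ (k : ℕ) (F : Esp → ℝ), Continuous F → (∃ C, ∀ x, |F x| ≤ C) →
        ∀ ε > 0, (∀ a ∈ K, ∀ b ∈ K, dist a b < 1/((k:ℝ)+1) → |F a - F b| ≤ ε) →
        |∑ i ∈ Finset.range (N k), w k i * F (y k i) - ∫ x, F x ∂(μ : Measure Esp)| ≤ ε) := by
  have key : ∀ k : ℕ, ∃ (m : ℕ) (y : ℕ → Esp) (w : ℕ → ℝ),
      1 ≤ m ∧ (∀ i, y i ∈ K) ∧ (∀ i, 0 ≤ w i) ∧
      (∑ i ∈ Finset.range m, w i = 1) ∧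
      (∀ (F : Esp → ℝ), Continuous F → (∃ C, ∀ x, |F x| ≤ C) →
        ∀ ε > 0, (∀ a ∈ K, ∀ b ∈ K, dist a b < 1/((k:ℝ)+1) → |F a - F b| ≤ ε) →
        |∑ i ∈ Finset.range m, w i * F (y i) - ∫ x, F x ∂(μ : Measure Esp)| ≤ ε) := by
    intro k
    set δ : ℝ := 1/((k:ℝ)+1) with hδdef
    have hδ : 0 < δ := by positivity
    -- finite subcover with centers in K
    obtain ⟨s, hsK, hsfin, hscov⟩ := hKc.elim_finite_subcover_image
      (fun z (_ : z ∈ K) => isOpen_ball (x := z) (ε := δ))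
      (fun x hx => Set.mem_biUnion hx (mem_ball_self hδ))
    -- enumerate s
    set m := hsfin.toFinset.card with hm
    have hmpos : 1 ≤ m := by
      rcases hKne with ⟨x, hx⟩
      obtain ⟨z, hz, -⟩ := Set.mem_iUnion₂.1 (hscov hx)
      have : z ∈ hsfin.toFinset := hsfin.mem_toFinset.2 hz
      exact Finset.card_pos.2 ⟨z, this⟩
    set e := hsfin.toFinset.equivFin with he
    set y : ℕ → Esp := fun i => if h : i < m then (e.symm ⟨i, h⟩ : Esp) else hKne.choose with hy
    have hyK : ∀ i, y i ∈ K := by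
      intro i
      by_cases h : i < m
      · simp only [hy, dif_pos h]
        exact hsK (hsfin.mem_toFinset.1 (e.symm ⟨i, h⟩).2)
      · simp only [hy, dif_neg h]; exact hKne.choose_spec
    have hcov' : ∀ x ∈ K, ∃ i, i < m ∧ x ∈ ball (y i) δ := by
      intro x hx
      obtain ⟨z, hz, hxz⟩ := Set.mem_iUnion₂.1 (hscov hx)
      refine ⟨(e ⟨z, hsfin.mem_toFinset.2 hz⟩ : Fin m).1, (e _).2, ?_⟩
      have heq : y (e ⟨z, hsfin.mem_toFinset.2 hz⟩ : Fin m).1 = z := by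
        simp only [hy, dif_pos (e ⟨z, hsfin.mem_toFinset.2 hz⟩ : Fin m).2, Fin.eta,
          Equiv.symm_apply_apply]
        exact dif_pos (e ⟨z, hsfin.mem_toFinset.2 hz⟩).2
      rw [heq]; exact hxz
    -- the partition
    set A : ℕ → Set Esp :=
      fun i => (K ∩ ball (y i) δ) \ ⋃ j ∈ Finset.range i, ball (y j) δ with hA
    have hAmeas : ∀ i, MeasurableSet (A i) := by
      intro i
      exact ((hKc.isClosed.measurableSet.inter measurableSet_ball).diff
        (Finset.measurableSet_biUnion _ fun j _ => measurableSet_ball))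
    have hAsubK : ∀ i, A i ⊆ K := fun i x hx => hx.1.1
    have hAsubBall : ∀ i, A i ⊆ ball (y i) δ := fun i x hx => hx.1.2
    have hdisj : ∀ i j, i < j → Disjoint (A i) (A j) := by
      intro i j hij
      apply Set.disjoint_left.2
      intro x hxi hxj
      exact hxj.2 (Set.mem_biUnion (Finset.mem_range.2 hij) (hAsubBall i hxi))
    have hunion : ⋃ i ∈ Finset.range m, A i = K := by
      apply Set.Subset.antisymm
      · exact Set.iUnion₂_subset fun i _ => hAsubK i
      · intro x hx
        classical
        have hex : ∃ i, i < m ∧ x ∈ ball (y i) δ := hcov' x hx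
        have hex' : ∃ i, x ∈ ball (y i) δ := ⟨hex.choose, hex.choose_spec.2⟩
        have hb : x ∈ ball (y (Nat.find hex')) δ := Nat.find_spec hex'
        have hlt : Nat.find hex' < m :=
          lt_of_le_of_lt (Nat.find_min' hex' hex.choose_spec.2) hex.choose_spec.1
        refine Set.mem_biUnion (Finset.mem_range.2 hlt) ⟨⟨hx, hb⟩, ?_⟩
        intro hmem
        simp only [Set.mem_iUnion, Finset.mem_range, exists_prop] at hmem
        obtain ⟨j, hj, hxj⟩ := hmem
        exact (Nat.find_min hex' hj) hxj
    -- weights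
    set w : ℕ → ℝ := fun i => ((μ : Measure Esp) (A i)).toReal with hw
    have hwnn : ∀ i, 0 ≤ w i := fun i => ENNReal.toReal_nonneg
    have hmeasU : (μ : Measure Esp) (⋃ i ∈ Finset.range m, A i)
        = ∑ i ∈ Finset.range m, (μ : Measure Esp) (A i) := by
      apply measure_biUnion_finset _ (fun i _ => hAmeas i)
      intro i hi j hj hij
      rcases lt_or_gt_of_ne hij with h | h
      · exact hdisj i j h
      · exact (hdisj j i h).symm
    have hwsum : ∑ i ∈ Finset.range m, w i = 1 := by
      rw [hw]
      have : ∑ i ∈ Finset.range m, ((μ : Measure Esp) (A i)).toReal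
          = ((μ : Measure Esp) (⋃ i ∈ Finset.range m, A i)).toReal := by
        rw [hmeasU, ENNReal.toReal_sum (fun i _ => measure_ne_top _ _)]
      rw [this, hunion, hμK, ENNReal.toReal_one]
    refine ⟨m, y, w, hmpos, hyK, hwnn, hwsum, ?_⟩
    intro F hFc hFb ε hε hUC
    obtain ⟨C, hC⟩ := hFb
    have hFi : Integrable F (μ : Measure Esp) := by
      apply Integrable.mono' (integrable_const C) hFc.aestronglyMeasurable
      exact Filter.Eventually.of_forall fun x => by rw [Real.norm_eq_abs]; exact hC x
    have haeK : ∀ᵐ x ∂(μ : Measure Esp), x ∈ K := by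
      rw [MeasureTheory.ae_iff]
      have : {x | ¬ x ∈ K} = Kᶜ := rfl
      rw [this]
      exact (prob_compl_eq_zero_iff hKc.isClosed.measurableSet).2 hμK
    have hres : (μ : Measure Esp).restrict K = (μ : Measure Esp) :=
      Measure.restrict_eq_self_of_ae_mem haeK
    have hsplitint : ∫ x, F x ∂(μ : Measure Esp)
        = ∑ i ∈ Finset.range m, ∫ x in A i, F x ∂(μ : Measure Esp) := by
      rw [← integral_biUnion_finset (Finset.range m) (fun i _ => hAmeas i)
        (fun i hi j hj hij => by
          rcases lt_or_gt_of_ne hij with h | h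
          · exact hdisj i j h
          · exact (hdisj j i h).symm)
        (fun i _ => hFi.integrableOn), hunion]
      conv_lhs => rw [← hres]
    have hterm : ∀ i ∈ Finset.range m,
        |w i * F (y i) - ∫ x in A i, F x ∂(μ : Measure Esp)|
          ≤ ε * ((μ : Measure Esp) (A i)).toReal := by
      intro i _
      have hconst : w i * F (y i) = ∫ _x in A i, F (y i) ∂(μ : Measure Esp) := by
        rw [setIntegral_const, smul_eq_mul, hw]
        rfl
      rw [hconst, ← integral_sub (integrableOn_const (measure_ne_top _ _) (by simp) : IntegrableOn (fun _ => F (y i)) (A i) (μ : Measure Esp))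
        hFi.integrableOn]
      have hbnd : ∀ x ∈ A i, ‖F (y i) - F x‖ ≤ ε := by
        intro x hx
        rw [Real.norm_eq_abs]
        have hdist : dist (y i) x < δ := by
          have hxb := hAsubBall i hx
          rw [mem_ball] at hxb
          rw [dist_comm]; exact hxb
        exact hUC (y i) (hyK i) x (hAsubK i hx) hdist
      have hni := norm_setIntegral_le_of_norm_le_const (μ := (μ : Measure Esp))
        (s := A i) (C := ε) (f := fun x => F (y i) - F x) (measure_lt_top _ _) hbnd
      rw [Real.norm_eq_abs] at hni
      exact hni
    calc |∑ i ∈ Finset.range m, w i * F (y i) - ∫ x, F x ∂(μ : Measure Esp)|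
        = |∑ i ∈ Finset.range m, (w i * F (y i) - ∫ x in A i, F x ∂(μ : Measure Esp))| := by
          rw [Finset.sum_sub_distrib, ← hsplitint]
      _ ≤ ∑ i ∈ Finset.range m, |w i * F (y i) - ∫ x in A i, F x ∂(μ : Measure Esp)| :=
          Finset.abs_sum_le_sum_abs _ _
      _ ≤ ∑ i ∈ Finset.range m, ε * ((μ : Measure Esp) (A i)).toReal :=
          Finset.sum_le_sum hterm
      _ = ε * ∑ i ∈ Finset.range m, w i := by rw [Finset.mul_sum]
      _ = ε := by rw [hwsum, mul_one]
  choose N y w h1 h2 h3 h4 h5 using key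
  exact ⟨N, y, w, h1, h2, h3, h4, h5⟩

lemma forward_dir {K : Set Esp} (hKne : K.Nonempty) (hKc : IsCompact K)
    (hKconn : IsConnected K) (μ : ProbabilityMeasure Esp)
    (hμK : (μ : Measure Esp) K = 1) :
    ∃ γ : ℝ → Esp,
      ContinuousOn γ (Set.Ici 0) ∧
      (∃ C, ∀ s ∈ Set.Ici (0 : ℝ), ‖γ s‖ ≤ C) ∧
      Tendsto (fun s => Metric.infDist (γ s) K) atTop (𝓝 0) ∧
      μ ∈ cesaroLimits γ := by
  classical
  obtain ⟨N, y, w, hN1, hyK, hwnn, hwsum, happrox⟩ := partition_weights hKne hKc μ hμK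
  -- cumulative counts
  set Cc : ℕ → ℕ := fun k => ∑ j ∈ Finset.range k, N j with hCc
  have hCc0 : Cc 0 = 0 := by simp [hCc]
  have hCcsucc : ∀ k, Cc (k + 1) = Cc k + N k := by
    intro k; simp [hCc, Finset.sum_range_succ]
  have hCck : ∀ k, k ≤ Cc k := by
    intro k
    induction k with
    | zero => simp [hCc0]
    | succ m ih => rw [hCcsucc]; have := hN1 m; omega
  have hCcmono : Monotone Cc := by
    apply monotone_nat_of_le_succ
    intro k; rw [hCcsucc]; omega
  -- block index
  set blk : ℕ → ℕ := fun j => Nat.findGreatest (fun k => Cc k ≤ j) j with hblk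
  have hblk1 : ∀ j, Cc (blk j) ≤ j := by
    intro j
    exact Nat.findGreatest_spec (P := fun k => Cc k ≤ j) (Nat.zero_le j) (by simp [hCc0])
  have hblk2 : ∀ j, j < Cc (blk j + 1) := by
    intro j
    by_contra hcon
    push_neg at hcon
    have h1 : blk j + 1 ≤ j := le_trans (hCck _) hcon
    have h2 : blk j + 1 ≤ blk j :=
      Nat.le_findGreatest (P := fun k => Cc k ≤ j) h1 hcon
    omega
  have hblk3 : ∀ k i, i < N k → blk (Cc k + i) = k := by
    intro k i hi
    have hki : Cc k ≤ Cc k + i := Nat.le_add_right _ _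
    have hki2 : Cc k + i < Cc (k + 1) := by rw [hCcsucc]; omega
    have hub : blk (Cc k + i) < k + 1 := by
      by_contra hcon
      push_neg at hcon
      exact absurd (le_trans (hCcmono hcon) (hblk1 (Cc k + i))) (by omega)
    have hlb : k ≤ blk (Cc k + i) := by
      by_contra hcon
      push_neg at hcon
      have := hblk2 (Cc k + i)
      have : Cc k + i < Cc k := lt_of_lt_of_le this (hCcmono (by omega))
      omega
    omega
  -- points
  set pts : ℕ → Esp := fun j => y (blk j) (j - Cc (blk j)) with hpts
  have hptsK : ∀ j, pts j ∈ K := fun j => hyK _ _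
  -- connecting paths
  have hjoin : ∀ j : ℕ, ∃ q : Path (pts j) (pts (j + 1)),
      ∀ u, q u ∈ Metric.thickening (1/((j:ℝ)+1)) K := by
    intro j
    exact joinedIn_thickening hKconn (by positivity) (hptsK j) (hptsK (j + 1))
  choose p hp using hjoin
  have hpext : ∀ (j : ℕ) (u : ℝ), (p j).extend u ∈ Metric.thickening (1/((j:ℝ)+1)) K := by
    intro j u
    show Set.IccExtend zero_le_one (p j) u ∈ _
    rw [Set.IccExtend_apply]
    exact hp j _
  -- dwell-time scales
  set S : ℕ → ℝ := fun n =>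
    Nat.rec 0 (fun m Sm => Sm + ((m:ℝ)+1) * (Sm + ((Cc (m+1) : ℕ) : ℝ) + 1)) n with hS
  set M : ℕ → ℝ := fun n => ((n:ℝ)+1) * (S n + ((Cc (n+1) : ℕ) : ℝ) + 1) with hM
  have hS0 : S 0 = 0 := rfl
  have hSsucc : ∀ n, S (n + 1) = S n + M n := fun n => rfl
  have hSnn : ∀ n, 0 ≤ S n := by
    intro n
    induction n with
    | zero => simp [hS0]
    | succ m ih =>
      rw [hSsucc]
      simp only [hM]
      have hc : (0:ℝ) ≤ ((Cc (m+1) : ℕ) : ℝ) := Nat.cast_nonneg _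
      have h2 : (0:ℝ) ≤ ((m:ℝ)+1) * (S m + ((Cc (m+1) : ℕ) : ℝ) + 1) :=
        mul_nonneg (by positivity) (by linarith)
      linarith
  have hMpos : ∀ n : ℕ, (0:ℝ) < M n := by
    intro n
    simp only [hM]
    have hc : (0:ℝ) ≤ ((Cc (n+1) : ℕ) : ℝ) := Nat.cast_nonneg _
    have := hSnn n
    have h1 : (0:ℝ) < S n + ((Cc (n+1) : ℕ) : ℝ) + 1 := by linarith
    positivity
  have hMbig : ∀ n : ℕ, ((n:ℝ) + 1) ≤ M n := by
    intro n
    simp only [hM]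
    have hc : (0:ℝ) ≤ ((Cc (n+1) : ℕ) : ℝ) := Nat.cast_nonneg _
    have := hSnn n
    nlinarith
  -- dwell times and segment times
  set dwell : ℕ → ℝ := fun j => w (blk j) (j - Cc (blk j)) * M (blk j) with hdwell
  have hdwellnn : ∀ j, 0 ≤ dwell j :=
    fun j => mul_nonneg (hwnn _ _) (hMpos _).le
  set t : ℕ → ℝ := fun j => ∑ i ∈ Finset.range j, (dwell i + 1) with ht
  have ht0 : t 0 = 0 := by simp [ht]
  have htsucc : ∀ j, t (j + 1) = t j + dwell j + 1 := by
    intro j; simp [ht, Finset.sum_range_succ]; ring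
  have htstep : ∀ j, t j + 1 ≤ t (j + 1) := by
    intro j; rw [htsucc]; linarith [hdwellnn j]
  have htmono : Monotone t := monotone_nat_of_le_succ fun j => by linarith [htstep j]
  have htnn : ∀ j, 0 ≤ t j := by
    intro j; have := htmono (Nat.zero_le j); rwa [ht0] at this
  have htge : ∀ j : ℕ, (j:ℝ) ≤ t j := by
    intro j
    induction j with
    | zero => simp [ht0]
    | succ m ih => push_cast; linarith [htstep m]
  -- segment index and the curve
  set J : ℝ → ℕ := fun s => Nat.findGreatest (fun j => t j ≤ s) (Nat.ceil s) with hJ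
  set γ : ℝ → Esp := fun s => (p (J s)).extend (s - t (J s) - dwell (J s)) with hγ
  have hJeq : ∀ j (s : ℝ), t j ≤ s → s < t (j + 1) → J s = j := by
    intro j s hjs hsj
    have hjceil : j ≤ Nat.ceil s := by
      have h1 : (j:ℝ) ≤ s := le_trans (htge j) hjs
      have h2 : s ≤ (Nat.ceil s : ℝ) := Nat.le_ceil s
      exact_mod_cast Nat.cast_le.1 (le_trans h1 h2) |>.trans_eq rfl
    have hle : j ≤ J s := Nat.le_findGreatest hjceil hjs
    have hspec : t (J s) ≤ s :=
      Nat.findGreatest_spec (P := fun j => t j ≤ s) hjceil hjs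
    by_contra hne
    have hlt : j < J s := lt_of_le_of_ne hle (fun h => hne h.symm)
    have : t (j + 1) ≤ t (J s) := htmono hlt
    linarith
  have hγeq : ∀ j (s : ℝ), s ∈ Set.Icc (t j) (t (j + 1)) →
      γ s = (p j).extend (s - t j - dwell j) := by
    intro j s hs
    rcases lt_or_eq_of_le hs.2 with hlt | heq
    · rw [hγ]
      simp only
      rw [hJeq j s hs.1 hlt]
    · -- s = t (j+1)
      have hJs : J s = j + 1 := by
        apply hJeq (j + 1) s heq.ge
        rw [heq]
        linarith [htstep (j + 1)]
      rw [hγ]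
      simp only
      rw [hJs]
      have e1 : (p (j+1)).extend (s - t (j+1) - dwell (j+1)) = pts (j+1) :=
        Path.extend_of_le_zero _ (by rw [heq]; linarith [hdwellnn (j+1)])
      have e2 : (p j).extend (s - t j - dwell j) = pts (j+1) :=
        Path.extend_of_one_le _ (by rw [heq, htsucc j]; linarith)
      rw [e1, e2]
  have hγconst : ∀ j (s : ℝ), t j ≤ s → s ≤ t j + dwell j → γ s = pts j := by
    intro j s h1 h2
    rw [hγeq j s ⟨h1, by rw [htsucc]; linarith⟩]
    exact Path.extend_of_le_zero _ (by linarith)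
  have hγcont : ContinuousOn γ (Set.Ici 0) := by
    apply continuousOn_of_pieces ht0 htstep
    intro j
    apply ContinuousOn.congr (f := fun s => (p j).extend (s - t j - dwell j))
    · exact ((p j).continuous_extend.comp (by fun_prop)).continuousOn
    · intro s hs; exact hγeq j s hs
  -- the curve stays in the 1-thickening of K
  have hγthick : ∀ s : ℝ, γ s ∈ Metric.thickening 1 K := by
    intro s
    have hm := hpext (J s) (s - t (J s) - dwell (J s))
    have hle : 1/((J s : ℝ)+1) ≤ 1 := by
      rw [div_le_one (by positivity)]
      have : (0:ℝ) ≤ (J s : ℝ) := Nat.cast_nonneg _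
      linarith
    exact Metric.thickening_mono hle K hm
  -- boundedness
  obtain ⟨Cb, hCb⟩ := isBounded_iff_forall_norm_le.1 hKc.isBounded.thickening
  have hγbdd : ∀ s ∈ Set.Ici (0:ℝ), ‖γ s‖ ≤ Cb := fun s _ => hCb _ (hγthick s)
  -- distance to K tends to zero
  have hdist0 : Tendsto (fun s => Metric.infDist (γ s) K) atTop (𝓝 0) := by
    rw [Metric.tendsto_nhds]
    intro ε hε
    obtain ⟨j, hj⟩ : ∃ j : ℕ, 1/((j:ℝ)+1) < ε := exists_nat_one_div_lt hε
    rw [eventually_atTop]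
    refine ⟨t j, fun s hs => ?_⟩
    have hJge : j ≤ J s := by
      apply Nat.le_findGreatest _ hs
      have h1 : (j:ℝ) ≤ s := le_trans (htge j) hs
      have h2 : s ≤ (Nat.ceil s : ℝ) := Nat.le_ceil s
      exact_mod_cast le_trans h1 h2
    have hmem := hpext (J s) (s - t (J s) - dwell (J s))
    obtain ⟨z, hz, hdz⟩ := Metric.mem_thickening_iff.1 hmem
    have hlt : Metric.infDist (γ s) K < 1/((J s : ℝ)+1) :=
      lt_of_le_of_lt (Metric.infDist_le_dist_of_mem hz) hdz
    have h2 : 1/((J s : ℝ)+1) ≤ 1/((j:ℝ)+1) := by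
      apply one_div_le_one_div_of_le (by positivity)
      have : (j:ℝ) ≤ (J s : ℝ) := Nat.cast_le.2 hJge
      linarith
    rw [Real.dist_eq, sub_zero, abs_of_nonneg Metric.infDist_nonneg]
    linarith
  -- sum bookkeeping
  have hSsum : ∀ n, ∑ k ∈ Finset.range n, M k = S n := by
    intro n
    induction n with
    | zero => simp [hS0]
    | succ m ih => rw [Finset.sum_range_succ, ih, hSsucc]
  have hflat : ∀ (f : ℕ → ℝ) (m : ℕ), ∑ j ∈ Finset.range (Cc m), f j
      = ∑ k ∈ Finset.range m, ∑ i ∈ Finset.range (N k), f (Cc k + i) := by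
    intro f m
    induction m with
    | zero => simp [hCc0]
    | succ m ih =>
      rw [hCcsucc, Finset.sum_range_add, ih, Finset.sum_range_succ]
  have hptsval : ∀ k i, i < N k → pts (Cc k + i) = y k i := by
    intro k i hi
    simp only [hpts, hblk3 k i hi, Nat.add_sub_cancel_left]
  have hdwellval : ∀ k i, i < N k → dwell (Cc k + i) = w k i * M k := by
    intro k i hi
    simp only [hdwell, hblk3 k i hi, Nat.add_sub_cancel_left]
  have htval : ∀ m : ℕ, t m = (∑ j ∈ Finset.range m, dwell j) + m := by
    intro m
    simp [ht, Finset.sum_add_distrib]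
  have hTnval : ∀ n, t (Cc (n+1)) = S (n+1) + Cc (n+1) := by
    intro n
    rw [htval]
    congr 1
    rw [hflat dwell (n+1)]
    rw [← hSsum (n+1)]
    apply Finset.sum_congr rfl
    intro k hk
    rw [Finset.sum_congr rfl (fun i hi => hdwellval k i (Finset.mem_range.1 hi)),
      ← Finset.sum_mul, hwsum k, one_mul]
  refine ⟨γ, hγcont, ⟨Cb, hγbdd⟩, hdist0, ⟨fun n => t (Cc (n+1)), ?_, ?_⟩⟩
  · -- the times tend to infinity
    apply tendsto_atTop_mono ?_ tendsto_natCast_atTop_atTop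
    intro n
    calc (n:ℝ) ≤ (Cc (n+1) : ℝ) := by exact_mod_cast le_trans (Nat.le_succ n) (hCck (n+1))
      _ ≤ t (Cc (n+1)) := htge _
  · intro F hFc hFb
    obtain ⟨Cf, hCf⟩ := hFb
    have hCf0 : 0 ≤ Cf := le_trans (abs_nonneg _) (hCf (pts 0))
    have hFγc : ContinuousOn (fun s => F (γ s)) (Set.Ici 0) := hFc.comp_continuousOn hγcont
    have hint : ∀ a b : ℝ, 0 ≤ a → 0 ≤ b →
        IntervalIntegrable (fun s => F (γ s)) MeasureTheory.volume a b := by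
      intro a b ha hb
      apply ContinuousOn.intervalIntegrable
      apply hFγc.mono
      intro x hx
      rcases le_total a b with h | h
      · rw [Set.uIcc_of_le h] at hx; exact le_trans ha hx.1
      · rw [Set.uIcc_of_ge h] at hx; exact le_trans hb hx.1
    have hseg : ∀ j : ℕ, |(∫ s in (t j)..(t (j+1)), F (γ s)) - dwell j * F (pts j)| ≤ Cf := by
      intro j
      have ha : (0:ℝ) ≤ t j := htnn j
      have hd := hdwellnn j
      have hend : t j + dwell j ≤ t (j+1) := by rw [htsucc]; linarith
      have i1 : IntervalIntegrable (fun s => F (γ s)) MeasureTheory.volume (t j)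
          (t j + dwell j) := hint _ _ ha (by linarith)
      have i2 : IntervalIntegrable (fun s => F (γ s)) MeasureTheory.volume (t j + dwell j)
          (t (j+1)) := hint _ _ (by linarith) (htnn (j+1))
      have hsplit : (∫ s in (t j)..(t (j+1)), F (γ s))
          = (∫ s in (t j)..(t j + dwell j), F (γ s))
            + ∫ s in (t j + dwell j)..(t (j+1)), F (γ s) :=
        (intervalIntegral.integral_add_adjacent_intervals i1 i2).symm
      have hconstint : (∫ s in (t j)..(t j + dwell j), F (γ s)) = dwell j * F (pts j) := by
        rw [intervalIntegral.integral_congr (g := fun _ => F (pts j)) ?_]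
        · rw [intervalIntegral.integral_const, smul_eq_mul]; ring_nf
        · intro s hs
          rw [Set.uIcc_of_le (by linarith : t j ≤ t j + dwell j)] at hs
          exact congrArg F (hγconst j s hs.1 hs.2)
      have hrest : |∫ s in (t j + dwell j)..(t (j+1)), F (γ s)| ≤ Cf := by
        have hb := intervalIntegral.norm_integral_le_of_norm_le_const (C := Cf)
          (a := t j + dwell j) (b := t (j+1)) (f := fun s => F (γ s))
          (fun x _ => by rw [Real.norm_eq_abs]; exact hCf _)
        rw [Real.norm_eq_abs] at hb
        have harg : |t (j+1) - (t j + dwell j)| = 1 := by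
          rw [htsucc]; ring_nf; exact abs_one
        rw [harg, mul_one] at hb
        exact hb
      rw [hsplit, hconstint]
      have hcanc : dwell j * F (pts j) + (∫ s in (t j + dwell j)..(t (j+1)), F (γ s))
          - dwell j * F (pts j) = ∫ s in (t j + dwell j)..(t (j+1)), F (γ s) := by ring
      rw [hcanc]
      exact hrest
    have hsum : ∀ m : ℕ, (∫ s in (0:ℝ)..(t m), F (γ s))
        = ∑ j ∈ Finset.range m, ∫ s in (t j)..(t (j+1)), F (γ s) := by
      intro m
      rw [← ht0]
      exact (intervalIntegral.sum_integral_adjacent_intervals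
        (fun k _ => hint _ _ (htnn k) (htnn (k+1)))).symm
    set SF : ℕ → ℝ := fun k => ∑ i ∈ Finset.range (N k), w k i * F (y k i) with hSFdef
    have hSFbd : ∀ k, |SF k| ≤ Cf := by
      intro k
      calc |SF k| ≤ ∑ i ∈ Finset.range (N k), |w k i * F (y k i)| :=
            Finset.abs_sum_le_sum_abs _ _
        _ ≤ ∑ i ∈ Finset.range (N k), w k i * Cf := by
            apply Finset.sum_le_sum
            intro i _
            rw [abs_mul, abs_of_nonneg (hwnn k i)]
            exact mul_le_mul_of_nonneg_left (hCf _) (hwnn k i)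
        _ = Cf := by rw [← Finset.sum_mul, hwsum k, one_mul]
    have hSFlim : Tendsto SF atTop (𝓝 (∫ x, F x ∂(μ : Measure Esp))) := by
      rw [Metric.tendsto_atTop]
      intro ε hε
      obtain ⟨δ, hδ, hUC⟩ := Metric.uniformContinuousOn_iff.1
        (hKc.uniformContinuousOn_of_continuous hFc.continuousOn) (ε/2) (by linarith)
      obtain ⟨k₀, hk₀⟩ : ∃ k₀ : ℕ, 1/((k₀:ℝ)+1) < δ := exists_nat_one_div_lt hδ
      refine ⟨k₀, fun k hk => ?_⟩
      have h1 : 1/((k:ℝ)+1) ≤ 1/((k₀:ℝ)+1) := by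
        apply one_div_le_one_div_of_le (by positivity)
        have : (k₀:ℝ) ≤ (k:ℝ) := Nat.cast_le.2 hk
        linarith
      have happ := happrox k F hFc ⟨Cf, hCf⟩ (ε/2) (by linarith)
        (fun a ha b hb hab => le_of_lt (hUC a ha b hb (lt_of_lt_of_le hab (le_trans h1 hk₀.le))))
      rw [Real.dist_eq]
      calc |SF k - ∫ x, F x ∂(μ : Measure Esp)| ≤ ε/2 := happ
        _ < ε := by linarith
    have hblockint : ∀ n : ℕ, ∑ j ∈ Finset.range (Cc (n+1)), dwell j * F (pts j)
        = ∑ k ∈ Finset.range (n+1), M k * SF k := by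
      intro n
      rw [hflat (fun j => dwell j * F (pts j)) (n+1)]
      apply Finset.sum_congr rfl
      intro k _
      simp only [hSFdef]
      rw [Finset.mul_sum]
      apply Finset.sum_congr rfl
      intro i hi
      rw [hdwellval k i (Finset.mem_range.1 hi), hptsval k i (Finset.mem_range.1 hi)]
      ring
    have hEn : ∀ n : ℕ, |(∫ s in (0:ℝ)..(t (Cc (n+1))), F (γ s))
        - ∑ k ∈ Finset.range (n+1), M k * SF k| ≤ Cf * Cc (n+1) := by
      intro n
      rw [hsum, ← hblockint, ← Finset.sum_sub_distrib]
      calc |∑ j ∈ Finset.range (Cc (n+1)),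
            ((∫ s in (t j)..(t (j+1)), F (γ s)) - dwell j * F (pts j))|
          ≤ ∑ j ∈ Finset.range (Cc (n+1)),
            |(∫ s in (t j)..(t (j+1)), F (γ s)) - dwell j * F (pts j)| :=
            Finset.abs_sum_le_sum_abs _ _
        _ ≤ ∑ _j ∈ Finset.range (Cc (n+1)), Cf := Finset.sum_le_sum (fun j _ => hseg j)
        _ = Cf * Cc (n+1) := by
            rw [Finset.sum_const, Finset.card_range, nsmul_eq_mul]; ring
    have hkey : ∀ n : ℕ, |(1 / t (Cc (n+1))) * (∫ s in (0:ℝ)..(t (Cc (n+1))), F (γ s)) - SF n|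
        ≤ 2 * Cf / ((n:ℝ)+1) := by
      intro n
      have hTnval' := hTnval n
      have hMn := hMpos n
      have hSn := hSnn n
      have hCcn : (0:ℝ) ≤ (Cc (n+1):ℝ) := Nat.cast_nonneg _
      have hTnM : M n ≤ t (Cc (n+1)) := by rw [hTnval', hSsucc n]; linarith
      have hTpos : 0 < t (Cc (n+1)) := lt_of_lt_of_le hMn hTnM
      have htail : |∑ k ∈ Finset.range n, M k * SF k| ≤ S n * Cf := by
        calc |∑ k ∈ Finset.range n, M k * SF k|
            ≤ ∑ k ∈ Finset.range n, |M k * SF k| := Finset.abs_sum_le_sum_abs _ _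
          _ ≤ ∑ k ∈ Finset.range n, M k * Cf := by
              apply Finset.sum_le_sum
              intro k _
              rw [abs_mul, abs_of_nonneg (hMpos k).le]
              exact mul_le_mul_of_nonneg_left (hSFbd k) (hMpos k).le
          _ = S n * Cf := by rw [← Finset.sum_mul, hSsum n]
      have hE := hEn n
      have habs2 : |(S n + (Cc (n+1):ℝ)) * SF n| ≤ (S n + Cc (n+1)) * Cf := by
        rw [abs_mul, abs_of_nonneg (by linarith)]
        exact mul_le_mul_of_nonneg_left (hSFbd n) (by linarith)
      have hTSF : t (Cc (n+1)) * SF n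
          = M n * SF n + (S n + (Cc (n+1):ℝ)) * SF n := by
        rw [hTnval', hSsucc n]; ring
      have hdecomp : (∫ s in (0:ℝ)..(t (Cc (n+1))), F (γ s)) - t (Cc (n+1)) * SF n
          = ((∫ s in (0:ℝ)..(t (Cc (n+1))), F (γ s)) - ∑ k ∈ Finset.range (n+1), M k * SF k)
            + (∑ k ∈ Finset.range n, M k * SF k) - (S n + (Cc (n+1):ℝ)) * SF n := by
        rw [hTSF, Finset.sum_range_succ]; ring
      have hR : |(∫ s in (0:ℝ)..(t (Cc (n+1))), F (γ s)) - t (Cc (n+1)) * SF n|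
          ≤ 2 * Cf * (S n + (Cc (n+1):ℝ) + 1) := by
        rw [hdecomp]
        have h1 := abs_add_le ((∫ s in (0:ℝ)..(t (Cc (n+1))), F (γ s))
          - ∑ k ∈ Finset.range (n+1), M k * SF k) (∑ k ∈ Finset.range n, M k * SF k)
        have h2 := abs_sub (((∫ s in (0:ℝ)..(t (Cc (n+1))), F (γ s))
          - ∑ k ∈ Finset.range (n+1), M k * SF k) + ∑ k ∈ Finset.range n, M k * SF k)
          ((S n + (Cc (n+1):ℝ)) * SF n)
        nlinarith [hE, htail, habs2]
      have hfact : (1 / t (Cc (n+1))) * (∫ s in (0:ℝ)..(t (Cc (n+1))), F (γ s)) - SF n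
          = (1 / t (Cc (n+1))) * ((∫ s in (0:ℝ)..(t (Cc (n+1))), F (γ s))
            - t (Cc (n+1)) * SF n) := by
        field_simp
      rw [hfact, abs_mul, abs_of_nonneg (le_of_lt (one_div_pos.2 hTpos))]
      have hMval : M n = ((n:ℝ)+1) * (S n + (Cc (n+1):ℝ) + 1) := by simp only [hM]
      have hP : (0:ℝ) < S n + (Cc (n+1):ℝ) + 1 := by linarith
      have step1 : (1 / t (Cc (n+1))) * |(∫ s in (0:ℝ)..(t (Cc (n+1))), F (γ s))
          - t (Cc (n+1)) * SF n| ≤ (1 / M n) * (2 * Cf * (S n + (Cc (n+1):ℝ) + 1)) := by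
        apply mul_le_mul
        · apply one_div_le_one_div_of_le hMn hTnM
        · exact hR
        · exact abs_nonneg _
        · exact le_of_lt (one_div_pos.2 hMn)
      have step2 : (1 / M n) * (2 * Cf * (S n + (Cc (n+1):ℝ) + 1)) = 2 * Cf / ((n:ℝ)+1) := by
        have hP0 : (S n + (Cc (n+1):ℝ) + 1) ≠ 0 := ne_of_gt hP
        have hn0 : ((n:ℝ)+1) ≠ 0 := by positivity
        rw [hMval, one_div, mul_inv, div_eq_mul_inv]
        calc ((n:ℝ)+1)⁻¹ * (S n + (Cc (n+1):ℝ) + 1)⁻¹ * (2 * Cf * (S n + (Cc (n+1):ℝ) + 1))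
            = (2 * Cf) * ((n:ℝ)+1)⁻¹
              * ((S n + (Cc (n+1):ℝ) + 1)⁻¹ * (S n + (Cc (n+1):ℝ) + 1)) := by ring
          _ = 2 * Cf * ((n:ℝ)+1)⁻¹ := by rw [inv_mul_cancel₀ hP0, mul_one]
      exact le_of_le_of_eq step1 step2
    have hzero : Tendsto (fun n => (1 / t (Cc (n+1)))
        * (∫ s in (0:ℝ)..(t (Cc (n+1))), F (γ s)) - SF n) atTop (𝓝 0) := by
      have h1 : Tendsto (fun n : ℕ => 2 * Cf * (1/((n:ℝ)+1))) atTop (𝓝 (2 * Cf * 0)) :=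
        tendsto_one_div_add_atTop_nhds_zero_nat.const_mul _
      rw [mul_zero] at h1
      have hb : Tendsto (fun n : ℕ => 2 * Cf / ((n:ℝ)+1)) atTop (𝓝 0) := by
        have heq : (fun n : ℕ => 2 * Cf / ((n:ℝ)+1))
            = fun n : ℕ => 2 * Cf * (1/((n:ℝ)+1)) := by
          funext n; rw [mul_one_div]
        rw [heq]
        exact h1
      refine squeeze_zero_norm ?_ hb
      intro n
      rw [Real.norm_eq_abs]
      exact hkey n
    have hfinal := hzero.add hSFlim
    rw [zero_add] at hfinal
    have heq2 : (fun n => (1 / t (Cc (n+1)))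
          * (∫ s in (0:ℝ)..(t (Cc (n+1))), F (γ s)) - SF n + SF n)
        = fun n => (1 / t (Cc (n+1))) * ∫ s in (0:ℝ)..(t (Cc (n+1))), F (γ s) := by
      funext n; ring
    rw [heq2] at hfinal
    exact hfinal

end Helpers

/-- For a nonempty compact connected `K ⊆ ℝ^d`, a Borel probability measure `μ`
satisfies `μ(K) = 1` iff there is a bounded continuous curve `γ : [0,∞) → ℝ^d`
accumulating on `K` (i.e. `dist(γ(s),K) → 0` as `s → ∞`) with `μ ∈ M(γ)`. -/
theorem stmt_8 (d : ℕ) (hd : 1 ≤ d) (K : Set (EuclideanSpace ℝ (Fin d)))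
    (hKne : K.Nonempty) (hKc : IsCompact K) (hKconn : IsConnected K)
    (μ : ProbabilityMeasure (EuclideanSpace ℝ (Fin d))) :
    (μ : Measure (EuclideanSpace ℝ (Fin d))) K = 1 ↔
      ∃ γ : ℝ → EuclideanSpace ℝ (Fin d),
        ContinuousOn γ (Set.Ici 0) ∧
        (∃ C, ∀ s ∈ Set.Ici (0 : ℝ), ‖γ s‖ ≤ C) ∧
        Tendsto (fun s => Metric.infDist (γ s) K) atTop (𝓝 0) ∧
        μ ∈ cesaroLimits γ := by
  constructor
  · intro hμK
    exact forward_dir hKne hKc hKconn μ hμK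
  · rintro ⟨γ, hγc, -, hdist, hμ⟩
    exact reverse_dir hKne hKc.isClosed μ hγc hdist hμ
end

section
/- Assume hypothesis H0. Then the following are equivalent: (i) there exists a continuous observable O : ℝ^d → ℝ such that liminf_{κ→0⁺} O(φ_κ(t)) < limsup_{κ→0⁺} O(φ_κ(t)) (spontaneous stochasticity); (ii) there exist two solutions ψ₁, ψ₂ of the inviscid problem (P₀) with ψ₁(t) ≠ ψ₂(t), together with two sequences κ_j^{(1)} → 0 and κ_j^{(2)} → 0 such that φ_{κ_j^{(p)}} → ψ_p uniformly on [0,t] for p = 1,2 (finite-time trajectory splitting / lack of a selection principle). -/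
open Filter Topology MeasureTheory Set

section helpers
variable {E : Type*} [NormedAddCommGroup E] [NormedSpace ℝ E] [FiniteDimensional ℝ E]

lemma ss_aux_ball (x₀ : E) (t : ℝ) (ht : 0 < t)
    (f : E → ℝ → E)
    (C : ℝ) (hbound : ∀ x κ, 0 < κ → ‖f x κ‖ ≤ C)
    (φ : ℝ → ℝ → E)
    (hφ0 : ∀ κ, 0 < κ → φ κ 0 = x₀)
    (hφ' : ∀ κ, 0 < κ → ∀ s ∈ Set.Icc 0 t, HasDerivAt (φ κ) (f (φ κ s) κ) s) :
    ∀ κ', 0 < κ' → ∀ s ∈ Set.Icc 0 t, φ κ' s ∈ Metric.closedBall x₀ (C * t) := by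
  have hC0 : 0 ≤ C := le_trans (norm_nonneg _) (hbound x₀ 1 one_pos)
  set L : NNReal := ⟨C, hC0⟩ with hL
  have hLC : (L : ℝ) = C := rfl
  have hlip : ∀ κ', 0 < κ' → LipschitzOnWith L (φ κ') (Icc 0 t) := by
    intro κ' hκ'
    refine (convex_Icc 0 t).lipschitzOnWith_of_nnnorm_hasDerivWithin_le
      (f' := fun s => f (φ κ' s) κ')
      (fun s hs => (hφ' κ' hκ' s hs).hasDerivWithinAt) (fun s hs => ?_)
    rw [← NNReal.coe_le_coe, coe_nnnorm, hLC]
    exact hbound _ _ hκ'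
  intro κ' hκ' s hs
  have h0 : (0:ℝ) ∈ Icc 0 t := ⟨le_refl _, ht.le⟩
  have := (hlip κ' hκ').dist_le_mul s hs 0 h0
  rw [hφ0 κ' hκ'] at this
  refine Metric.mem_closedBall.2 (this.trans ?_)
  rw [hLC, Real.dist_eq, sub_zero, abs_of_nonneg hs.1]
  exact mul_le_mul_of_nonneg_left hs.2 hC0

lemma ss_aux_extract (x₀ : E) (t : ℝ) (ht : 0 < t)
    (f : E → ℝ → E) (f₀ : E → E)
    (hf : ContinuousOn (fun p : E × ℝ => f p.1 p.2) (Set.univ ×ˢ Set.Ioi 0))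
    (hf₀ : Continuous f₀)
    (C : ℝ) (hbound : ∀ x κ, 0 < κ → ‖f x κ‖ ≤ C)
    (hconv : ∀ ε > (0:ℝ), ∃ δ > (0:ℝ), ∀ κ, 0 < κ → κ < δ → ∀ x, ‖f x κ - f₀ x‖ ≤ ε)
    (φ : ℝ → ℝ → E)
    (hφ0 : ∀ κ, 0 < κ → φ κ 0 = x₀)
    (hφ' : ∀ κ, 0 < κ → ∀ s ∈ Set.Icc 0 t, HasDerivAt (φ κ) (f (φ κ s) κ) s)
    (κ : ℕ → ℝ) (hκpos : ∀ j, 0 < κ j) (hκ0 : Tendsto κ atTop (𝓝 0)) :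
    ∃ (ψ : ℝ → E) (σ : ℕ → ℕ), StrictMono σ ∧ ψ 0 = x₀ ∧
      (∀ s ∈ Set.Icc 0 t, HasDerivAt ψ (f₀ (ψ s)) s) ∧
      TendstoUniformlyOn (fun j s => φ (κ (σ j)) s) ψ atTop (Set.Icc 0 t) := by
  have hC0 : 0 ≤ C := le_trans (norm_nonneg _) (hbound x₀ 1 one_pos)
  set L : NNReal := ⟨C, hC0⟩ with hL
  have hLC : (L : ℝ) = C := rfl
  -- Lipschitz bound on each trajectory
  have hlip : ∀ κ', 0 < κ' → LipschitzOnWith L (φ κ') (Icc 0 t) := by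
    intro κ' hκ'
    refine (convex_Icc 0 t).lipschitzOnWith_of_nnnorm_hasDerivWithin_le
      (f' := fun s => f (φ κ' s) κ')
      (fun s hs => (hφ' κ' hκ' s hs).hasDerivWithinAt) (fun s hs => ?_)
    rw [← NNReal.coe_le_coe, coe_nnnorm, hLC]
    exact hbound _ _ hκ'
  set K : Set E := Metric.closedBall x₀ (C * t) with hKdef
  have hK : IsCompact K := isCompact_closedBall _ _
  have hmem : ∀ κ', 0 < κ' → ∀ s ∈ Icc 0 t, φ κ' s ∈ K := by
    intro κ' hκ' s hs
    have h0 : (0:ℝ) ∈ Icc 0 t := ⟨le_refl _, ht.le⟩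
    have := (hlip κ' hκ').dist_le_mul s hs 0 h0
    rw [hφ0 κ' hκ'] at this
    refine Metric.mem_closedBall.2 (this.trans ?_)
    rw [hLC, Real.dist_eq, sub_zero, abs_of_nonneg hs.1]
    exact mul_le_mul_of_nonneg_left hs.2 hC0
  haveI : CompactSpace (Icc (0:ℝ) t) := isCompact_iff_compactSpace.mp isCompact_Icc
  -- Arzelà–Ascoli
  set S : Set C(Icc (0:ℝ) t, E) := {g | LipschitzWith L g ∧ ∀ x, g x ∈ K} with hSdef
  have hS : IsCompact S := by
    apply ArzelaAscoli.isCompact_of_equicontinuous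
    · have himg : ContinuousMap.toFun '' S
          = {u : Icc (0:ℝ) t → E | LipschitzWith L u ∧ ∀ x, u x ∈ K} := by
        ext u
        constructor
        · rintro ⟨g, hg, rfl⟩; exact hg
        · rintro ⟨h1, h2⟩; exact ⟨⟨u, h1.continuous⟩, ⟨h1, h2⟩, rfl⟩
      rw [himg]
      have h1 : IsClosed {u : Icc (0:ℝ) t → E | LipschitzWith L u} := by
        have e : {u : Icc (0:ℝ) t → E | LipschitzWith L u}
            = ⋂ (x) (y), {u : Icc (0:ℝ) t → E | dist (u x) (u y) ≤ L * dist x y} := by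
          ext u
          simp only [lipschitzWith_iff_dist_le_mul, Set.mem_setOf_eq, Set.mem_iInter]
        rw [e]
        exact isClosed_iInter fun x => isClosed_iInter fun y =>
          isClosed_le ((continuous_apply x).dist (continuous_apply y)) continuous_const
      have h2 : IsClosed {u : Icc (0:ℝ) t → E | ∀ x, u x ∈ K} := by
        have e : {u : Icc (0:ℝ) t → E | ∀ x, u x ∈ K}
            = ⋂ x, (fun u : Icc (0:ℝ) t → E => u x) ⁻¹' K := by
          ext u; simp
        rw [e]
        exact isClosed_iInter fun x => Metric.isClosed_closedBall.preimage (continuous_apply x)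
      have hclosed : IsClosed {u : Icc (0:ℝ) t → E | LipschitzWith L u ∧ ∀ x, u x ∈ K} := by
        rw [Set.setOf_and]; exact h1.inter h2
      exact (isCompact_univ_pi fun _ => hK).of_isClosed_subset hclosed
        (fun u hu => Set.mem_univ_pi.2 fun x => hu.2 x)
    · apply Metric.equicontinuous_of_continuity_modulus (fun r => C * r)
      · have : Continuous fun r : ℝ => C * r := continuous_const.mul continuous_id
        simpa using this.tendsto 0
      · intro x y i
        have := i.2.1.dist_le_mul x y
        rwa [hLC] at this
  -- the sequence of restricted trajectories
  have hcontg : ∀ j, Continuous ((Icc (0:ℝ) t).restrict (φ (κ j))) :=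
    fun j => ((hlip (κ j) (hκpos j)).to_restrict).continuous
  set g : ℕ → C(Icc (0:ℝ) t, E) := fun j => ⟨(Icc (0:ℝ) t).restrict (φ (κ j)), hcontg j⟩ with hgdef
  have hgS : ∀ j, g j ∈ S := fun j =>
    ⟨(hlip (κ j) (hκpos j)).to_restrict, fun x => hmem (κ j) (hκpos j) x x.2⟩
  obtain ⟨ψc, hψcS, σ, hσ, hconv'⟩ := hS.tendsto_subseq hgS
  have huc : TendstoUniformly (fun j (x : Icc (0:ℝ) t) => φ (κ (σ j)) x) (⇑ψc) atTop :=
    ContinuousMap.tendsto_iff_tendstoUniformly.mp hconv'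
  set ψ₀ : ℝ → E := fun s => ψc (Set.projIcc 0 t ht.le s) with hψ₀def
  have hψ₀cont : Continuous ψ₀ := ψc.continuous.comp continuous_projIcc
  have hTU : TendstoUniformlyOn (fun j s => φ (κ (σ j)) s) ψ₀ atTop (Icc 0 t) := by
    rw [tendstoUniformlyOn_iff_tendstoUniformly_comp_coe]
    have : (ψ₀ ∘ ((↑) : Icc (0:ℝ) t → ℝ)) = ⇑ψc := by
      funext x
      simp only [Function.comp_apply, hψ₀def, Set.projIcc_val]
    rw [this]
    exact huc
  have hφcont : ∀ κ', 0 < κ' → ContinuousOn (φ κ') (Icc 0 t) :=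
    fun κ' hκ' s hs => ((hφ' κ' hκ' s hs).continuousAt).continuousWithinAt
  have hInt : ∀ κ', 0 < κ' → ∀ s ∈ Icc (0:ℝ) t,
      IntervalIntegrable (fun r => f (φ κ' r) κ') volume 0 s := by
    intro κ' hκ' s hs
    apply ContinuousOn.intervalIntegrable
    rw [uIcc_of_le hs.1]
    have hsub : Icc (0:ℝ) s ⊆ Icc 0 t := Icc_subset_Icc le_rfl hs.2
    exact hf.comp (((hφcont κ' hκ').mono hsub).prodMk continuousOn_const)
      (fun r _ => ⟨Set.mem_univ _, hκ'⟩)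
  have hIE : ∀ κ', 0 < κ' → ∀ s ∈ Icc (0:ℝ) t,
      φ κ' s = x₀ + ∫ r in (0:ℝ)..s, f (φ κ' r) κ' := by
    intro κ' hκ' s hs
    have heval : (∫ r in (0:ℝ)..s, f (φ κ' r) κ') = φ κ' s - φ κ' 0 := by
      refine intervalIntegral.integral_eq_sub_of_hasDerivAt (fun r hr => ?_) (hInt κ' hκ' s hs)
      rw [uIcc_of_le hs.1] at hr
      exact hφ' κ' hκ' r (Icc_subset_Icc le_rfl hs.2 hr)
    rw [heval, hφ0 κ' hκ']
    abel
  set h : ℝ → E := fun r => f₀ (ψ₀ r) with hhdef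
  have hcont_h : Continuous h := hf₀.comp hψ₀cont
  have hψ₀mem : ∀ r, ψ₀ r ∈ K := fun r => hψcS.2 _
  have hkey : ∀ ε > (0:ℝ), ∀ᶠ j in atTop, ∀ r ∈ Icc (0:ℝ) t,
      ‖f (φ (κ (σ j)) r) (κ (σ j)) - h r‖ ≤ ε := by
    intro ε hε
    obtain ⟨δ, hδpos, hδ⟩ := hconv (ε/2) (by positivity)
    have hUC := hK.uniformContinuousOn_of_continuous hf₀.continuousOn
    rw [Metric.uniformContinuousOn_iff] at hUC
    obtain ⟨δ', hδ'pos, hδ'⟩ := hUC (ε/2) (by positivity)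
    have hev1 : ∀ᶠ j in atTop, κ (σ j) < δ :=
      (hκ0.comp hσ.tendsto_atTop).eventually_lt_const hδpos
    have hev2 : ∀ᶠ j in atTop, ∀ r ∈ Icc (0:ℝ) t, dist (ψ₀ r) (φ (κ (σ j)) r) < δ' :=
      (Metric.tendstoUniformlyOn_iff.mp hTU) δ' hδ'pos
    filter_upwards [hev1, hev2] with j h1 h2 r hr
    have hmemj : φ (κ (σ j)) r ∈ K := hmem _ (hκpos _) r hr
    have h3 : ‖f (φ (κ (σ j)) r) (κ (σ j)) - f₀ (φ (κ (σ j)) r)‖ ≤ ε/2 :=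
      hδ _ (hκpos _) h1 _
    have h4 : dist (f₀ (φ (κ (σ j)) r)) (f₀ (ψ₀ r)) < ε/2 :=
      hδ' _ hmemj _ (hψ₀mem r) (by rw [dist_comm]; exact h2 r hr)
    have htri := dist_triangle (f (φ (κ (σ j)) r) (κ (σ j))) (f₀ (φ (κ (σ j)) r)) (h r)
    rw [dist_eq_norm, dist_eq_norm] at htri
    refine htri.trans ?_
    have h4' : ‖f₀ (φ (κ (σ j)) r) - h r‖ ≤ ε/2 := by
      rw [← dist_eq_norm]
      exact h4.le
    linarith
  have hlimEq : ∀ s ∈ Icc (0:ℝ) t, ψ₀ s = x₀ + ∫ r in (0:ℝ)..s, h r := by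
    intro s hs
    have l1 : Tendsto (fun j => φ (κ (σ j)) s) atTop (𝓝 (ψ₀ s)) := hTU.tendsto_at hs
    have l2 : Tendsto (fun j => φ (κ (σ j)) s) atTop
        (𝓝 (x₀ + ∫ r in (0:ℝ)..s, h r)) := by
      rw [Metric.tendsto_atTop]
      intro ε hε
      have hε2 : 0 < ε / (2 * (t + 1)) := by positivity
      obtain ⟨N, hN⟩ := eventually_atTop.mp (hkey _ hε2)
      refine ⟨N, fun j hj => ?_⟩
      rw [hIE _ (hκpos _) s hs, dist_eq_norm]
      have hsubint : (∫ r in (0:ℝ)..s, f (φ (κ (σ j)) r) (κ (σ j)))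
            - ∫ r in (0:ℝ)..s, h r
          = ∫ r in (0:ℝ)..s, (f (φ (κ (σ j)) r) (κ (σ j)) - h r) :=
        (intervalIntegral.integral_sub (hInt _ (hκpos _) s hs)
          (hcont_h.intervalIntegrable 0 s)).symm
      have hnorm : ‖∫ r in (0:ℝ)..s, (f (φ (κ (σ j)) r) (κ (σ j)) - h r)‖
          ≤ (ε / (2*(t+1))) * |s - 0| := by
        refine intervalIntegral.norm_integral_le_of_norm_le_const (fun r hr => ?_)
        rw [uIoc_of_le hs.1] at hr
        exact hN j hj r ⟨hr.1.le, hr.2.trans hs.2⟩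
      have heq2 : x₀ + (∫ r in (0:ℝ)..s, f (φ (κ (σ j)) r) (κ (σ j)))
            - (x₀ + ∫ r in (0:ℝ)..s, h r)
          = (∫ r in (0:ℝ)..s, f (φ (κ (σ j)) r) (κ (σ j))) - ∫ r in (0:ℝ)..s, h r := by
        abel
      rw [heq2, hsubint]
      refine hnorm.trans_lt ?_
      rw [sub_zero, abs_of_nonneg hs.1]
      have h5 : (ε / (2*(t+1))) * s ≤ (ε / (2*(t+1))) * t :=
        mul_le_mul_of_nonneg_left hs.2 hε2.le
      refine h5.trans_lt ?_
      rw [div_mul_eq_mul_div, div_lt_iff₀ (by positivity)]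
      nlinarith
    exact tendsto_nhds_unique l1 l2
  set ψ : ℝ → E := fun s => x₀ + ∫ r in (0:ℝ)..s, h r with hψdef
  have hψeq : ∀ s ∈ Icc (0:ℝ) t, ψ s = ψ₀ s := fun s hs => (hlimEq s hs).symm
  refine ⟨ψ, σ, hσ, ?_, ?_, ?_⟩
  · simp [hψdef, intervalIntegral.integral_same]
  · intro s hs
    have hd : HasDerivAt (fun u => ∫ r in (0:ℝ)..u, h r) (h s) s :=
      intervalIntegral.integral_hasDerivAt_right (hcont_h.intervalIntegrable 0 s)
        (hcont_h.stronglyMeasurableAtFilter volume (𝓝 s)) hcont_h.continuousAt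
    have hd' : HasDerivAt ψ (h s) s := hd.const_add x₀
    have hval : h s = f₀ (ψ s) := by rw [hψeq s hs]
    rwa [hval] at hd'
  · exact hTU.congr_right (fun s hs => (hψeq s hs).symm)

end helpers

/-- Under hypothesis (H0) — `f(·,κ)` continuous and uniformly bounded, converging
uniformly to `f₀` as `κ → 0⁺`, with the regularised Cauchy problems well-posed with
unique solutions `φ_κ` on `[0,t]` — the following are equivalent:
(i) spontaneous stochasticity: there is a continuous observable `O` with
`liminf_{κ→0⁺} O(φ_κ(t)) < limsup_{κ→0⁺} O(φ_κ(t))`;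
(ii) finite-time trajectory splitting / lack of a selection principle: there are two
solutions `ψ₁, ψ₂` of the inviscid problem with `ψ₁(t) ≠ ψ₂(t)` and two sequences
`κ_j^{(p)} → 0⁺` with `φ_{κ_j^{(p)}} → ψ_p` uniformly on `[0,t]`. -/
theorem stmt_10 (d : ℕ) (hd : 1 ≤ d) (x₀ : EuclideanSpace ℝ (Fin d)) (t : ℝ) (ht : 0 < t)
    (f : EuclideanSpace ℝ (Fin d) → ℝ → EuclideanSpace ℝ (Fin d))
    (f₀ : EuclideanSpace ℝ (Fin d) → EuclideanSpace ℝ (Fin d))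
    (hf : ContinuousOn (fun p : EuclideanSpace ℝ (Fin d) × ℝ => f p.1 p.2)
      (Set.univ ×ˢ Set.Ioi 0))
    (hf₀ : Continuous f₀)
    (C : ℝ) (hbound : ∀ x κ, 0 < κ → ‖f x κ‖ ≤ C)
    (hconv : ∀ ε > (0:ℝ), ∃ δ > (0:ℝ), ∀ κ, 0 < κ → κ < δ → ∀ x, ‖f x κ - f₀ x‖ ≤ ε)
    (φ : ℝ → ℝ → EuclideanSpace ℝ (Fin d))
    (hφ0 : ∀ κ, 0 < κ → φ κ 0 = x₀)
    (hφ' : ∀ κ, 0 < κ → ∀ s ∈ Set.Icc 0 t, HasDerivAt (φ κ) (f (φ κ s) κ) s)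
    (huniq : ∀ κ, 0 < κ → ∀ ψ : ℝ → EuclideanSpace ℝ (Fin d), ψ 0 = x₀ →
      (∀ s ∈ Set.Icc 0 t, HasDerivAt ψ (f (ψ s) κ) s) → ∀ s ∈ Set.Icc 0 t, ψ s = φ κ s) :
    (∃ O : EuclideanSpace ℝ (Fin d) → ℝ, Continuous O ∧
        Filter.liminf (fun κ => O (φ κ t)) (𝓝[>] (0:ℝ))
          < Filter.limsup (fun κ => O (φ κ t)) (𝓝[>] (0:ℝ))) ↔
    (∃ ψ₁ ψ₂ : ℝ → EuclideanSpace ℝ (Fin d),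
        ψ₁ 0 = x₀ ∧ (∀ s ∈ Set.Icc 0 t, HasDerivAt ψ₁ (f₀ (ψ₁ s)) s) ∧
        ψ₂ 0 = x₀ ∧ (∀ s ∈ Set.Icc 0 t, HasDerivAt ψ₂ (f₀ (ψ₂ s)) s) ∧
        ψ₁ t ≠ ψ₂ t ∧
        ∃ κ₁ κ₂ : ℕ → ℝ,
          (∀ j, 0 < κ₁ j) ∧ (∀ j, 0 < κ₂ j) ∧
          Tendsto κ₁ atTop (𝓝 0) ∧ Tendsto κ₂ atTop (𝓝 0) ∧
          TendstoUniformlyOn (fun j s => φ (κ₁ j) s) ψ₁ atTop (Set.Icc 0 t) ∧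
          TendstoUniformlyOn (fun j s => φ (κ₂ j) s) ψ₂ atTop (Set.Icc 0 t)) := by
  have ht_mem : t ∈ Icc (0:ℝ) t := ⟨ht.le, le_refl t⟩
  have hball := ss_aux_ball x₀ t ht f C hbound φ hφ0 hφ'
  constructor
  · rintro ⟨O, hO, hlt⟩
    set u : ℝ → ℝ := fun κv => O (φ κv t) with hudef
    set a := liminf u (𝓝[>] (0:ℝ)) with hadef
    set b := limsup u (𝓝[>] (0:ℝ)) with hbdef
    obtain ⟨M, hM⟩ := (isCompact_closedBall x₀ (C*t)).exists_bound_of_continuousOn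
      hO.continuousOn
    have humem : ∀ κv, 0 < κv → ‖u κv‖ ≤ M := fun κv hκv =>
      hM _ (hball κv hκv t ht_mem)
    have hbdd_le : IsBoundedUnder (· ≤ ·) (𝓝[>] (0:ℝ)) u := by
      refine ⟨M, ?_⟩
      rw [eventually_map]
      filter_upwards [self_mem_nhdsWithin] with κv hκv
      exact (le_abs_self _).trans (humem κv hκv)
    have hbdd_ge : IsBoundedUnder (· ≥ ·) (𝓝[>] (0:ℝ)) u := by
      refine ⟨-M, ?_⟩
      rw [eventually_map]
      filter_upwards [self_mem_nhdsWithin] with κv hκv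
      exact (neg_abs_le _).trans' (neg_le_neg (humem κv hκv))
    set c₁ := a + (b-a)/3 with hc₁def
    set c₂ := b - (b-a)/3 with hc₂def
    have hab : a < b := hlt
    have hc₁₂ : c₁ < c₂ := by rw [hc₁def, hc₂def]; linarith
    have hfreq1 : ∃ᶠ κv in 𝓝[>] (0:ℝ), u κv < c₁ :=
      frequently_lt_of_liminf_lt hbdd_le.isCoboundedUnder_ge (by rw [hc₁def]; linarith)
    have hfreq2 : ∃ᶠ κv in 𝓝[>] (0:ℝ), c₂ < u κv :=
      frequently_lt_of_lt_limsup hbdd_ge.isCoboundedUnder_le (by rw [hc₂def]; linarith)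
    have hseq : ∀ (p : ℝ → Prop), (∃ᶠ κv in 𝓝[>] (0:ℝ), p κv) →
        ∀ j:ℕ, ∃ κv, (0 < κv ∧ κv < 1/((j:ℝ)+1)) ∧ p κv := by
      intro p hp j
      have hIoo : Set.Ioo (0:ℝ) (1/((j:ℝ)+1)) ∈ 𝓝[>] (0:ℝ) :=
        Ioo_mem_nhdsGT_of_mem ⟨le_refl 0, by positivity⟩
      obtain ⟨κv, h1, h2⟩ :=
        ((hp.and_eventually (eventually_of_mem hIoo (fun x hx => hx)))).exists
      exact ⟨κv, ⟨h2.1, h2.2⟩, h1⟩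
    choose κ₁ hκ₁ hu1 using hseq _ hfreq1
    choose κ₂ hκ₂ hu2 using hseq _ hfreq2
    have hκ₁pos : ∀ j, 0 < κ₁ j := fun j => (hκ₁ j).1
    have hκ₂pos : ∀ j, 0 < κ₂ j := fun j => (hκ₂ j).1
    have hlim0 : ∀ (κ' : ℕ → ℝ), (∀ j, 0 < κ' j) → (∀ j, κ' j < 1/((j:ℝ)+1)) →
        Tendsto κ' atTop (𝓝 0) := by
      intro κ' hpos hlt'
      refine tendsto_of_tendsto_of_tendsto_of_le_of_le tendsto_const_nhds
        tendsto_one_div_add_atTop_nhds_zero_nat (fun j => (hpos j).le)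
        (fun j => (hlt' j).le)
    have hκ₁0 : Tendsto κ₁ atTop (𝓝 0) := hlim0 κ₁ hκ₁pos (fun j => (hκ₁ j).2)
    have hκ₂0 : Tendsto κ₂ atTop (𝓝 0) := hlim0 κ₂ hκ₂pos (fun j => (hκ₂ j).2)
    obtain ⟨ψ₁, σ₁, hσ₁, hψ₁0, hψ₁d, hTU₁⟩ := ss_aux_extract x₀ t ht f f₀ hf hf₀ C hbound
      hconv φ hφ0 hφ' κ₁ hκ₁pos hκ₁0
    obtain ⟨ψ₂, σ₂, hσ₂, hψ₂0, hψ₂d, hTU₂⟩ := ss_aux_extract x₀ t ht f f₀ hf hf₀ C hbound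
      hconv φ hφ0 hφ' κ₂ hκ₂pos hκ₂0
    have lim1 : Tendsto (fun j => O (φ (κ₁ (σ₁ j)) t)) atTop (𝓝 (O (ψ₁ t))) :=
      (hO.tendsto _).comp (hTU₁.tendsto_at ht_mem)
    have lim2 : Tendsto (fun j => O (φ (κ₂ (σ₂ j)) t)) atTop (𝓝 (O (ψ₂ t))) :=
      (hO.tendsto _).comp (hTU₂.tendsto_at ht_mem)
    have le1 : O (ψ₁ t) ≤ c₁ :=
      le_of_tendsto lim1 (Eventually.of_forall fun j => (hu1 (σ₁ j)).le)
    have ge2 : c₂ ≤ O (ψ₂ t) :=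
      ge_of_tendsto lim2 (Eventually.of_forall fun j => (hu2 (σ₂ j)).le)
    have hne : ψ₁ t ≠ ψ₂ t := by
      intro heq
      rw [heq] at le1
      linarith
    exact ⟨ψ₁, ψ₂, hψ₁0, hψ₁d, hψ₂0, hψ₂d, hne, κ₁ ∘ σ₁, κ₂ ∘ σ₂,
      fun j => hκ₁pos _, fun j => hκ₂pos _,
      hκ₁0.comp hσ₁.tendsto_atTop, hκ₂0.comp hσ₂.tendsto_atTop, hTU₁, hTU₂⟩
  · rintro ⟨ψ₁, ψ₂, hψ₁0, hψ₁d, hψ₂0, hψ₂d, hne, κ₁, κ₂, hκ₁pos, hκ₂pos, hκ₁0, hκ₂0,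
      hTU₁, hTU₂⟩
    refine ⟨fun x => dist x (ψ₁ t), continuous_id.dist continuous_const, ?_⟩
    set u : ℝ → ℝ := fun κv => dist (φ κv t) (ψ₁ t) with hudef
    set D := dist (ψ₂ t) (ψ₁ t) with hDdef
    have hD : 0 < D := dist_pos.2 (Ne.symm hne)
    have hmap1 : Tendsto κ₁ atTop (𝓝[>] (0:ℝ)) :=
      tendsto_nhdsWithin_of_tendsto_nhds_of_eventually_within _ hκ₁0
        (Eventually.of_forall hκ₁pos)
    have hmap2 : Tendsto κ₂ atTop (𝓝[>] (0:ℝ)) :=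
      tendsto_nhdsWithin_of_tendsto_nhds_of_eventually_within _ hκ₂0
        (Eventually.of_forall hκ₂pos)
    have hcd : Continuous fun x : EuclideanSpace ℝ (Fin d) => dist x (ψ₁ t) :=
      continuous_id.dist continuous_const
    have lim1 : Tendsto (u ∘ κ₁) atTop (𝓝 0) := by
      have h5 : Tendsto (fun j => φ (κ₁ j) t) atTop (𝓝 (ψ₁ t)) := hTU₁.tendsto_at ht_mem
      have h6 := (hcd.tendsto (ψ₁ t)).comp h5
      simpa [hudef, Function.comp_def] using h6
    have lim2 : Tendsto (u ∘ κ₂) atTop (𝓝 D) := by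
      have h5 : Tendsto (fun j => φ (κ₂ j) t) atTop (𝓝 (ψ₂ t)) := hTU₂.tendsto_at ht_mem
      have h6 := (hcd.tendsto (ψ₂ t)).comp h5
      simpa [hudef, hDdef, Function.comp_def] using h6
    have hbdd_ge : IsBoundedUnder (· ≥ ·) (𝓝[>] (0:ℝ)) u :=
      ⟨0, by rw [eventually_map]; exact Eventually.of_forall fun κv => dist_nonneg⟩
    have hbdd_le : IsBoundedUnder (· ≤ ·) (𝓝[>] (0:ℝ)) u := by
      refine ⟨C * t + dist x₀ (ψ₁ t), ?_⟩
      rw [eventually_map]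
      filter_upwards [self_mem_nhdsWithin] with κv hκv
      have hb := hball κv hκv t ht_mem
      rw [Metric.mem_closedBall] at hb
      calc dist (φ κv t) (ψ₁ t) ≤ dist (φ κv t) x₀ + dist x₀ (ψ₁ t) := dist_triangle _ _ _
        _ ≤ C * t + dist x₀ (ψ₁ t) := by linarith
    have hliminf : liminf u (𝓝[>] (0:ℝ)) ≤ 0 := by
      have h1 : liminf u (𝓝[>] (0:ℝ)) ≤ liminf (u ∘ κ₁) atTop := by
        rw [liminf_comp]
        exact liminf_le_liminf_of_le hmap1 hbdd_ge
          (lim1.isBoundedUnder_le.isCoboundedUnder_ge)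
      rw [lim1.liminf_eq] at h1
      exact h1
    have hlimsup : D ≤ limsup u (𝓝[>] (0:ℝ)) := by
      have h2 : limsup (u ∘ κ₂) atTop ≤ limsup u (𝓝[>] (0:ℝ)) := by
        rw [limsup_comp]
        exact limsup_le_limsup_of_le hmap2
          (lim2.isBoundedUnder_ge.isCoboundedUnder_le) hbdd_le
      rw [lim2.limsup_eq] at h2
      exact h2
    calc liminf u (𝓝[>] (0:ℝ)) ≤ 0 := hliminf
      _ < D := hD
      _ ≤ limsup u (𝓝[>] (0:ℝ)) := hlimsup
end

section
/- Assume hypothesis H0 and assume in addition that the inviscid problem (P₀) has exactly one solution φ₀ on [0,t]. Then the regularised solutions converge uniformly to it: sup_{s∈[0,t]} ‖φ_κ(s) − φ₀(s)‖ → 0 as κ → 0⁺. Consequently, for every continuous observable O : ℝ^d → ℝ the limit lim_{κ→0⁺} O(φ_κ(t)) exists and equals O(φ₀(t)). -/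
open Filter Topology MeasureTheory BoundedContinuousFunction

set_option maxHeartbeats 1000000 in
set_option synthInstance.maxHeartbeats 400000 in
/-- Under hypothesis (H0), if in addition the inviscid problem has exactly one
solution `φ₀` on `[0,t]`, then `φ_κ → φ₀` uniformly on `[0,t]` as `κ → 0⁺`, and
consequently for every continuous observable `O`, `O(φ_κ(t)) → O(φ₀(t))`. -/
theorem stmt_11 (d : ℕ) (hd : 1 ≤ d) (x₀ : EuclideanSpace ℝ (Fin d)) (t : ℝ) (ht : 0 < t)
    (f : EuclideanSpace ℝ (Fin d) → ℝ → EuclideanSpace ℝ (Fin d))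
    (f₀ : EuclideanSpace ℝ (Fin d) → EuclideanSpace ℝ (Fin d))
    (hf : ContinuousOn (fun p : EuclideanSpace ℝ (Fin d) × ℝ => f p.1 p.2)
      (Set.univ ×ˢ Set.Ioi 0))
    (hf₀ : Continuous f₀)
    (C : ℝ) (hbound : ∀ x κ, 0 < κ → ‖f x κ‖ ≤ C)
    (hconv : ∀ ε > (0:ℝ), ∃ δ > (0:ℝ), ∀ κ, 0 < κ → κ < δ → ∀ x, ‖f x κ - f₀ x‖ ≤ ε)
    (φ : ℝ → ℝ → EuclideanSpace ℝ (Fin d))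
    (hφ0 : ∀ κ, 0 < κ → φ κ 0 = x₀)
    (hφ' : ∀ κ, 0 < κ → ∀ s ∈ Set.Icc 0 t, HasDerivAt (φ κ) (f (φ κ s) κ) s)
    (huniq : ∀ κ, 0 < κ → ∀ ψ : ℝ → EuclideanSpace ℝ (Fin d), ψ 0 = x₀ →
      (∀ s ∈ Set.Icc 0 t, HasDerivAt ψ (f (ψ s) κ) s) → ∀ s ∈ Set.Icc 0 t, ψ s = φ κ s)
    (φ₀ : ℝ → EuclideanSpace ℝ (Fin d))
    (hφ₀0 : φ₀ 0 = x₀)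
    (hφ₀' : ∀ s ∈ Set.Icc 0 t, HasDerivAt φ₀ (f₀ (φ₀ s)) s)
    (huniq₀ : ∀ ψ : ℝ → EuclideanSpace ℝ (Fin d), ψ 0 = x₀ →
      (∀ s ∈ Set.Icc 0 t, HasDerivAt ψ (f₀ (ψ s)) s) → ∀ s ∈ Set.Icc 0 t, ψ s = φ₀ s) :
    TendstoUniformlyOn (fun κ s => φ κ s) φ₀ (𝓝[>] (0:ℝ)) (Set.Icc 0 t) ∧
    ∀ O : EuclideanSpace ℝ (Fin d) → ℝ, Continuous O →
      Tendsto (fun κ => O (φ κ t)) (𝓝[>] (0:ℝ)) (𝓝 (O (φ₀ t))) := by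
  have hC0 : (0:ℝ) ≤ C := le_trans (norm_nonneg _) (hbound x₀ 1 one_pos)
  -- continuity of `f (·, κ)` for fixed positive κ
  have hfx : ∀ κ : ℝ, 0 < κ → Continuous (fun x => f x κ) := by
    intro κ hκ
    rw [← continuousOn_univ]
    exact (hf.comp ((continuous_id.prodMk continuous_const).continuousOn)
      (fun x _ => ⟨Set.mem_univ _, hκ⟩) :)
  have hφcont : ∀ κ, 0 < κ → ContinuousOn (φ κ) (Set.Icc 0 t) := fun κ hκ s hs =>
    ((hφ' κ hκ s hs).continuousAt).continuousWithinAt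
  have hsub : ∀ s : ℝ, s ∈ Set.Icc 0 t → Set.uIcc (0:ℝ) s ⊆ Set.Icc 0 t := by
    intro s hs
    rw [Set.uIcc_of_le hs.1]
    exact Set.Icc_subset_Icc le_rfl hs.2
  -- integral equation for φ κ
  have eqφ : ∀ κ, 0 < κ → ∀ s ∈ Set.Icc 0 t,
      φ κ s = x₀ + ∫ u in (0:ℝ)..s, f (φ κ u) κ := by
    intro κ hκ s hs
    have h : (∫ u in (0:ℝ)..s, f (φ κ u) κ) = φ κ s - φ κ 0 :=
      intervalIntegral.integral_eq_sub_of_hasDerivAt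
        (fun u hu => hφ' κ hκ u (hsub s hs hu))
        (((hfx κ hκ).comp_continuousOn ((hφcont κ hκ).mono (hsub s hs))).intervalIntegrable)
    rw [hφ0 κ hκ] at h
    rw [h]
    abel
  -- Lipschitz bound for φ κ on [0,t]
  have lip : ∀ κ, 0 < κ → LipschitzOnWith (Real.toNNReal C) (φ κ) (Set.Icc 0 t) := by
    intro κ hκ
    refine Convex.lipschitzOnWith_of_nnnorm_hasDerivWithin_le (convex_Icc 0 t)
      (fun s hs => (hφ' κ hκ s hs).hasDerivWithinAt) ?_
    intro s hs
    rw [← norm_toNNReal]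
    exact Real.toNNReal_le_toNNReal (hbound _ κ hκ)
  have key : TendstoUniformlyOn (fun κ s => φ κ s) φ₀ (𝓝[>] (0:ℝ)) (Set.Icc 0 t) := by
    rw [Metric.tendstoUniformlyOn_iff]
    by_contra hcon
    push_neg at hcon
    obtain ⟨ε, hε, hfreq⟩ := hcon
    -- extract a sequence κₙ → 0⁺ witnessing failure
    have hseq : ∀ n : ℕ, ∃ κ, κ ∈ Set.Ioo (0:ℝ) (1/(n+1)) ∧
        ∃ x ∈ Set.Icc 0 t, ε ≤ dist (φ₀ x) (φ κ x) := by
      intro n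
      obtain ⟨κ, hκ1, hκ2⟩ := ((nhdsGT_basis (0:ℝ)).frequently_iff.mp hfreq
        (1/(n+1)) (by positivity))
      refine ⟨κ, hκ1, ?_⟩
      exact hκ2
    choose k hk1 hkbad using hseq
    have hkpos : ∀ n, 0 < k n := fun n => (hk1 n).1
    have hklim : Tendsto k atTop (𝓝[>] 0) := by
      apply tendsto_nhdsWithin_of_tendsto_nhds_of_eventually_within
      · exact squeeze_zero (fun n => (hkpos n).le) (fun n => (hk1 n).2.le)
          tendsto_one_div_add_atTop_nhds_zero_nat
      · exact Eventually.of_forall fun n => hkpos n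
    haveI : CompactSpace (Set.Icc (0:ℝ) t) := isCompact_iff_compactSpace.mp isCompact_Icc
    set z0 : Set.Icc (0:ℝ) t := ⟨0, le_refl 0, ht.le⟩ with hz0
    -- the restricted solutions as bounded continuous functions
    have hres : ∀ n, Continuous fun s : Set.Icc (0:ℝ) t => φ (k n) s :=
      fun n => (hφcont _ (hkpos n)).restrict
    set G : ℕ → (Set.Icc (0:ℝ) t →ᵇ EuclideanSpace ℝ (Fin d)) :=
      fun n => BoundedContinuousFunction.mkOfCompact ⟨_, hres n⟩ with hG
    set A : Set (Set.Icc (0:ℝ) t →ᵇ EuclideanSpace ℝ (Fin d)) :=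
      {g | (∀ x y, dist (g x) (g y) ≤ C * dist x y) ∧ g z0 = x₀} with hA
    have hAclosed : IsClosed A := by
      have h1 : IsClosed {g : Set.Icc (0:ℝ) t →ᵇ EuclideanSpace ℝ (Fin d) |
          ∀ x y, dist (g x) (g y) ≤ C * dist x y} := by
        simp only [Set.setOf_forall]
        refine isClosed_iInter fun x => isClosed_iInter fun y => ?_
        exact isClosed_le ((continuous_eval_const (F := Set.Icc (0:ℝ) t →ᵇ EuclideanSpace ℝ (Fin d)) x).dist
          (continuous_eval_const (F := Set.Icc (0:ℝ) t →ᵇ EuclideanSpace ℝ (Fin d)) y)) continuous_const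
      have h2 : IsClosed {g : Set.Icc (0:ℝ) t →ᵇ EuclideanSpace ℝ (Fin d) | g z0 = x₀} :=
        isClosed_eq (continuous_eval_const (F := Set.Icc (0:ℝ) t →ᵇ EuclideanSpace ℝ (Fin d)) z0) continuous_const
      exact h1.inter h2
    have hin : ∀ (g : Set.Icc (0:ℝ) t →ᵇ EuclideanSpace ℝ (Fin d)) (x : Set.Icc (0:ℝ) t),
        g ∈ A → g x ∈ Metric.closedBall x₀ (C * t) := by
      intro g x hg
      rw [Metric.mem_closedBall]
      have h1 : dist (g x) x₀ = dist (g x) (g z0) := by rw [hg.2]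
      have h2 : dist x z0 ≤ t := by
        rw [Subtype.dist_eq, hz0]
        simp only [Real.dist_eq]
        rw [abs_of_nonneg (by simpa using x.2.1)]
        simpa using x.2.2
      calc dist (g x) x₀ = dist (g x) (g z0) := h1
        _ ≤ C * dist x z0 := hg.1 x z0
        _ ≤ C * t := by nlinarith [dist_nonneg (x := x) (y := z0)]
    have hequi : Equicontinuous ((↑) : A → (Set.Icc (0:ℝ) t) → EuclideanSpace ℝ (Fin d)) := by
      apply Metric.equicontinuous_of_continuity_modulus (fun r => C * r)
      · have : Continuous fun r : ℝ => C * r := continuous_const.mul continuous_id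
        simpa using this.tendsto 0
      · intro x y i
        exact i.2.1 x y
    have hAcomp : IsCompact A :=
      BoundedContinuousFunction.arzela_ascoli₂ (Metric.closedBall x₀ (C * t))
        (isCompact_closedBall x₀ (C * t)) A hAclosed (fun g x hg => hin g x hg) hequi
    have hGA : ∀ n, G n ∈ A := by
      intro n
      constructor
      · intro x y
        have h := (lip _ (hkpos n)).dist_le_mul x.1 x.2 y.1 y.2
        rw [Real.coe_toNNReal C hC0] at h
        simpa [hG, Subtype.dist_eq] using h
      · simpa [hG, hz0] using hφ0 _ (hkpos n)
    obtain ⟨g, hgA, nn, hmono, hgconv⟩ := hAcomp.tendsto_subseq hGA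
    have huconv : TendstoUniformly (fun m => ⇑(G (nn m))) ⇑g atTop :=
      BoundedContinuousFunction.tendsto_iff_tendstoUniformly.mp hgconv
    -- the limit function extended to ℝ
    set gg : ℝ → EuclideanSpace ℝ (Fin d) := fun u => g (Set.projIcc 0 t ht.le u) with hgg
    have ggcont : Continuous gg := g.continuous.comp continuous_projIcc
    have gg_eq : ∀ s (hs : s ∈ Set.Icc 0 t), gg s = g ⟨s, hs⟩ := by
      intro s hs
      simp [hgg, Set.projIcc_of_mem ht.le hs]
    have hpt : ∀ s (hs : s ∈ Set.Icc 0 t),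
        Tendsto (fun m => φ (k (nn m)) s) atTop (𝓝 (gg s)) := by
      intro s hs
      rw [gg_eq s hs]
      exact huconv.tendsto_at ⟨s, hs⟩
    have hklim' : Tendsto (fun m => k (nn m)) atTop (𝓝[>] 0) :=
      hklim.comp hmono.tendsto_atTop
    -- pointwise convergence of the integrands
    have hFlim : ∀ u, u ∈ Set.Icc 0 t →
        Tendsto (fun m => f (φ (k (nn m)) u) (k (nn m))) atTop (𝓝 (f₀ (gg u))) := by
      intro u hu
      have h1 : Tendsto (fun m => f (φ (k (nn m)) u) (k (nn m)) - f₀ (φ (k (nn m)) u))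
          atTop (𝓝 0) := by
        rw [NormedAddCommGroup.tendsto_nhds_zero]
        intro ε' hε'
        obtain ⟨δ, hδ, hδ'⟩ := hconv (ε'/2) (by positivity)
        have hev : ∀ᶠ m in atTop, k (nn m) ∈ Set.Ioo (0:ℝ) δ :=
          hklim' (Ioo_mem_nhdsGT_of_mem ⟨le_refl 0, hδ⟩)
        filter_upwards [hev] with m hm
        calc ‖f (φ (k (nn m)) u) (k (nn m)) - f₀ (φ (k (nn m)) u)‖ ≤ ε'/2 :=
              hδ' _ hm.1 hm.2 _
          _ < ε' := by linarith
      have h2 : Tendsto (fun m => f₀ (φ (k (nn m)) u)) atTop (𝓝 (f₀ (gg u))) :=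
        (hf₀.tendsto _).comp (hpt u hu)
      have h3 := h1.add h2
      rw [zero_add] at h3
      refine h3.congr fun m => ?_
      abel
    -- the integral equation for the limit
    have hgg_eqn : ∀ s (hs : s ∈ Set.Icc 0 t), gg s = x₀ + ∫ u in (0:ℝ)..s, f₀ (gg u) := by
      intro s hs
      have hIsub : Set.uIoc (0:ℝ) s ⊆ Set.Icc 0 t := by
        rw [Set.uIoc_of_le hs.1]
        exact Set.Ioc_subset_Icc_self.trans (Set.Icc_subset_Icc le_rfl hs.2)
      have hR : Tendsto (fun m => x₀ + ∫ u in (0:ℝ)..s, f (φ (k (nn m)) u) (k (nn m)))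
          atTop (𝓝 (x₀ + ∫ u in (0:ℝ)..s, f₀ (gg u))) := by
        apply Tendsto.const_add
        apply intervalIntegral.tendsto_integral_filter_of_dominated_convergence (fun _ => C)
        · refine Eventually.of_forall fun m => ?_
          refine ContinuousOn.aestronglyMeasurable ?_ measurableSet_uIoc
          exact (hfx _ (hkpos _)).comp_continuousOn ((hφcont _ (hkpos _)).mono hIsub)
        · exact Eventually.of_forall fun m => ae_of_all _ fun u _ => hbound _ _ (hkpos _)
        · exact intervalIntegrable_const
        · exact ae_of_all _ fun u hu => hFlim u (hIsub hu)
      have hseq_eq : ∀ m, φ (k (nn m)) s = x₀ + ∫ u in (0:ℝ)..s, f (φ (k (nn m)) u) (k (nn m)) :=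
        fun m => eqφ _ (hkpos _) s hs
      exact tendsto_nhds_unique (hpt s hs) (hR.congr fun m => (hseq_eq m).symm)
    -- the limit solves the inviscid problem
    set ψ : ℝ → EuclideanSpace ℝ (Fin d) := fun s => x₀ + ∫ u in (0:ℝ)..s, f₀ (gg u) with hψ
    have hψ0 : ψ 0 = x₀ := by simp [hψ]
    have hψgg : ∀ s (hs : s ∈ Set.Icc 0 t), ψ s = gg s := fun s hs => (hgg_eqn s hs).symm
    have hψ' : ∀ s ∈ Set.Icc 0 t, HasDerivAt ψ (f₀ (ψ s)) s := by
      intro s hs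
      have hcont : Continuous fun u => f₀ (gg u) := hf₀.comp ggcont
      have h := intervalIntegral.integral_hasDerivAt_right
        (hcont.intervalIntegrable 0 s)
        hcont.aestronglyMeasurable.stronglyMeasurableAtFilter
        hcont.continuousAt
      have h2 : HasDerivAt ψ (f₀ (gg s)) s := h.const_add x₀
      rwa [← hψgg s hs] at h2
    have hψφ₀ := huniq₀ ψ hψ0 hψ'
    have hggφ₀ : ∀ s (hs : s ∈ Set.Icc 0 t), gg s = φ₀ s := fun s hs =>
      (hψgg s hs).symm.trans (hψφ₀ s hs)
    -- contradiction with the ε-separation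
    obtain ⟨m, hm⟩ := (Metric.tendsto_nhds.mp hgconv ε hε).exists
    obtain ⟨x, hx, hxd⟩ := hkbad (nn m)
    have e1 : φ₀ x = g ⟨x, hx⟩ := by rw [← hggφ₀ x hx, gg_eq x hx]
    have e2 : φ (k (nn m)) x = G (nn m) ⟨x, hx⟩ := rfl
    rw [e1, e2] at hxd
    have hle : dist (g ⟨x, hx⟩) (G (nn m) ⟨x, hx⟩) ≤ dist (G (nn m)) g := by
      rw [dist_comm (g ⟨x, hx⟩)]
      exact BoundedContinuousFunction.dist_coe_le_dist _
    have : dist ((G ∘ nn) m) g < ε := hm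
    simp only [Function.comp] at this
    linarith
  refine ⟨key, fun O hO => ?_⟩
  have h1 : Tendsto (fun κ => φ κ t) (𝓝[>] (0:ℝ)) (𝓝 (φ₀ t)) :=
    key.tendsto_at ⟨ht.le, le_rfl⟩
  exact (hO.tendsto _).comp h1
end

section
/- Assume hypothesis H0, let S₀ := {ψ(t) : ψ a solution of the inviscid problem (P₀)}, and let O : ℝ^d → ℝ be continuous. If liminf_{κ→0⁺} O(φ_κ(t)) < limsup_{κ→0⁺} O(φ_κ(t)), then O is not constant on S₀; that is, there exist y₁, y₂ ∈ S₀ with O(y₁) ≠ O(y₂). -/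
open Filter Topology MeasureTheory

set_option maxHeartbeats 1000000
set_option synthInstance.maxHeartbeats 400000

variable {d : ℕ}

/-- Key lemma: along any positive sequence `κ n → 0`, a subsequence of `φ (κ n)` converges
to a solution of the inviscid problem; in particular if `O (φ (κ n) t) → L` then some
inviscid solution `ψ` satisfies `O (ψ t) = L`. -/
lemma key_limit (x₀ : EuclideanSpace ℝ (Fin d)) (t : ℝ) (ht : 0 < t)
    (f : EuclideanSpace ℝ (Fin d) → ℝ → EuclideanSpace ℝ (Fin d))
    (f₀ : EuclideanSpace ℝ (Fin d) → EuclideanSpace ℝ (Fin d))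
    (hf : ContinuousOn (fun p : EuclideanSpace ℝ (Fin d) × ℝ => f p.1 p.2)
      (Set.univ ×ˢ Set.Ioi 0))
    (hf₀ : Continuous f₀)
    (C : ℝ) (hbound : ∀ x κ, 0 < κ → ‖f x κ‖ ≤ C)
    (hconv : ∀ ε > (0:ℝ), ∃ δ > (0:ℝ), ∀ κ, 0 < κ → κ < δ → ∀ x, ‖f x κ - f₀ x‖ ≤ ε)
    (φ : ℝ → ℝ → EuclideanSpace ℝ (Fin d))
    (hφ0 : ∀ κ, 0 < κ → φ κ 0 = x₀)
    (hφ' : ∀ κ, 0 < κ → ∀ s ∈ Set.Icc 0 t, HasDerivAt (φ κ) (f (φ κ s) κ) s)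
    (O : EuclideanSpace ℝ (Fin d) → ℝ) (hO : Continuous O)
    (κ : ℕ → ℝ) (hκpos : ∀ n, 0 < κ n) (hκ0 : Tendsto κ atTop (𝓝 0))
    (L : ℝ) (hL : Tendsto (fun n => O (φ (κ n) t)) atTop (𝓝 L)) :
    ∃ ψ : ℝ → EuclideanSpace ℝ (Fin d),
      ψ 0 = x₀ ∧ (∀ s ∈ Set.Icc 0 t, HasDerivAt ψ (f₀ (ψ s)) s) ∧ O (ψ t) = L := by
  have hC0 : 0 ≤ C := le_trans (norm_nonneg _) (hbound x₀ 1 one_pos)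
  -- Lipschitz estimate
  have hlip : ∀ μ, 0 < μ → ∀ s₁ ∈ Set.Icc 0 t, ∀ s₂ ∈ Set.Icc 0 t,
      ‖φ μ s₂ - φ μ s₁‖ ≤ C * ‖s₂ - s₁‖ := by
    intro μ hμ s₁ hs₁ s₂ hs₂
    exact (convex_Icc 0 t).norm_image_sub_le_of_norm_hasDerivWithin_le
      (fun s hs => ((hφ' μ hμ s hs).hasDerivWithinAt))
      (fun s hs => hbound _ _ hμ) hs₁ hs₂
  have hball : ∀ μ, 0 < μ → ∀ s ∈ Set.Icc 0 t, φ μ s ∈ Metric.closedBall x₀ (C * t) := by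
    intro μ hμ s hs
    rw [Metric.mem_closedBall, dist_eq_norm]
    have := hlip μ hμ 0 ⟨le_rfl, le_of_lt ht⟩ s hs
    rw [hφ0 μ hμ] at this
    refine this.trans ?_
    have : ‖s - 0‖ ≤ t := by
      rw [sub_zero, Real.norm_eq_abs, abs_of_nonneg hs.1]; exact hs.2
    nlinarith
  have hcont : ∀ μ, 0 < μ → ContinuousOn (φ μ) (Set.Icc 0 t) := fun μ hμ =>
    fun s hs => ((hφ' μ hμ s hs).continuousAt).continuousWithinAt
  -- package as bounded continuous functions on Icc 0 t
  set K : Set ℝ := Set.Icc 0 t with hK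
  haveI : CompactSpace K := isCompact_iff_compactSpace.mp isCompact_Icc
  set Fb : ℕ → BoundedContinuousFunction K (EuclideanSpace ℝ (Fin d)) :=
    fun n => BoundedContinuousFunction.mkOfCompact
      ⟨fun s => φ (κ n) s.1, (hcont (κ n) (hκpos n)).restrict⟩ with hFb
  have hFb_eval : ∀ n (s : K), Fb n s = φ (κ n) s.1 := fun n s => rfl
  have hequi : Equicontinuous (fun n : ℕ => (Fb n : K → EuclideanSpace ℝ (Fin d))) := by
    apply Metric.equicontinuous_of_continuity_modulus (fun r => C * r)
    · have : Tendsto (fun r : ℝ => C * r) (𝓝 0) (𝓝 (C * 0)) :=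
        (tendsto_const_nhds.mul tendsto_id)
      simpa using this
    · intro x y n
      rw [hFb_eval, hFb_eval, dist_eq_norm, Subtype.dist_eq, Real.dist_eq, ← Real.norm_eq_abs]
      exact hlip (κ n) (hκpos n) y.1 y.2 x.1 x.2
  have hequiA : Equicontinuous
      ((↑) : (Set.range Fb) → K → EuclideanSpace ℝ (Fin d)) := by
    have hex : ∀ x : Set.range Fb, ∃ n, Fb n = (x : BoundedContinuousFunction K (EuclideanSpace ℝ (Fin d))) := fun x => x.2
    choose u hu using hex
    have heq : (fun x : Set.range Fb => ((x : BoundedContinuousFunction K (EuclideanSpace ℝ (Fin d))) : K → EuclideanSpace ℝ (Fin d)))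
        = (fun n : ℕ => (Fb n : K → EuclideanSpace ℝ (Fin d))) ∘ u := by
      funext x
      simp only [Function.comp_apply, hu x]
    exact heq ▸ hequi.comp u
  have hcomp : IsCompact (closure (Set.range Fb)) := by
    apply BoundedContinuousFunction.arzela_ascoli (Metric.closedBall x₀ (C * t))
      (isCompact_closedBall x₀ (C * t)) (Set.range Fb) ?_ hequiA
    rintro F s ⟨n, rfl⟩
    exact hball (κ n) (hκpos n) s.1 s.2
  obtain ⟨Θ, -, σ, hσ, hΘ⟩ := hcomp.tendsto_subseq (fun n => subset_closure ⟨n, rfl⟩)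
  -- pointwise convergence
  have hpt : ∀ s : K, Tendsto (fun n => φ (κ (σ n)) s.1) atTop (𝓝 (Θ s)) := by
    intro s
    have : Continuous (fun F : BoundedContinuousFunction K (EuclideanSpace ℝ (Fin d)) => F s) :=
      continuous_eval_const s
    exact (this.tendsto Θ).comp hΘ
  set κ' : ℕ → ℝ := κ ∘ σ with hκ'
  have hκ'pos : ∀ n, 0 < κ' n := fun n => hκpos (σ n)
  have hκ'0 : Tendsto κ' atTop (𝓝 0) := hκ0.comp hσ.tendsto_atTop
  set θ : ℝ → EuclideanSpace ℝ (Fin d) := fun s => Θ (Set.projIcc 0 t ht.le s) with hθ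
  have hθcont : Continuous θ := Θ.continuous.comp continuous_projIcc
  have hθeq : ∀ s (hs : s ∈ K), θ s = Θ ⟨s, hs⟩ := by
    intro s hs
    simp only [hθ, Set.projIcc_of_mem ht.le hs]
  have hpt' : ∀ s ∈ K, Tendsto (fun n => φ (κ' n) s) atTop (𝓝 (θ s)) := by
    intro s hs
    rw [hθeq s hs]
    exact hpt ⟨s, hs⟩
  -- integral equation for the viscous solutions
  have hinteg : ∀ μ, 0 < μ → ∀ s ∈ K, ContinuousOn (fun u => f (φ μ u) μ) (Set.Icc 0 s) := by
    intro μ hμ s hs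
    have hsub : Set.Icc (0:ℝ) s ⊆ K := Set.Icc_subset_Icc_right hs.2
    have hpair : ContinuousOn (fun u : ℝ => (φ μ u, μ)) (Set.Icc 0 s) :=
      ((hcont μ hμ).mono hsub).prodMk continuousOn_const
    exact hf.comp hpair (fun u _ => ⟨trivial, hμ⟩)
  have hinteq : ∀ μ, 0 < μ → ∀ s ∈ K, φ μ s = x₀ + ∫ u in (0:ℝ)..s, f (φ μ u) μ := by
    intro μ hμ s hs
    have huIcc : Set.uIcc (0:ℝ) s = Set.Icc 0 s := Set.uIcc_of_le hs.1
    have h1 : ∫ u in (0:ℝ)..s, f (φ μ u) μ = φ μ s - φ μ 0 := by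
      apply intervalIntegral.integral_eq_sub_of_hasDerivAt
      · intro x hx
        rw [huIcc] at hx
        exact hφ' μ hμ x (Set.Icc_subset_Icc_right hs.2 hx)
      · exact (huIcc ▸ hinteg μ hμ s hs).intervalIntegrable
    rw [h1, hφ0 μ hμ]
    abel
  -- passage to the limit in the integral equation
  have hlim_int : ∀ s ∈ K, Tendsto (fun n => ∫ u in (0:ℝ)..s, f (φ (κ' n) u) (κ' n))
      atTop (𝓝 (∫ u in (0:ℝ)..s, f₀ (θ u))) := by
    intro s hs
    apply intervalIntegral.tendsto_integral_filter_of_dominated_convergence (fun _ => C)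
    · apply Filter.Eventually.of_forall
      intro n
      have : ContinuousOn (fun u => f (φ (κ' n) u) (κ' n)) (Set.uIoc 0 s) := by
        refine (hinteg (κ' n) (hκ'pos n) s hs).mono ?_
        rw [Set.uIoc_of_le hs.1]
        exact Set.Ioc_subset_Icc_self
      exact this.aestronglyMeasurable measurableSet_uIoc
    · exact Filter.Eventually.of_forall fun n =>
        Filter.Eventually.of_forall fun u _ => hbound _ _ (hκ'pos n)
    · exact intervalIntegrable_const
    · apply Filter.Eventually.of_forall
      intro u hu
      rw [Set.uIoc_of_le hs.1] at hu
      have huK : u ∈ K := ⟨hu.1.le, hu.2.trans hs.2⟩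
      have h1 : Tendsto (fun n => f₀ (φ (κ' n) u)) atTop (𝓝 (f₀ (θ u))) :=
        (hf₀.tendsto _).comp (hpt' u huK)
      have h2 : Tendsto (fun n => f (φ (κ' n) u) (κ' n) - f₀ (φ (κ' n) u)) atTop
          (𝓝 0) := by
        rw [NormedAddCommGroup.tendsto_nhds_zero]
        intro ε hε
        obtain ⟨δ, hδ, hδ'⟩ := hconv (ε/2) (half_pos hε)
        filter_upwards [hκ'0.eventually_lt_const hδ] with n hn
        exact lt_of_le_of_lt (hδ' (κ' n) (hκ'pos n) hn _) (half_lt_self hε)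
      have := h2.add h1
      simpa using this
  -- the limit satisfies the inviscid integral equation
  have hθinteq : ∀ s ∈ K, θ s = x₀ + ∫ u in (0:ℝ)..s, f₀ (θ u) := by
    intro s hs
    refine tendsto_nhds_unique (hpt' s hs) ?_
    have h1 : Tendsto (fun n => x₀ + ∫ u in (0:ℝ)..s, f (φ (κ' n) u) (κ' n)) atTop
        (𝓝 (x₀ + ∫ u in (0:ℝ)..s, f₀ (θ u))) := tendsto_const_nhds.add (hlim_int s hs)
    refine h1.congr fun n => ?_
    exact (hinteq (κ' n) (hκ'pos n) s hs).symm
  -- define the inviscid solution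
  set ψ : ℝ → EuclideanSpace ℝ (Fin d) := fun s => x₀ + ∫ u in (0:ℝ)..s, f₀ (θ u) with hψ
  have hg : Continuous (fun u => f₀ (θ u)) := hf₀.comp hθcont
  have hψderiv : ∀ s : ℝ, HasDerivAt ψ (f₀ (θ s)) s := fun s =>
    ((hg.integral_hasStrictDerivAt 0 s).hasDerivAt).const_add x₀
  have hψθ : ∀ s ∈ K, ψ s = θ s := fun s hs => (hθinteq s hs).symm
  have htK : t ∈ K := ⟨ht.le, le_rfl⟩
  refine ⟨ψ, ?_, ?_, ?_⟩
  · simp [hψ, intervalIntegral.integral_same]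
  · intro s hs
    rw [hψθ s hs]
    exact hψderiv s
  · rw [hψθ t htK]
    refine tendsto_nhds_unique ((hO.tendsto _).comp (hpt' t htK)) (hL.comp hσ.tendsto_atTop)


/-- Under hypothesis (H0), let `S₀ = {ψ(t) : ψ solution of the inviscid problem}`.
If a continuous observable `O` satisfies
`liminf_{κ→0⁺} O(φ_κ(t)) < limsup_{κ→0⁺} O(φ_κ(t))`, then `O` is not constant on
`S₀`: there are `y₁, y₂ ∈ S₀` with `O(y₁) ≠ O(y₂)`. -/
theorem stmt_12 (d : ℕ) (hd : 1 ≤ d) (x₀ : EuclideanSpace ℝ (Fin d)) (t : ℝ) (ht : 0 < t)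
    (f : EuclideanSpace ℝ (Fin d) → ℝ → EuclideanSpace ℝ (Fin d))
    (f₀ : EuclideanSpace ℝ (Fin d) → EuclideanSpace ℝ (Fin d))
    (hf : ContinuousOn (fun p : EuclideanSpace ℝ (Fin d) × ℝ => f p.1 p.2)
      (Set.univ ×ˢ Set.Ioi 0))
    (hf₀ : Continuous f₀)
    (C : ℝ) (hbound : ∀ x κ, 0 < κ → ‖f x κ‖ ≤ C)
    (hconv : ∀ ε > (0:ℝ), ∃ δ > (0:ℝ), ∀ κ, 0 < κ → κ < δ → ∀ x, ‖f x κ - f₀ x‖ ≤ ε)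
    (φ : ℝ → ℝ → EuclideanSpace ℝ (Fin d))
    (hφ0 : ∀ κ, 0 < κ → φ κ 0 = x₀)
    (hφ' : ∀ κ, 0 < κ → ∀ s ∈ Set.Icc 0 t, HasDerivAt (φ κ) (f (φ κ s) κ) s)
    (huniq : ∀ κ, 0 < κ → ∀ ψ : ℝ → EuclideanSpace ℝ (Fin d), ψ 0 = x₀ →
      (∀ s ∈ Set.Icc 0 t, HasDerivAt ψ (f (ψ s) κ) s) → ∀ s ∈ Set.Icc 0 t, ψ s = φ κ s)
    (O : EuclideanSpace ℝ (Fin d) → ℝ) (hO : Continuous O)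
    (hsplit : Filter.liminf (fun κ => O (φ κ t)) (𝓝[>] (0:ℝ))
      < Filter.limsup (fun κ => O (φ κ t)) (𝓝[>] (0:ℝ))) :
    ∃ y₁ ∈ {y | ∃ ψ : ℝ → EuclideanSpace ℝ (Fin d),
        ψ 0 = x₀ ∧ (∀ s ∈ Set.Icc 0 t, HasDerivAt ψ (f₀ (ψ s)) s) ∧ ψ t = y},
      ∃ y₂ ∈ {y | ∃ ψ : ℝ → EuclideanSpace ℝ (Fin d),
        ψ 0 = x₀ ∧ (∀ s ∈ Set.Icc 0 t, HasDerivAt ψ (f₀ (ψ s)) s) ∧ ψ t = y},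
      O y₁ ≠ O y₂ := by
  have hC0 : 0 ≤ C := le_trans (norm_nonneg _) (hbound x₀ 1 one_pos)
  -- uniform bound on `O (φ κ t)` for `κ > 0`
  have hball : ∀ μ, 0 < μ → φ μ t ∈ Metric.closedBall x₀ (C * t) := by
    intro μ hμ
    rw [Metric.mem_closedBall, dist_eq_norm]
    have := (convex_Icc (0:ℝ) t).norm_image_sub_le_of_norm_hasDerivWithin_le
      (fun s hs => ((hφ' μ hμ s hs).hasDerivWithinAt))
      (fun s _ => hbound _ _ hμ) (Set.left_mem_Icc.2 ht.le) (Set.right_mem_Icc.2 ht.le)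
    rw [hφ0 μ hμ] at this
    refine this.trans ?_
    rw [sub_zero, Real.norm_eq_abs, abs_of_nonneg ht.le]
  obtain ⟨M, hM⟩ := (isCompact_closedBall x₀ (C * t)).exists_bound_of_continuousOn hO.continuousOn
  have hbdd_le : IsBoundedUnder (· ≤ ·) (𝓝[>] (0:ℝ)) (fun κ => O (φ κ t)) := by
    refine ⟨M, Filter.eventually_map.2 ?_⟩
    filter_upwards [self_mem_nhdsWithin] with μ hμ
    exact le_trans (le_abs_self _) (hM _ (hball μ hμ))
  have hbdd_ge : IsBoundedUnder (· ≥ ·) (𝓝[>] (0:ℝ)) (fun κ => O (φ κ t)) := by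
    refine ⟨-M, Filter.eventually_map.2 ?_⟩
    filter_upwards [self_mem_nhdsWithin] with μ hμ
    exact neg_le_of_abs_le (hM _ (hball μ hμ))
  set a := Filter.liminf (fun κ => O (φ κ t)) (𝓝[>] (0:ℝ)) with ha
  set b := Filter.limsup (fun κ => O (φ κ t)) (𝓝[>] (0:ℝ)) with hb
  have h1n : Tendsto (fun n : ℕ => 1 / (n + 1 : ℝ)) atTop (𝓝 0) :=
    tendsto_one_div_add_atTop_nhds_zero_nat
  have hseq : ∀ L : ℝ, (∀ n : ℕ, ∃ᶠ μ in 𝓝[>] (0:ℝ),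
        |O (φ μ t) - L| < 1 / (n + 1 : ℝ)) →
      ∃ u : ℕ → ℝ, (∀ n, 0 < u n) ∧ Tendsto u atTop (𝓝 0) ∧
        Tendsto (fun n => O (φ (u n) t)) atTop (𝓝 L) := by
    intro L hfreq
    have hpos : ∀ n : ℕ, (0:ℝ) < 1 / (n + 1 : ℝ) := fun n => by positivity
    have hex : ∀ n : ℕ, ∃ μ, (0 < μ ∧ μ < 1 / (n + 1 : ℝ)) ∧
        |O (φ μ t) - L| < 1 / (n + 1 : ℝ) := by
      intro n
      have hev : ∀ᶠ μ in 𝓝[>] (0:ℝ), 0 < μ ∧ μ < 1 / (n + 1 : ℝ) := by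
        filter_upwards [Ioo_mem_nhdsGT_of_mem ⟨le_rfl, hpos n⟩] with μ hμ
        exact ⟨hμ.1, hμ.2⟩
      obtain ⟨μ, h1, h2⟩ := ((hfreq n).and_eventually hev).exists
      exact ⟨μ, h2, h1⟩
    choose u hu using hex
    refine ⟨u, fun n => (hu n).1.1, ?_, ?_⟩
    · exact tendsto_of_tendsto_of_tendsto_of_le_of_le tendsto_const_nhds h1n
        (fun n => (hu n).1.1.le) (fun n => (hu n).1.2.le)
    · rw [tendsto_iff_dist_tendsto_zero]
      refine tendsto_of_tendsto_of_tendsto_of_le_of_le tendsto_const_nhds h1n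
        (fun n => dist_nonneg) (fun n => ?_)
      rw [Real.dist_eq]
      exact (hu n).2.le
  -- a sequence realizing the limsup
  obtain ⟨u₂, hu₂pos, hu₂0, hu₂lim⟩ : ∃ u : ℕ → ℝ, (∀ n, 0 < u n) ∧
      Tendsto u atTop (𝓝 0) ∧ Tendsto (fun n => O (φ (u n) t)) atTop (𝓝 b) := by
    apply hseq
    intro n
    have hpos : (0:ℝ) < 1 / (n + 1 : ℝ) := by positivity
    have hfreq : ∃ᶠ μ in 𝓝[>] (0:ℝ), b - 1 / (n + 1 : ℝ) < O (φ μ t) :=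
      frequently_lt_of_lt_limsup hbdd_ge.isCoboundedUnder_le (by linarith)
    have hev : ∀ᶠ μ in 𝓝[>] (0:ℝ), O (φ μ t) < b + 1 / (n + 1 : ℝ) :=
      eventually_lt_of_limsup_lt (by linarith) hbdd_le
    refine (hfreq.and_eventually hev).mono ?_
    rintro μ ⟨h1, h2⟩
    rw [abs_sub_lt_iff]
    constructor <;> linarith
  -- a sequence realizing the liminf
  obtain ⟨u₁, hu₁pos, hu₁0, hu₁lim⟩ : ∃ u : ℕ → ℝ, (∀ n, 0 < u n) ∧
      Tendsto u atTop (𝓝 0) ∧ Tendsto (fun n => O (φ (u n) t)) atTop (𝓝 a) := by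
    apply hseq
    intro n
    have hpos : (0:ℝ) < 1 / (n + 1 : ℝ) := by positivity
    have hfreq : ∃ᶠ μ in 𝓝[>] (0:ℝ), O (φ μ t) < a + 1 / (n + 1 : ℝ) :=
      frequently_lt_of_liminf_lt hbdd_le.isCoboundedUnder_ge (by linarith)
    have hev : ∀ᶠ μ in 𝓝[>] (0:ℝ), a - 1 / (n + 1 : ℝ) < O (φ μ t) :=
      eventually_lt_of_lt_liminf (by linarith) hbdd_ge
    refine (hfreq.and_eventually hev).mono ?_
    rintro μ ⟨h1, h2⟩
    rw [abs_sub_lt_iff]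
    constructor <;> linarith
  obtain ⟨ψ₁, hψ₁0, hψ₁', hψ₁O⟩ := key_limit x₀ t ht f f₀ hf hf₀ C hbound hconv φ hφ0 hφ'
    O hO u₁ hu₁pos hu₁0 a hu₁lim
  obtain ⟨ψ₂, hψ₂0, hψ₂', hψ₂O⟩ := key_limit x₀ t ht f f₀ hf hf₀ C hbound hconv φ hφ0 hφ'
    O hO u₂ hu₂pos hu₂0 b hu₂lim
  refine ⟨ψ₁ t, ⟨ψ₁, hψ₁0, hψ₁', rfl⟩, ψ₂ t, ⟨ψ₂, hψ₂0, hψ₂', rfl⟩, ?_⟩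
  rw [hψ₁O, hψ₂O]
  exact ne_of_lt hsplit
end

section
/- Let n ≥ 1, let f : ℝ^n → ℝ^n be continuous, and suppose the Cauchy problem ẋ = f(x), x(0) = x₀ admits two solutions on some interval [0,T] which are not identical (nonuniqueness). Then there exists a modulus of continuity Ω — a continuous function Ω : [0,∞) → [0,∞) with Ω(0) = 0, Ω(z) > 0 for z > 0, and ∫₀^1 dz/Ω(z) = +∞ — such that the singular set Γ* := { x ∈ ℝ^n : ∃ v with ‖v‖ = 1 and limsup_{t→0⁺} ⟨f(x+tv) − f(x), v⟩ / Ω(t) = +∞ } is nonempty, and moreover x₀ belongs to the finite-time stable set of Γ*: there exist a solution φ of the Cauchy problem and a finite time t* ≥ 0 such that dist(φ(s), Γ*) → 0 as s → t*. -/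
open Filter Topology MeasureTheory


/-- monotonicity along a line from local eventual decrease -/
lemma line_mono' {h : ℝ → ℝ} (hc : Continuous h) {L : ℝ} (hL : 0 ≤ L)
    (H : ∀ t ∈ Set.Icc (0:ℝ) L, ∀ᶠ τ in 𝓝[>] (0:ℝ), h (t + τ) ≤ h t) :
    h L ≤ h 0 := by
  by_contra hlt
  push_neg at hlt
  set A : Set ℝ := Set.Icc 0 L ∩ h ⁻¹' Set.Iic (h 0) with hA
  have hAclosed : IsClosed A := isClosed_Icc.inter (isClosed_Iic.preimage hc)
  have h0A : (0:ℝ) ∈ A := ⟨⟨le_refl _, hL⟩, by simp⟩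
  have hbdd : BddAbove A := ⟨L, fun x hx => hx.1.2⟩
  set m := sSup A with hm
  have hmA : m ∈ A := hAclosed.csSup_mem ⟨0, h0A⟩ hbdd
  have hmL : m < L := by
    rcases lt_or_eq_of_le hmA.1.2 with h | h
    · exact h
    · exact absurd (h ▸ hmA.2) (not_le.2 hlt)
  have hevt := (H m hmA.1).and (Ioo_mem_nhdsGT_of_mem ⟨le_refl (0:ℝ), sub_pos.2 hmL⟩)
  obtain ⟨τ, hτ1, hτ2⟩ := hevt.exists
  have hmem : m + τ ∈ A :=
    ⟨⟨by linarith [hmA.1.1, hτ2.1], by linarith [hτ2.2]⟩, le_trans hτ1 hmA.2⟩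
  have := le_csSup hbdd hmem
  linarith [hτ2.1]

/-- dissipativity on a convex set from pointwise directional nonincrease -/
lemma dissip' {n : ℕ} {f : EuclideanSpace ℝ (Fin n) → EuclideanSpace ℝ (Fin n)}
    (hf : Continuous f) {s : Set (EuclideanSpace ℝ (Fin n))} (hs : Convex ℝ s)
    (H : ∀ x ∈ s, ∀ v : EuclideanSpace ℝ (Fin n), ‖v‖ = 1 →
      ∀ᶠ τ in 𝓝[>] (0:ℝ), (inner ℝ (f (x + τ • v) - f x) v : ℝ) ≤ 0)
    {a b : EuclideanSpace ℝ (Fin n)} (ha : a ∈ s) (hb : b ∈ s) :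
    (inner ℝ (f a - f b) (a - b) : ℝ) ≤ 0 := by
  rcases eq_or_ne a b with rfl | hab
  · simp
  have hL : (0:ℝ) < ‖a - b‖ := norm_sub_pos_iff.2 hab
  set L := ‖a - b‖ with hLdef
  set v := L⁻¹ • (a - b) with hv
  have hvnorm : ‖v‖ = 1 := by
    rw [hv, norm_smul, norm_inv, Real.norm_eq_abs, abs_of_pos hL]
    exact inv_mul_cancel₀ hL.ne'
  set h : ℝ → ℝ := fun t => (inner ℝ (f (b + t • v)) v : ℝ) with hh
  have hcont : Continuous h := by
    apply Continuous.inner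
    · exact hf.comp (continuous_const.add (continuous_id.smul continuous_const))
    · exact continuous_const
  have key : ∀ t ∈ Set.Icc (0:ℝ) L, b + t • v ∈ s := by
    intro t ht
    have hmem : b + (t / L) • (a - b) ∈ s :=
      hs.add_smul_sub_mem hb ha ⟨div_nonneg ht.1 hL.le, div_le_one_of_le₀ ht.2 hL.le⟩
    have : (t / L) • (a - b) = t • v := by
      rw [hv, smul_smul, div_eq_mul_inv]
    rwa [this] at hmem
  have hmono : h L ≤ h 0 := by
    apply line_mono' hcont hL.le
    intro t ht
    filter_upwards [H (b + t • v) (key t ht) v hvnorm] with τ hτ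
    have heq : b + t • v + τ • v = b + (t + τ) • v := by
      rw [add_smul]; abel
    rw [heq] at hτ
    rw [inner_sub_left] at hτ
    simpa [hh] using hτ
  have hba : b + L • v = a := by
    rw [hv, smul_inv_smul₀ hL.ne']
    abel
  have h0b : b + (0:ℝ) • v = b := by simp
  have hm2 : (inner ℝ (f a) v : ℝ) ≤ inner ℝ (f b) v := by
    simpa only [hh, hba, h0b] using hmono
  have hsub : a - b = L • v := by rw [hv, smul_inv_smul₀ hL.ne']
  rw [hsub, real_inner_smul_right, inner_sub_left]
  exact mul_nonpos_of_nonneg_of_nonpos hL.le (by linarith)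


/-- construction of the Osgood modulus from countably many upper constraints -/
lemma modulus_exists (t ε : ℕ × ℕ → ℝ) (ht : ∀ m, 0 < t m) (hε : ∀ m, 0 < ε m)
    (hb : ∀ m : ℕ × ℕ, t m ≤ min (1 / ((m.1 : ℝ) + 1)) (1 / ((m.2 : ℝ) + 1))) :
    ∃ Ω : ℝ → ℝ, Continuous Ω ∧ Ω 0 = 0 ∧ (∀ z > (0:ℝ), 0 < Ω z) ∧
      (∀ z ≥ (0:ℝ), Ω z ≤ z) ∧ (∀ m, Ω (t m) ≤ ε m) := by
  set G : ℝ → ℝ := fun z => ⨅ m : ℕ × ℕ, (ε m + |z - t m|) with hG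
  have hbdd : ∀ z : ℝ, BddBelow (Set.range fun m : ℕ × ℕ => ε m + |z - t m|) := by
    intro z
    refine ⟨0, ?_⟩
    rintro x ⟨m, rfl⟩
    have := (hε m).le
    positivity
  have hG0 : ∀ z, 0 ≤ G z := by
    intro z
    apply le_ciInf
    intro m
    have := (hε m).le
    positivity
  have hlip : ∀ z w : ℝ, G z ≤ G w + |z - w| := by
    intro z w
    have h1 : ∀ m : ℕ × ℕ, G z - |z - w| ≤ ε m + |w - t m| := by
      intro m
      have h2 : G z ≤ ε m + |z - t m| := ciInf_le (hbdd z) m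
      have h3 : |z - t m| ≤ |w - t m| + |z - w| := by
        have : z - t m = (w - t m) + (z - w) := by ring
        rw [this]
        exact abs_add_le _ _
      linarith
    have := le_ciInf h1
    linarith
  have hGcont : Continuous G := by
    have : LipschitzWith 1 G := by
      apply LipschitzWith.of_dist_le_mul
      intro z w
      rw [Real.dist_eq, Real.dist_eq, NNReal.coe_one, one_mul]
      rw [abs_sub_le_iff]
      constructor
      · linarith [hlip z w]
      · have := hlip w z
        rw [abs_sub_comm w z] at this
        linarith
    exact this.continuous
  have hGsmall : ∀ m, G (t m) ≤ ε m := by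
    intro m
    have := ciInf_le (hbdd (t m)) m
    simpa using this
  have hGpos : ∀ z > (0:ℝ), 0 < G z := by
    intro z hz
    set N : ℕ := ⌈2 / z⌉₊ with hN
    have hNpos : 0 < N := Nat.ceil_pos.2 (by positivity)
    have hFne : (Finset.range N ×ˢ Finset.range N).Nonempty :=
      Finset.Nonempty.product ⟨0, Finset.mem_range.2 hNpos⟩ ⟨0, Finset.mem_range.2 hNpos⟩
    set c₀ := (Finset.range N ×ˢ Finset.range N).inf' hFne ε with hc₀def
    have hc₀ : 0 < c₀ := (Finset.lt_inf'_iff _).2 fun m _ => hε m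
    have h2z : (2:ℝ) / z ≤ N := Nat.le_ceil _
    have hcle : ∀ m : ℕ × ℕ, min (z / 2) c₀ ≤ ε m + |z - t m| := by
      intro m
      by_cases hm : m.1 < N ∧ m.2 < N
      · have h4 : c₀ ≤ ε m := by
          apply Finset.inf'_le
          exact Finset.mem_product.2 ⟨Finset.mem_range.2 hm.1, Finset.mem_range.2 hm.2⟩
        have h5 := abs_nonneg (z - t m)
        calc min (z / 2) c₀ ≤ c₀ := min_le_right _ _
          _ ≤ ε m + |z - t m| := by linarith
      · have htm : t m ≤ z / 2 := by
          have hNr : ∃ i : ℕ, N ≤ i ∧ t m ≤ 1 / (i + 1) := by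
            rcases not_and_or.1 hm with hj | hk
            · exact ⟨m.1, not_lt.1 hj, (hb m).trans (min_le_left _ _)⟩
            · exact ⟨m.2, not_lt.1 hk, (hb m).trans (min_le_right _ _)⟩
          obtain ⟨i, hiN, hti⟩ := hNr
          have hiR : (2:ℝ) / z ≤ (i:ℝ) + 1 := by
            have : (N:ℝ) ≤ (i:ℝ) + 1 := by
              have : (N:ℝ) ≤ (i:ℝ) := by exact_mod_cast hiN
              linarith
            linarith
          have hipos : (0:ℝ) < (i:ℝ) + 1 := by positivity
          have : (1:ℝ) / ((i:ℝ) + 1) ≤ z / 2 := by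
            rw [div_le_div_iff₀ hipos two_pos]
            have := (div_le_iff₀ hz).1 hiR
            linarith [mul_comm z ((i:ℝ)+1)]
          linarith
        have habs : z / 2 ≤ |z - t m| := by
          rw [abs_of_nonneg (by linarith)]
          linarith
        calc min (z / 2) c₀ ≤ z / 2 := min_le_left _ _
          _ ≤ ε m + |z - t m| := by linarith [(hε m).le]
    have hfin : min (z / 2) c₀ ≤ G z := le_ciInf hcle
    exact lt_of_lt_of_le (lt_min (by linarith) hc₀) hfin
  refine ⟨fun z => min (max z 0) (G z), ?_, ?_, ?_, ?_, ?_⟩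
  · exact (continuous_id.max continuous_const).min hGcont
  · show min (max (0:ℝ) 0) (G 0) = 0
    rw [max_self]
    exact min_eq_left (hG0 0)
  · intro z hz
    exact lt_min (lt_max_iff.2 (Or.inl hz)) (hGpos z hz)
  · intro z hz
    calc min (max z 0) (G z) ≤ max z 0 := min_le_left _ _
      _ = z := max_eq_left hz
  · intro m
    exact (min_le_right _ _).trans (hGsmall m)

lemma lint_one_div_top : (∫⁻ z in Set.Ioc (0:ℝ) 1, ENNReal.ofReal (1 / z)) = ⊤ := by
  by_contra hne
  have hlt : (∫⁻ z in Set.Ioc (0:ℝ) 1, ENNReal.ofReal (1 / z)) < ⊤ := lt_top_iff_ne_top.2 hne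
  have hmeas : AEStronglyMeasurable (fun z : ℝ => 1 / z)
      (volume.restrict (Set.Ioc (0:ℝ) 1)) :=
    (measurable_const.div measurable_id).aestronglyMeasurable
  have hint : MeasureTheory.IntegrableOn (fun z : ℝ => 1 / z) (Set.Ioc 0 1) := by
    refine ⟨hmeas, ?_⟩
    rw [hasFiniteIntegral_iff_ofReal ?_]
    · exact hlt
    · refine (MeasureTheory.ae_restrict_iff' measurableSet_Ioc).2
        (Filter.Eventually.of_forall fun z hz => ?_)
      have := hz.1
      positivity
  have h1 : IntervalIntegrable (fun z : ℝ => 1 / z) volume 0 1 :=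
    (intervalIntegrable_iff_integrableOn_Ioc_of_le zero_le_one).2 hint
  have h2 : IntervalIntegrable (fun z : ℝ => (z - 0)⁻¹) volume 0 1 := by
    simpa [one_div] using h1
  rcases intervalIntegrable_sub_inv_iff.1 h2 with h | h
  · norm_num at h
  · exact h Set.left_mem_uIcc


/-- The singular set `Γ* = {x : ∃ v, ‖v‖ = 1, limsup_{τ→0⁺} ⟨f(x+τv) − f(x), v⟩/Ω(τ) = +∞}`
of directional Dini-type derivatives of `f` measured against the modulus `Ω`. -/
noncomputable def singSet {n : ℕ} (f : EuclideanSpace ℝ (Fin n) → EuclideanSpace ℝ (Fin n))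
    (Ω : ℝ → ℝ) : Set (EuclideanSpace ℝ (Fin n)) :=
  {x | ∃ v : EuclideanSpace ℝ (Fin n), ‖v‖ = 1 ∧
    Filter.limsup
      (fun τ : ℝ => (((inner ℝ (f (x + τ • v) - f x) v : ℝ) / Ω τ : ℝ) : EReal))
      (𝓝[>] (0:ℝ)) = ⊤}

/-- If the Cauchy problem `ẋ = f(x)`, `x(0) = x₀`, with `f` continuous, admits two
non-identical solutions on `[0,T]`, then there is a modulus of continuity `Ω`
(continuous, `Ω(0) = 0`, `Ω > 0` on `(0,∞)`, `∫₀¹ dz/Ω(z) = +∞`) such that the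
singular set `Γ*` is nonempty and `x₀` lies in its finite-time stable set: some
solution `χ` of the Cauchy problem reaches `Γ*` at a finite time `t* ≥ 0`, i.e.
`dist(χ(s), Γ*) → 0` as `s → t*`. -/
theorem stmt_13 (n : ℕ) (hn : 1 ≤ n)
    (f : EuclideanSpace ℝ (Fin n) → EuclideanSpace ℝ (Fin n)) (hf : Continuous f)
    (x₀ : EuclideanSpace ℝ (Fin n)) (T : ℝ) (hT : 0 < T)
    (φ ψ : ℝ → EuclideanSpace ℝ (Fin n))
    (hφ0 : φ 0 = x₀) (hψ0 : ψ 0 = x₀)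
    (hφ' : ∀ s ∈ Set.Icc 0 T, HasDerivAt φ (f (φ s)) s)
    (hψ' : ∀ s ∈ Set.Icc 0 T, HasDerivAt ψ (f (ψ s)) s)
    (hne : ∃ s ∈ Set.Icc 0 T, φ s ≠ ψ s) :
    ∃ Ω : ℝ → ℝ,
      ContinuousOn Ω (Set.Ici 0) ∧ Ω 0 = 0 ∧ (∀ z > (0:ℝ), 0 < Ω z) ∧
      (∫⁻ z in Set.Ioc (0:ℝ) 1, ENNReal.ofReal (1 / Ω z)) = ⊤ ∧
      (singSet f Ω).Nonempty ∧
      ∃ χ : ℝ → EuclideanSpace ℝ (Fin n),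
        χ 0 = x₀ ∧ (∀ s ∈ Set.Icc 0 T, HasDerivAt χ (f (χ s)) s) ∧
        ∃ tstar ∈ Set.Icc 0 T,
          Tendsto (fun s => Metric.infDist (χ s) (singSet f Ω))
            (𝓝[Set.Icc 0 T] tstar) (𝓝 0) := by
  obtain ⟨s₁, hs₁, hness⟩ := hne
  -- the coincidence set and the branching time
  set S : Set ℝ := {s | s ∈ Set.Icc 0 s₁ ∧ φ s = ψ s} with hSdef
  have hsub1 : Set.Icc (0:ℝ) s₁ ⊆ Set.Icc 0 T := Set.Icc_subset_Icc le_rfl hs₁.2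
  have hScl : IsClosed S := by
    have hcont : ContinuousOn (fun s => φ s - ψ s) (Set.Icc 0 s₁) := fun s hs =>
      (((hφ' s (hsub1 hs)).continuousAt).sub ((hψ' s (hsub1 hs)).continuousAt)).continuousWithinAt
    have : S = Set.Icc 0 s₁ ∩ (fun s => φ s - ψ s) ⁻¹' {0} := by
      ext s
      simp [hSdef, sub_eq_zero]
    rw [this]
    exact hcont.preimage_isClosed_of_isClosed isClosed_Icc isClosed_singleton
  have h0S : (0:ℝ) ∈ S := ⟨⟨le_refl _, hs₁.1⟩, by rw [hφ0, hψ0]⟩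
  have hSbdd : BddAbove S := ⟨s₁, fun x hx => hx.1.2⟩
  set σ := sSup S with hσdef
  have hσS : σ ∈ S := hScl.csSup_mem ⟨0, h0S⟩ hSbdd
  have hσlt : σ < s₁ := by
    rcases lt_or_eq_of_le hσS.1.2 with h | h
    · exact h
    · exact absurd (h ▸ hσS.2) hness
  have hσT : σ ∈ Set.Icc (0:ℝ) T := ⟨hσS.1.1, le_trans hσS.1.2 hs₁.2⟩
  -- the set of potentially singular points
  set D : Set (EuclideanSpace ℝ (Fin n)) :=
    {x | ∃ v : EuclideanSpace ℝ (Fin n), ‖v‖ = 1 ∧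
      ∃ᶠ τ in 𝓝[>] (0:ℝ), 0 < (inner ℝ (f (x + τ • v) - f x) v : ℝ)} with hDdef
  -- the branching point is in the closure of D
  have hclos : φ σ ∈ closure D := by
    by_contra hcl
    obtain ⟨r, hr, hball⟩ : ∃ r > 0, Metric.ball (φ σ) r ⊆ Dᶜ := by
      have hop : (closure D)ᶜ ∈ 𝓝 (φ σ) := isClosed_closure.isOpen_compl.mem_nhds hcl
      obtain ⟨r, hr, h⟩ := Metric.mem_nhds_iff.1 hop
      exact ⟨r, hr, h.trans (Set.compl_subset_compl.2 subset_closure)⟩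
    have hdis : ∀ a ∈ Metric.ball (φ σ) r, ∀ b ∈ Metric.ball (φ σ) r,
        (inner ℝ (f a - f b) (a - b) : ℝ) ≤ 0 := by
      intro a ha b hb
      refine dissip' hf (convex_ball _ _) ?_ ha hb
      intro x hx v hv
      have hxD : x ∉ D := hball hx
      rw [hDdef, Set.mem_setOf_eq] at hxD
      push_neg at hxD
      have := hxD v hv
      filter_upwards [this] with τ hτ
      exact hτ
    -- both solutions stay in the ball for a short time after σ
    have hev : ∀ᶠ s in 𝓝 σ, φ s ∈ Metric.ball (φ σ) r ∧ ψ s ∈ Metric.ball (φ σ) r := by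
      have h1 : ∀ᶠ s in 𝓝 σ, φ s ∈ Metric.ball (φ σ) r :=
        (hφ' σ hσT).continuousAt.preimage_mem_nhds (Metric.ball_mem_nhds _ hr)
      have h2 : ∀ᶠ s in 𝓝 σ, ψ s ∈ Metric.ball (φ σ) r := by
        have : Metric.ball (φ σ) r ∈ 𝓝 (ψ σ) := by
          rw [hσS.2]; exact Metric.ball_mem_nhds _ hr
        exact (hψ' σ hσT).continuousAt.preimage_mem_nhds this
      exact h1.and h2
    obtain ⟨δ, hδ, hδball⟩ := Metric.eventually_nhds_iff.1 hev
    set η := min (δ / 2) (s₁ - σ) with hηdef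
    have hηpos : 0 < η := lt_min (by linarith) (by linarith)
    have hηδ : η < δ := lt_of_le_of_lt (min_le_left _ _) (by linarith)
    have hηs₁ : σ + η ≤ s₁ := by
      have := min_le_right (δ / 2) (s₁ - σ)
      simp only [hηdef] at *
      linarith
    have hIsub : Set.Icc σ (σ + η) ⊆ Set.Icc 0 T :=
      Set.Icc_subset_Icc hσS.1.1 (le_trans hηs₁ hs₁.2)
    have hballmem : ∀ s ∈ Set.Icc σ (σ + η),
        φ s ∈ Metric.ball (φ σ) r ∧ ψ s ∈ Metric.ball (φ σ) r := by
      intro s hs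
      apply hδball
      rw [Real.dist_eq, abs_of_nonneg (by linarith [hs.1])]
      linarith [hs.2]
    set u : ℝ → ℝ := fun s => (inner ℝ (φ s - ψ s) (φ s - ψ s) : ℝ) with hudef
    have hu : ∀ s ∈ Set.Icc σ (σ + η), HasDerivAt u
        ((inner ℝ (φ s - ψ s) (f (φ s) - f (ψ s)) : ℝ)
          + (inner ℝ (f (φ s) - f (ψ s)) (φ s - ψ s) : ℝ)) s := by
      intro s hs
      exact HasDerivAt.inner ℝ
        ((hφ' s (hIsub hs)).sub (hψ' s (hIsub hs)))
        ((hφ' s (hIsub hs)).sub (hψ' s (hIsub hs)))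
    have hanti : AntitoneOn u (Set.Icc σ (σ + η)) := by
      apply antitoneOn_of_deriv_nonpos (convex_Icc _ _)
      · exact fun s hs => ((hu s hs).continuousAt).continuousWithinAt
      · intro s hs
        rw [interior_Icc] at hs
        exact ((hu s (Set.Ioo_subset_Icc_self hs)).differentiableAt).differentiableWithinAt
      · intro s hs
        rw [interior_Icc] at hs
        have hs' := Set.Ioo_subset_Icc_self hs
        rw [(hu s hs').deriv]
        obtain ⟨hφb, hψb⟩ := hballmem s hs'
        have hd := hdis (φ s) hφb (ψ s) hψb
        have hcomm : (inner ℝ (φ s - ψ s) (f (φ s) - f (ψ s)) : ℝ)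
            = (inner ℝ (f (φ s) - f (ψ s)) (φ s - ψ s) : ℝ) := real_inner_comm _ _
        linarith
    have hu0 : u σ = 0 := by
      rw [hudef]
      simp [hσS.2]
    have hle : u (σ + η) ≤ 0 := by
      have := hanti (Set.left_mem_Icc.2 (by linarith)) (Set.right_mem_Icc.2 (by linarith))
        (by linarith)
      rw [hu0] at this
      exact this
    have hge : (0:ℝ) ≤ u (σ + η) := real_inner_self_nonneg
    have heq : φ (σ + η) = ψ (σ + η) := by
      have h0 : u (σ + η) = 0 := le_antisymm hle hge
      rw [hudef] at h0
      have := inner_self_eq_zero.1 h0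
      exact sub_eq_zero.1 this
    have hmem : σ + η ∈ S := ⟨⟨by linarith [hσS.1.1], hηs₁⟩, heq⟩
    have := le_csSup hSbdd hmem
    linarith
  -- pick approximating singular points
  have hseq : ∀ j : ℕ, ∃ y ∈ D, dist (φ σ) y < 1 / ((j:ℝ) + 1) := by
    intro j
    exact Metric.mem_closure_iff.1 hclos _ (by positivity)
  choose y hyD hydist using hseq
  choose v hvnorm hvfreq using hyD
  -- pick small scales
  have hτex : ∀ j k : ℕ, ∃ τ : ℝ,
      0 < (inner ℝ (f (y j + τ • v j) - f (y j)) (v j) : ℝ) ∧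
      τ ∈ Set.Ioo 0 (min (1 / ((j:ℝ) + 1)) (1 / ((k:ℝ) + 1))) := by
    intro j k
    have hset : Set.Ioo (0:ℝ) (min (1 / ((j:ℝ) + 1)) (1 / ((k:ℝ) + 1))) ∈ 𝓝[>] (0:ℝ) :=
      Ioo_mem_nhdsGT_of_mem ⟨le_refl _, lt_min (by positivity) (by positivity)⟩
    exact ((hvfreq j).and_eventually (eventually_of_mem hset fun τ hτ => hτ)).exists
  choose t htpos htIoo using hτex
  set tm : ℕ × ℕ → ℝ := fun m => t m.1 m.2 with htmdef
  set εm : ℕ × ℕ → ℝ := fun m =>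
    (inner ℝ (f (y m.1 + tm m • v m.1) - f (y m.1)) (v m.1) : ℝ) / ((m.2 : ℝ) + 1) with hεmdef
  obtain ⟨Ω, hΩcont, hΩ0, hΩpos, hΩle, hΩsmall⟩ :=
    modulus_exists tm εm (fun m => (htIoo m.1 m.2).1) (fun m => div_pos (htpos m.1 m.2) (by positivity))
      (fun m => (htIoo m.1 m.2).2.le)
  -- each y j is singular
  have memSing : ∀ j : ℕ, y j ∈ singSet f Ω := by
    intro j
    refine ⟨v j, hvnorm j, ?_⟩
    rw [EReal.eq_top_iff_forall_lt]
    intro rr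
    obtain ⟨k₀, hk₀⟩ := exists_nat_gt rr
    have hle : ((k₀:ℝ) : EReal) ≤ Filter.limsup
        (fun τ : ℝ => (((inner ℝ (f (y j + τ • v j) - f (y j)) (v j) : ℝ) / Ω τ : ℝ) : EReal))
        (𝓝[>] (0:ℝ)) := by
      apply le_limsup_of_frequently_le'
      rw [Filter.frequently_iff]
      intro U hU
      obtain ⟨w, hw, hsubU⟩ := mem_nhdsGT_iff_exists_Ioo_subset.1 hU
      have hwpos : (0:ℝ) < w := hw
      obtain ⟨k, hk⟩ := exists_nat_gt (max (k₀ : ℝ) (1 / w))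
      have hkk₀ : (k₀ : ℝ) ≤ (k : ℝ) := le_of_lt (lt_of_le_of_lt (le_max_left _ _) hk)
      have hkw : 1 / w < (k : ℝ) := lt_of_le_of_lt (le_max_right _ _) hk
      have hkpos : (0:ℝ) < (k:ℝ) := lt_of_le_of_lt (by positivity) hkw
      set τ := t j k with hτdef
      have hτIoo := htIoo j k
      have hτsmall : τ < w := by
        have h1 : τ < 1 / ((k:ℝ) + 1) := lt_of_lt_of_le hτIoo.2 (min_le_right _ _)
        have h2 : 1 / ((k:ℝ) + 1) < w := by
          rw [div_lt_iff₀ (by positivity)]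
          have := (div_lt_iff₀ hwpos).1 hkw
          nlinarith
        linarith
      refine ⟨τ, hsubU ⟨hτIoo.1, hτsmall⟩, ?_⟩
      have hg := htpos j k
      have hΩτpos : 0 < Ω τ := hΩpos τ hτIoo.1
      have hΩτ : Ω τ ≤ (inner ℝ (f (y j + τ • v j) - f (y j)) (v j) : ℝ) / ((k:ℝ) + 1) :=
        hΩsmall (j, k)
      have hrat : (k₀ : ℝ) ≤ (inner ℝ (f (y j + τ • v j) - f (y j)) (v j) : ℝ) / Ω τ := by
        have h1 : ((k:ℝ) + 1) ≤ (inner ℝ (f (y j + τ • v j) - f (y j)) (v j) : ℝ) / Ω τ := by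
          rw [le_div_iff₀ hΩτpos]
          have := mul_le_mul_of_nonneg_left hΩτ (by positivity : (0:ℝ) ≤ (k:ℝ) + 1)
          rw [mul_div_cancel₀ _ (by positivity : ((k:ℝ) + 1) ≠ 0)] at this
          linarith
        linarith
      exact_mod_cast EReal.coe_le_coe_iff.2 hrat
    exact lt_of_lt_of_le (EReal.coe_lt_coe_iff.2 hk₀) hle
  refine ⟨Ω, hΩcont.continuousOn, hΩ0, hΩpos, ?_, ⟨y 0, memSing 0⟩, φ, hφ0, hφ', σ, hσT, ?_⟩
  · -- integral is infinite
    have hmono : (∫⁻ z in Set.Ioc (0:ℝ) 1, ENNReal.ofReal (1 / z))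
        ≤ ∫⁻ z in Set.Ioc (0:ℝ) 1, ENNReal.ofReal (1 / Ω z) := by
      apply setLIntegral_mono
      · exact (measurable_const.div hΩcont.measurable).ennreal_ofReal
      · intro z hz
        exact ENNReal.ofReal_le_ofReal
          (one_div_le_one_div_of_le (hΩpos z hz.1) (hΩle z hz.1.le))
    exact top_le_iff.1 (lint_one_div_top ▸ hmono)
  · -- tendsto
    have hiD : Metric.infDist (φ σ) (singSet f Ω) = 0 := by
      refine le_antisymm ?_ Metric.infDist_nonneg
      by_contra hpos
      push_neg at hpos
      obtain ⟨j, hj⟩ := exists_nat_gt (1 / Metric.infDist (φ σ) (singSet f Ω))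
      have h1 : Metric.infDist (φ σ) (singSet f Ω) ≤ dist (φ σ) (y j) :=
        Metric.infDist_le_dist_of_mem (memSing j)
      have h2 := hydist j
      have hdpos : 0 < Metric.infDist (φ σ) (singSet f Ω) := hpos
      have h3 : 1 / ((j:ℝ) + 1) < Metric.infDist (φ σ) (singSet f Ω) := by
        rw [div_lt_iff₀ (by positivity)]
        have := (div_lt_iff₀ hdpos).1 hj
        nlinarith [Metric.infDist_nonneg (x := φ σ) (s := singSet f Ω)]
      linarith
    have hφten : Tendsto φ (𝓝[Set.Icc 0 T] σ) (𝓝 (φ σ)) :=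
      ((hφ' σ hσT).continuousAt.continuousWithinAt)
    have hcomp := ((Metric.continuous_infDist_pt (singSet f Ω)).continuousAt
      (x := φ σ)).tendsto.comp hφten
    rw [hiD] at hcomp
    exact hcomp
end

section
/- Let n ≥ 1, let f : ℝ^n → ℝ^n be continuous, let Ω : [0,∞) → [0,∞) be continuous with Ω(0) = 0, Ω(z) > 0 for z > 0 and ∫₀^1 dz/Ω(z) = +∞, and suppose there is a constant C > 0 such that ⟨f(y) − f(x), y − x⟩ ≤ C·‖y−x‖·Ω(‖y−x‖) for all x, y ∈ ℝ^n. Then solutions of ẋ = f(x) are forward-unique: if φ, ψ : [0,T] → ℝ^n are differentiable with φ(0) = ψ(0), φ′(s) = f(φ(s)) and ψ′(s) = f(ψ(s)) for all s ∈ [0,T], then φ = ψ on [0,T]. -/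
open Filter Topology MeasureTheory


lemma osgood_div (g : ℝ → ℝ) (hmeas : Measurable g)
    (hcont : ∀ x : ℝ, 0 < x → ContinuousAt g x) (hnn : ∀ z, 0 ≤ g z)
    (htop : (∫⁻ z in Set.Ioc (0:ℝ) 1, ENNReal.ofReal (g z)) = ⊤)
    (M b : ℝ) (hM : 0 ≤ M) (hb : 0 < b) :
    ∃ x ∈ Set.Ioo (0:ℝ) b, M < ∫ z in x..b, g z := by
  -- continuity on subsets of Ioi 0
  have hcontOn : ∀ s : Set ℝ, s ⊆ Set.Ioi 0 → ContinuousOn g s := fun s hs z hz =>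
    (hcont z (hs hz)).continuousWithinAt
  have hIntOn : ∀ a c : ℝ, 0 < a → IntegrableOn g (Set.Ioc a c) := by
    intro a c ha
    rcases le_or_gt a c with h | h
    · have : IntegrableOn g (Set.Icc a c) := by
        apply (hcontOn _ ?_).integrableOn_Icc
        intro z hz; exact lt_of_lt_of_le ha hz.1
      exact this.mono_set Set.Ioc_subset_Icc_self
    · simp [Set.Ioc_eq_empty (not_lt.mpr h.le)]
  set ε := min b 1 with hε
  have hε0 : 0 < ε := lt_min hb one_pos
  have hεb : ε ≤ b := min_le_left _ _
  have hε1 : ε ≤ 1 := min_le_right _ _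
  -- the lintegral over Ioc 0 ε is infinite
  have htopε : (∫⁻ z in Set.Ioc (0:ℝ) ε, ENNReal.ofReal (g z)) = ⊤ := by
    by_contra hne
    have hfin2 : (∫⁻ z in Set.Ioc ε 1, ENNReal.ofReal (g z)) < ⊤ :=
      (hIntOn ε 1 hε0).setLIntegral_lt_top
    have hunion : Set.Ioc (0:ℝ) ε ∪ Set.Ioc ε 1 = Set.Ioc 0 1 :=
      Set.Ioc_union_Ioc_eq_Ioc hε0.le hε1
    have := lintegral_union_le (μ := volume) (fun z => ENNReal.ofReal (g z)) (Set.Ioc (0:ℝ) ε) (Set.Ioc ε 1)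
    rw [hunion, htop] at this
    exact (ne_of_lt (lt_of_le_of_lt this
      (ENNReal.add_lt_top.mpr ⟨lt_top_iff_ne_top.mpr hne, hfin2⟩))) rfl
  -- monotone family of sets
  set x : ℕ → ℝ := fun k => ε / (k + 2) with hx
  have hx0 : ∀ k, 0 < x k := fun k => div_pos hε0 (by positivity)
  have hxε : ∀ k, x k < ε := by
    intro k
    rw [hx]
    apply div_lt_self hε0
    have : (0:ℝ) ≤ (k:ℝ) := Nat.cast_nonneg k
    linarith
  set F : ℕ → ℝ → ENNReal := fun k => (Set.Ioc (x k) ε).indicator fun z => ENNReal.ofReal (g z)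
    with hF
  have hFmeas : ∀ k, Measurable (F k) := by
    intro k
    exact (Measurable.ennreal_ofReal hmeas).indicator measurableSet_Ioc
  have hFmono : Monotone F := by
    intro j k hjk
    apply Set.indicator_le_indicator_of_subset
    · apply Set.Ioc_subset_Ioc_left
      have hjk' : (j:ℝ) ≤ (k:ℝ) := Nat.cast_le.mpr hjk
      apply div_le_div_of_nonneg_left hε0.le (by positivity)
      linarith
    · intro z; exact zero_le
  have hFsup : ∀ z, (⨆ k, F k z) = (Set.Ioc (0:ℝ) ε).indicator (fun z => ENNReal.ofReal (g z)) z := by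
    intro z
    by_cases hz : z ∈ Set.Ioc (0:ℝ) ε
    · rw [Set.indicator_of_mem hz]
      apply le_antisymm
      · exact iSup_le fun k => Set.indicator_le_self _ _ _
      · obtain ⟨k, hk⟩ := exists_nat_gt (ε / z)
        have hzpos : (0:ℝ) < z := hz.1
        have h1 : ε < (k:ℝ) * z := by rwa [div_lt_iff₀ hzpos] at hk
        have hxk : x k < z := by
          rw [hx]
          rw [div_lt_iff₀ (by positivity : (0:ℝ) < (k:ℝ) + 2)]
          nlinarith
        have hFkz : F k z = ENNReal.ofReal (g z) :=
          Set.indicator_of_mem (show z ∈ Set.Ioc (x k) ε from ⟨hxk, hz.2⟩) _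
        rw [← hFkz]
        exact le_iSup (fun j => F j z) k
    · rw [Set.indicator_of_notMem hz]
      apply le_antisymm _ zero_le
      apply iSup_le
      intro k
      rw [hF]
      have : z ∉ Set.Ioc (x k) ε := fun hmem => hz ⟨lt_trans (hx0 k) hmem.1, hmem.2⟩
      simp [Set.indicator_of_notMem this]
  -- sup of lintegrals is ⊤
  have hsup : (⨆ k, ∫⁻ z, F k z) = ⊤ := by
    rw [← lintegral_iSup hFmeas hFmono]
    have : ∀ᵐ z, (⨆ k, F k z) = (Set.Ioc (0:ℝ) ε).indicator (fun z => ENNReal.ofReal (g z)) z :=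
      Eventually.of_forall hFsup
    rw [lintegral_congr hFsup, lintegral_indicator measurableSet_Ioc, htopε]
  have hlt : ENNReal.ofReal M < ⨆ k, ∫⁻ z, F k z := by rw [hsup]; exact ENNReal.ofReal_lt_top
  obtain ⟨k, hk⟩ := lt_iSup_iff.mp hlt
  rw [hF] at hk
  simp only [lintegral_indicator measurableSet_Ioc] at hk
  -- convert to a real integral
  have hint : IntegrableOn g (Set.Ioc (x k) ε) := hIntOn _ _ (hx0 k)
  have hreal : ENNReal.ofReal (∫ z in Set.Ioc (x k) ε, g z) = ∫⁻ z in Set.Ioc (x k) ε, ENNReal.ofReal (g z) :=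
    MeasureTheory.ofReal_integral_eq_lintegral_ofReal hint (Eventually.of_forall hnn)
  rw [← hreal] at hk
  have hMlt : M < ∫ z in Set.Ioc (x k) ε, g z := by
    by_contra hle
    push_neg at hle
    exact absurd (ENNReal.ofReal_le_ofReal hle) (not_le.mpr hk)
  refine ⟨x k, ⟨hx0 k, lt_of_lt_of_le (hxε k) hεb⟩, ?_⟩
  have hii1 : IntervalIntegrable g volume (x k) ε := by
    rw [intervalIntegrable_iff_integrableOn_Ioc_of_le (hxε k).le]
    exact hint
  have hii2 : IntervalIntegrable g volume ε b := by
    rw [intervalIntegrable_iff_integrableOn_Ioc_of_le hεb]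
    exact hIntOn _ _ hε0
  have hsplit : ∫ z in (x k)..b, g z = (∫ z in (x k)..ε, g z) + ∫ z in ε..b, g z :=
    (intervalIntegral.integral_add_adjacent_intervals hii1 hii2).symm
  have h1 : ∫ z in (x k)..ε, g z = ∫ z in Set.Ioc (x k) ε, g z :=
    intervalIntegral.integral_of_le (hxε k).le
  have h2 : 0 ≤ ∫ z in ε..b, g z :=
    intervalIntegral.integral_nonneg hεb (fun z _ => hnn z)
  rw [hsplit, h1]
  linarith


/-- One-sided Osgood uniqueness: if `Ω` is an Osgood modulus (continuous, `Ω(0)=0`,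
`Ω > 0` on `(0,∞)`, `∫₀¹ dz/Ω(z) = +∞`) and
`⟨f(y) − f(x), y − x⟩ ≤ C‖y−x‖·Ω(‖y−x‖)` for all `x, y`, then solutions of
`ẋ = f(x)` are forward-unique on `[0,T]`. -/
theorem stmt_14 (n : ℕ) (hn : 1 ≤ n)
    (f : EuclideanSpace ℝ (Fin n) → EuclideanSpace ℝ (Fin n)) (hf : Continuous f)
    (Ω : ℝ → ℝ) (hΩc : ContinuousOn Ω (Set.Ici 0)) (hΩ0 : Ω 0 = 0)
    (hΩpos : ∀ z > (0:ℝ), 0 < Ω z)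
    (hΩint : (∫⁻ z in Set.Ioc (0:ℝ) 1, ENNReal.ofReal (1 / Ω z)) = ⊤)
    (C : ℝ) (hC : 0 < C)
    (hone : ∀ x y : EuclideanSpace ℝ (Fin n),
      (inner ℝ (f y - f x) (y - x) : ℝ) ≤ C * ‖y - x‖ * Ω ‖y - x‖)
    (T : ℝ) (φ ψ : ℝ → EuclideanSpace ℝ (Fin n))
    (h0 : φ 0 = ψ 0)
    (hφ' : ∀ s ∈ Set.Icc 0 T, HasDerivAt φ (f (φ s)) s)
    (hψ' : ∀ s ∈ Set.Icc 0 T, HasDerivAt ψ (f (ψ s)) s) :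
    ∀ s ∈ Set.Icc 0 T, φ s = ψ s := by
  -- A measurable modification of `1/Ω` agreeing with it on `[0,∞)`.
  have hΩtc : Continuous (fun z : ℝ => Ω (max z 0)) :=
    hΩc.comp_continuous (continuous_id.max continuous_const) (fun z => Set.mem_Ici.mpr (le_max_right z 0))
  set g : ℝ → ℝ := fun z => (Ω (max z 0))⁻¹ with hgdef
  have hgmeas : Measurable g := hΩtc.measurable.inv
  have hΩnn : ∀ z : ℝ, 0 ≤ Ω (max z 0) := by
    intro z
    rcases lt_or_eq_of_le (le_max_right z 0) with h | h
    · exact (hΩpos _ h).le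
    · rw [← h, hΩ0]
  have hgnn : ∀ z, 0 ≤ g z := fun z => inv_nonneg.mpr (hΩnn z)
  have hgcont : ∀ x : ℝ, 0 < x → ContinuousAt g x := by
    intro x hx
    have hmax : max x 0 = x := max_eq_left hx.le
    have hne : Ω (max x 0) ≠ 0 := by rw [hmax]; exact (hΩpos x hx).ne'
    exact hΩtc.continuousAt.inv₀ hne
  have htop : (∫⁻ z in Set.Ioc (0:ℝ) 1, ENNReal.ofReal (g z)) = ⊤ := by
    rw [← hΩint]
    apply setLIntegral_congr_fun measurableSet_Ioc
    intro z hz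
    rw [hgdef]
    simp only [one_div, max_eq_left hz.1.le]
  have hgval : ∀ x : ℝ, 0 ≤ x → g x = (Ω x)⁻¹ := by
    intro x hx; rw [hgdef]; simp only [max_eq_left hx]
  -- main argument
  intro s hsmem
  by_contra hne
  set u : ℝ → EuclideanSpace ℝ (Fin n) := fun t => φ t - ψ t with hu
  set r : ℝ → ℝ := fun t => ‖u t‖ with hrdef
  have hrcont : ∀ t ∈ Set.Icc 0 T, ContinuousAt r t := by
    intro t ht
    exact (((hφ' t ht).continuousAt.sub (hψ' t ht).continuousAt)).norm
  have hrt₀ : 0 < r s := by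
    rw [hrdef]
    simp only [norm_pos_iff]
    rw [hu]
    exact sub_ne_zero.mpr hne
  have hr0 : r 0 = 0 := by rw [hrdef, hu]; simp [h0]
  -- the last zero of r before s
  set A : Set ℝ := Set.Icc 0 s ∩ r ⁻¹' {0} with hA
  have hAsub : A ⊆ Set.Icc 0 s := Set.inter_subset_left
  have hAne : A.Nonempty := ⟨0, ⟨le_refl 0, hsmem.1⟩, hr0⟩
  have hAbdd : BddAbove A := bddAbove_Icc.mono hAsub
  have hAclosed : IsClosed A := by
    have hcont : ContinuousOn r (Set.Icc 0 s) := fun t ht =>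
      (hrcont t ⟨ht.1, le_trans ht.2 hsmem.2⟩).continuousWithinAt
    exact hcont.preimage_isClosed_of_isClosed isClosed_Icc isClosed_singleton
  set t₁ : ℝ := sSup A with ht₁def
  have ht₁A : t₁ ∈ A := hAclosed.csSup_mem hAne hAbdd
  have ht₁0 : 0 ≤ t₁ := ht₁A.1.1
  have ht₁s : t₁ ≤ s := ht₁A.1.2
  have hrt₁ : r t₁ = 0 := ht₁A.2
  have ht₁lt : t₁ < s := lt_of_le_of_ne ht₁s (fun h => hrt₀.ne' (h ▸ hrt₁))
  have hrpos : ∀ t, t₁ < t → t ≤ s → 0 < r t := by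
    intro t h1 h2
    rcases lt_or_eq_of_le (norm_nonneg (u t)) with h | h
    · exact h
    · exfalso
      have : t ∈ A := ⟨⟨le_trans ht₁0 h1.le, h2⟩, h.symm⟩
      exact absurd (le_csSup hAbdd this) (not_le.mpr h1)
  -- G and H
  set G : ℝ → ℝ := fun x => ∫ z in (r s)..x, g z with hG
  have hGder : ∀ x : ℝ, 0 < x → HasDerivAt G (g x) x := by
    intro x hx
    refine intervalIntegral.integral_hasDerivAt_right ?_
      hgmeas.stronglyMeasurable.stronglyMeasurableAtFilter (hgcont x hx)
    apply ContinuousOn.intervalIntegrable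
    intro z hz
    have hz0 : 0 < z := lt_of_lt_of_le (lt_min hrt₀ hx) hz.1
    exact (hgcont z hz0).continuousWithinAt
  set H : ℝ → ℝ := fun t => C * t - G (r t) with hH
  have hkey : ∀ t, t₁ < t → t ≤ s → ∃ d, HasDerivAt H d t ∧ 0 ≤ d := by
    intro t h1 h2
    have htIcc : t ∈ Set.Icc 0 T := ⟨le_trans ht₁0 h1.le, le_trans h2 hsmem.2⟩
    have hrt : 0 < r t := hrpos t h1 h2
    have hrtne : r t ≠ 0 := hrt.ne'
    have hu' : HasDerivAt u (f (φ t) - f (ψ t)) t := (hφ' t htIcc).sub (hψ' t htIcc)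
    have hq : HasDerivAt (fun w => (inner ℝ (u w) (u w) : ℝ))
        ((inner ℝ (u t) (f (φ t) - f (ψ t)) : ℝ) + (inner ℝ (f (φ t) - f (ψ t)) (u t) : ℝ)) t :=
      hu'.inner (𝕜 := ℝ) hu'
    have hqt : (inner ℝ (u t) (u t) : ℝ) ≠ 0 := by
      rw [real_inner_self_eq_norm_mul_norm]
      positivity
    have hsqrt := (Real.hasDerivAt_sqrt hqt).comp t hq
    have hfun : (fun w => Real.sqrt ((inner ℝ (u w) (u w) : ℝ))) = r := by
      funext w
      rw [real_inner_self_eq_norm_mul_norm, Real.sqrt_mul_self (norm_nonneg _), hrdef]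
    rw [Function.comp_def, hfun] at hsqrt
    have hsqrtval : Real.sqrt ((inner ℝ (u t) (u t) : ℝ)) = r t := by
      rw [real_inner_self_eq_norm_mul_norm, Real.sqrt_mul_self (norm_nonneg _), hrdef]
    have hrder : HasDerivAt r ((inner ℝ (f (φ t) - f (ψ t)) (u t) : ℝ) / r t) t := by
      refine hsqrt.congr_deriv ?_
      rw [hsqrtval, real_inner_comm (u t) (f (φ t) - f (ψ t))]
      field_simp
      ring
    -- the one-sided bound
    have hb1 : (inner ℝ (f (φ t) - f (ψ t)) (u t) : ℝ) ≤ C * r t * Ω (r t) := by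
      have := hone (ψ t) (φ t)
      rw [hrdef, hu]
      exact this
    have hrd_le : (inner ℝ (f (φ t) - f (ψ t)) (u t) : ℝ) / r t ≤ C * Ω (r t) := by
      rw [div_le_iff₀ hrt]
      calc (inner ℝ (f (φ t) - f (ψ t)) (u t) : ℝ) ≤ C * r t * Ω (r t) := hb1
      _ = C * Ω (r t) * r t := by ring
    -- composed derivatives
    have hGr : HasDerivAt (fun w => G (r w))
        (g (r t) * ((inner ℝ (f (φ t) - f (ψ t)) (u t) : ℝ) / r t)) t :=
      (hGder (r t) hrt).comp t hrder
    have hCt : HasDerivAt (fun w : ℝ => C * w) C t := by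
      simpa using (hasDerivAt_id t).const_mul C
    refine ⟨C - g (r t) * ((inner ℝ (f (φ t) - f (ψ t)) (u t) : ℝ) / r t), hCt.sub hGr, ?_⟩
    have hΩrt : 0 < Ω (r t) := hΩpos _ hrt
    have hgrt : g (r t) = (Ω (r t))⁻¹ := hgval _ hrt.le
    have : g (r t) * ((inner ℝ (f (φ t) - f (ψ t)) (u t) : ℝ) / r t) ≤ C := by
      rw [hgrt]
      calc (Ω (r t))⁻¹ * ((inner ℝ (f (φ t) - f (ψ t)) (u t) : ℝ) / r t)
          ≤ (Ω (r t))⁻¹ * (C * Ω (r t)) :=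
            mul_le_mul_of_nonneg_left hrd_le (inv_nonneg.mpr hΩrt.le)
        _ = C := by field_simp
    linarith
  -- monotonicity of H on (t₁, s]
  have hmono : ∀ t', t₁ < t' → t' ≤ s → H t' ≤ H s := by
    intro t' h1 h2
    have hmOn : MonotoneOn H (Set.Icc t' s) := by
      apply monotoneOn_of_deriv_nonneg (convex_Icc t' s)
      · intro t ht
        obtain ⟨d, hd, _⟩ := hkey t (lt_of_lt_of_le h1 ht.1) ht.2
        exact hd.continuousAt.continuousWithinAt
      · intro t ht
        rw [interior_Icc] at ht
        obtain ⟨d, hd, _⟩ := hkey t (lt_trans h1 ht.1) ht.2.le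
        exact hd.differentiableAt.differentiableWithinAt
      · intro t ht
        rw [interior_Icc] at ht
        obtain ⟨d, hd, hd0⟩ := hkey t (lt_trans h1 ht.1) ht.2.le
        rw [hd.deriv]; exact hd0
    exact hmOn ⟨le_refl t', h2⟩ ⟨h2, le_refl s⟩ h2
  have hGs : G (r s) = 0 := intervalIntegral.integral_same
  have hGlow : ∀ t', t₁ < t' → t' ≤ s → -(C * s) ≤ G (r t') := by
    intro t' h1 h2
    have := hmono t' h1 h2
    rw [hH] at this
    simp only [hGs] at this
    have ht'0 : 0 ≤ t' := le_trans ht₁0 h1.le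
    nlinarith
  -- divergence of the integral gives a contradiction
  obtain ⟨x, hxmem, hxint⟩ := osgood_div g hgmeas hgcont hgnn htop (C * s)
    (r s) (by have := hsmem.1; positivity) hrt₀
  -- find t' with r t' = x by IVT
  have hrcontOn : ContinuousOn r (Set.Icc t₁ s) := fun t ht =>
    (hrcont t ⟨le_trans ht₁0 ht.1, le_trans ht.2 hsmem.2⟩).continuousWithinAt
  have hsub := intermediate_value_Icc ht₁s hrcontOn
  have hxIcc : x ∈ Set.Icc (r t₁) (r s) := by
    rw [hrt₁]; exact ⟨hxmem.1.le, hxmem.2.le⟩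
  obtain ⟨t', ht'mem, ht'x⟩ := hsub hxIcc
  have ht'gt : t₁ < t' := by
    rcases lt_or_eq_of_le ht'mem.1 with h | h
    · exact h
    · exfalso; rw [← h, hrt₁] at ht'x; exact hxmem.1.ne ht'x
  have hlow := hGlow t' ht'gt ht'mem.2
  rw [ht'x] at hlow
  have hGx : G x = -(∫ z in x..(r s), g z) := by
    rw [hG]
    exact intervalIntegral.integral_symm x (r s)
  rw [hGx] at hlow
  linarith
end
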